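/- arXiv:2201.01752 — 3 statements merged into one kernel-verified Lean document; each statement's English description precedes it below -/
import Mathlib

section
/- Assume the Setup (Section 2) with conditions (sing), (main0), (main1), (xxnxxn1): sup_{n≥0} ‖X_n‖‖X_n⁻¹‖ < ∞, (qqn): sup_{n≥0} ‖Q_n‖ < ∞, and (cap): ∩_{n≥0} ⋁_{k≥n} H_k = {0}. Set H'_n = H ⊖ ⋁_{k≠n} H_k. Then the adjoint T* satisfies (main0), (main1), (xxnxxn1), (qqn) with the families {H'_n}_{n≥0} and {U_{0n}⁻¹}_{n≥0}: each H'_n is a nonzero closed T*-invariant subspace, H'_n ∩ ⋁_{k≠n}H'_k = {0} and H'_n + ⋁_{k≠n}H'_k = H for every n, there are bounded invertible X'_n : H'_n → K_{0n} with X'_n(T*|_{H'_n}) = U_{0n}⁻¹ X'_n and sup_n ‖X'_n‖‖X'_n⁻¹‖ < ∞, and the skew projections Q'_n onto H'_n along ⋁_{k≠n}H'_k satisfy sup_n ‖Q'_n‖ < ∞. Moreover the following are equivalent: (i) there exists c' > 0 such that c'² Σ_n ‖x'_n‖² ≤ ‖Σ_n x'_n‖² for every finite family {x'_n}_n with x'_n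 ∈ H'_n; (ii) there exists C > 0 such that ‖Σ_n x_n‖² ≤ C² Σ_n ‖x_n‖² for every finite family {x_n}_n with x_n ∈ H_n. -/
/-!
Let `Q n` be the skew projection onto `H_n` along `V_n = ⋁_{k ≠ n} H_k`. Its adjoint is the
bounded projection onto `V_nᗮ = H'_n` along `H_nᗮ`, so (main0) and (qqn) pass to the dual family
as soon as `⋁_{k ≠ n} H'_k = H_nᗮ`. This is where (cap) enters: it says that no nonzero vector is
killed by every `Q n`, so a vector of `⋂_{k ≠ n} V_k` lies in `H_n`.

The orthogonal projection onto `H_n` maps `H'_n` isomorphically onto `H_n` (its inverse is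
`(Q n)*`) and turns `T*` into `(T|H_n)*`. Hence `X'_n = (X_n⁻¹)* P_{H_n}` intertwines `T*|H'_n`
with `U_{0n}* = U_{0n}⁻¹`, and `‖X'_n‖ ‖X'_n⁻¹‖ ≤ ‖Q n‖ ‖X_n‖ ‖X_n⁻¹‖`.

Since `H_n ⟂ H'_k` for `n ≠ k`, the two estimates are dual. A lower estimate for the `H'_k`
bounds `⟪∑ x_n, w⟫` by Cauchy–Schwarz for `w` in the dense span of the `H'_k`. Conversely
`(Q n)* (∑ x'_k) = x'_n`, so `∑ ‖x'_n‖² = re ⟪∑ Q n x'_n, ∑ x'_n⟫`, and the upper estimate for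
the `H_n` applies to `∑ Q n x'_n`.
-/

noncomputable section
set_option linter.unusedSectionVars false
open scoped ENNReal InnerProductSpace
open ContinuousLinearMap

def IsIsometryOp {K : Type} [NormedAddCommGroup K] [InnerProductSpace ℂ K]
    (V : K →L[ℂ] K) : Prop :=
  ∀ x, ‖V x‖ = ‖x‖

def IsUnitaryOp {K : Type} [NormedAddCommGroup K] [InnerProductSpace ℂ K]
    (V : K →L[ℂ] K) : Prop :=
  (∀ x, ‖V x‖ = ‖x‖) ∧ Function.Surjective V

open scoped InnerProduct
open LinearMap (IsProj)

section Closure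

variable {𝕜 E F ι : Type*} [NontriviallyNormedField 𝕜] [NormedAddCommGroup E] [NormedSpace 𝕜 E]
  [NormedAddCommGroup F] [NormedSpace 𝕜 F] {p : ι → Submodule 𝕜 E} {s : Set ι}

theorem Submodule.le_topologicalClosure_biSup {k : ι} (hk : k ∈ s) :
    p k ≤ (⨆ k ∈ s, p k).topologicalClosure :=
  (le_biSup p hk).trans (Submodule.le_topologicalClosure _)

theorem Submodule.apply_mem_of_mem_topologicalClosure_biSup {M : Submodule 𝕜 F}
    (hM : IsClosed (M : Set F)) (f : E →L[𝕜] F) (hf : ∀ k ∈ s, ∀ x ∈ p k, f x ∈ M) {x : E}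
    (hx : x ∈ (⨆ k ∈ s, p k).topologicalClosure) : f x ∈ M :=
  Submodule.topologicalClosure_minimal (t := M.comap (f : E →ₗ[𝕜] F)) _
    (iSup₂_le fun k hk y hy ↦ hf k hk y hy) (hM.preimage f.continuous) hx

theorem Submodule.topologicalClosure_iSup_eq_top {i : ι}
    (h : p i ⊔ (⨆ k ∈ s, p k).topologicalClosure = ⊤) : (⨆ k, p k).topologicalClosure = ⊤ :=
  eq_top_iff.mpr <| h.ge.trans <| sup_le ((le_iSup p i).trans (le_topologicalClosure _))
    (topologicalClosure_mono (iSup₂_le fun k _ ↦ le_iSup p k))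

end Closure

section Adjoint

variable {𝕜 E F : Type*} [RCLike 𝕜] [NormedAddCommGroup E] [InnerProductSpace 𝕜 E]
  [CompleteSpace E] [NormedAddCommGroup F] [InnerProductSpace 𝕜 F] [CompleteSpace F]

theorem ContinuousLinearMap.adjoint_mem_orthogonal {T : E →L[𝕜] E} {V : Submodule 𝕜 E}
    (hV : ∀ x ∈ V, T x ∈ V) {x : E} (hx : x ∈ Vᗮ) : (T†) x ∈ Vᗮ :=
  (Submodule.mem_orthogonal _ _).mpr fun v hv ↦ by
    rw [ContinuousLinearMap.adjoint_inner_right]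
    exact (Submodule.mem_orthogonal _ _).mp hx _ (hV v hv)

theorem ContinuousLinearMap.adjoint_eq_of_norm_map_of_comp_eq_id {U V : E →L[𝕜] E}
    (hU : ∀ x, ‖U x‖ = ‖x‖) (h : U ∘L V = .id 𝕜 E) : U† = V := by
  rw [← U†.comp_id, ← h, ← comp_assoc, (norm_map_iff_adjoint_comp_self U).mp hU, one_def, id_comp]

namespace ContinuousLinearEquiv

protected def adjoint (e : E ≃L[𝕜] F) : F ≃L[𝕜] E :=
  equivOfInverse' ((e : E →L[𝕜] F)†) ((e.symm : F →L[𝕜] E)†)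
    (by rw [← ContinuousLinearMap.adjoint_comp, coe_symm_comp_coe, ContinuousLinearMap.adjoint_id])
    (by rw [← ContinuousLinearMap.adjoint_comp, coe_comp_coe_symm, ContinuousLinearMap.adjoint_id])

theorem adjoint_symm_apply_adjoint_apply (e : E ≃L[𝕜] F) {S : E →L[𝕜] E} {U : F →L[𝕜] F}
    (h : ∀ x, e (S x) = U (e x)) (x : E) : e.adjoint.symm ((S†) x) = (U†) (e.adjoint.symm x) := by
  have hS : S ∘L (e.symm : F →L[𝕜] E) = (e.symm : F →L[𝕜] E) ∘L U := by
    ext y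
    simpa using congrArg e.symm (h (e.symm y))
  have h' := congr($(congrArg ContinuousLinearMap.adjoint hS) x)
  simp only [ContinuousLinearMap.adjoint_comp, ContinuousLinearMap.comp_apply] at h'
  exact h'

theorem norm_adjoint (e : E ≃L[𝕜] F) : ‖(e.adjoint : F →L[𝕜] E)‖ = ‖(e : E →L[𝕜] F)‖ :=
  LinearIsometryEquiv.norm_map ContinuousLinearMap.adjoint (e : E →L[𝕜] F)

theorem norm_adjoint_symm (e : E ≃L[𝕜] F) :
    ‖(e.adjoint.symm : E →L[𝕜] F)‖ = ‖(e.symm : F →L[𝕜] E)‖ :=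
  LinearIsometryEquiv.norm_map ContinuousLinearMap.adjoint (e.symm : F →L[𝕜] E)

end ContinuousLinearEquiv

end Adjoint

section Projection

variable {𝕜 E : Type*} [RCLike 𝕜] [NormedAddCommGroup E] [InnerProductSpace 𝕜 E]
  {A B : Submodule 𝕜 E} {P : E →L[𝕜] E}

namespace LinearMap.IsProj

theorem toLinearMap (hP : IsProj A P) : IsProj A (P : E →ₗ[𝕜] E) :=
  ⟨hP.map_mem, hP.map_id⟩

theorem ker_eq (hP : IsProj A P) (hB : ∀ x ∈ B, P x = 0) (hAB : A ⊔ B = ⊤) : P.ker = B := by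
  refine le_antisymm (fun x hx ↦ ?_) hB
  obtain ⟨a, ha, b, hb, rfl⟩ := Submodule.mem_sup.mp (hAB ▸ Submodule.mem_top : x ∈ A ⊔ B)
  have : a = 0 := by simpa [LinearMap.mem_ker, hP.map_id a ha, hB b hb] using hx
  simpa [this] using hb

theorem sub_apply_mem_ker (hP : IsProj A P) (x : E) : x - P x ∈ P.ker := by
  simp [LinearMap.mem_ker, hP.map_id _ (hP.map_mem x)]

variable [CompleteSpace E]

theorem adjoint (hP : IsProj A P) (hker : P.ker = B) : IsProj Bᗮ (P†) where
  map_mem x := (Submodule.mem_orthogonal _ _).mpr fun b hb ↦ by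
    have hPb : P b = 0 := LinearMap.mem_ker.mp (hker ▸ hb)
    rw [ContinuousLinearMap.adjoint_inner_right, hPb, inner_zero_left]
  map_id x hx := ext_inner_left 𝕜 fun y ↦ by
    have h := Submodule.inner_right_of_mem_orthogonal (hker ▸ hP.sub_apply_mem_ker y) hx
    rw [ContinuousLinearMap.adjoint_inner_right, eq_comm, ← sub_eq_zero, ← inner_sub_left]
    exact h

theorem isCompl_ker (hP : IsProj A P) : IsCompl A P.ker :=
  hP.toLinearMap.isCompl

theorem ker_adjoint (hP : IsProj A P) : (P†).ker = Aᗮ := by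
  rw [← ContinuousLinearMap.orthogonal_range, ← hP.toLinearMap.range]

theorem isCompl_orthogonal (hP : IsProj A P) : IsCompl P.kerᗮ Aᗮ := by
  simpa [hP.ker_adjoint] using (hP.adjoint rfl).isCompl_ker

theorem orthogonal_ker_ne_bot (hP : IsProj A P) (hA : A ≠ ⊥) : P.kerᗮ ≠ ⊥ := by
  have := P.isClosed_ker.completeSpace_coe
  rw [Ne, Submodule.orthogonal_eq_bot_iff]
  refine fun htop ↦ hA <| (Submodule.eq_bot_iff _).mpr fun a ha ↦ ?_
  rw [← hP.map_id a ha]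
  exact LinearMap.mem_ker.mp (htop ▸ Submodule.mem_top)

variable [CompleteSpace A]

def orthogonalEquiv (hP : IsProj A P) (hker : P.ker = B) : Bᗮ ≃L[𝕜] A :=
  ContinuousLinearEquiv.equivOfInverse (A.orthogonalProjectionOnto ∘L Bᗮ.subtypeL)
    ((P†).restrict fun x _ ↦ (hP.adjoint hker).map_mem x)
    (fun x ↦ Subtype.ext <| ext_inner_left 𝕜 fun y ↦
      calc ⟪y, (P†) (A.orthogonalProjectionOnto x)⟫_𝕜
          = ⟪(⟨P y, hP.map_mem y⟩ : A), A.orthogonalProjectionOnto x⟫_𝕜 :=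
            ContinuousLinearMap.adjoint_inner_right _ _ _
        _ = ⟪y, (P†) x⟫_𝕜 := by
            rw [Submodule.inner_orthogonalProjectionOnto_eq_of_mem_left,
              ContinuousLinearMap.adjoint_inner_right]
        _ = ⟪y, x⟫_𝕜 := by rw [(hP.adjoint hker).map_id x x.2])
    (fun a ↦ ext_inner_left 𝕜 fun a' ↦
      calc ⟪a', A.orthogonalProjectionOnto ((P†) a)⟫_𝕜 = ⟪P a', a⟫_𝕜 := by
            rw [Submodule.inner_orthogonalProjectionOnto_eq_of_mem_left,
              ContinuousLinearMap.adjoint_inner_right]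
        _ = ⟪a', a⟫_𝕜 := by rw [hP.map_id a' a'.2, Submodule.coe_inner])

theorem inner_orthogonalEquiv (hP : IsProj A P) (hker : P.ker = B) (a : A) (x : Bᗮ) :
    ⟪a, hP.orthogonalEquiv hker x⟫_𝕜 = ⟪(a : E), x⟫_𝕜 :=
  Submodule.inner_orthogonalProjectionOnto_eq_of_mem_left a x

theorem norm_orthogonalEquiv_apply_le (hP : IsProj A P) (hker : P.ker = B) (x : Bᗮ) :
    ‖hP.orthogonalEquiv hker x‖ ≤ ‖x‖ :=
  A.norm_orthogonalProjectionOnto_apply_le x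

theorem norm_orthogonalEquiv_symm_apply_le (hP : IsProj A P) (hker : P.ker = B) (a : A) :
    ‖(hP.orthogonalEquiv hker).symm a‖ ≤ ‖P‖ * ‖a‖ :=
  calc ‖(hP.orthogonalEquiv hker).symm a‖ = ‖(P†) a‖ := rfl
    _ ≤ ‖P†‖ * ‖a‖ := (P†).le_opNorm a
    _ = ‖P‖ * ‖a‖ := by rw [LinearIsometryEquiv.norm_map]

theorem orthogonalEquiv_adjoint_restrict_apply {T : E →L[𝕜] E} (hA : ∀ x ∈ A, T x ∈ A)
    (hB : ∀ x ∈ Bᗮ, (T†) x ∈ Bᗮ) (hP : IsProj A P) (hker : P.ker = B) (x : Bᗮ) :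
    hP.orthogonalEquiv hker ((T†).restrict hB x) =
      ((T.restrict hA)†) (hP.orthogonalEquiv hker x) :=
  ext_inner_left 𝕜 fun a ↦ by
    rw [ContinuousLinearMap.adjoint_inner_right, inner_orthogonalEquiv, inner_orthogonalEquiv,
      ContinuousLinearMap.coe_restrict_apply, ContinuousLinearMap.coe_restrict_apply,
      ContinuousLinearMap.adjoint_inner_right]

variable {K : Type*} [NormedAddCommGroup K] [InnerProductSpace 𝕜 K] [CompleteSpace K]

def dualEquiv (hP : IsProj A P) (hker : P.ker = B) (X : A ≃L[𝕜] K) : Bᗮ ≃L[𝕜] K :=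
  (hP.orthogonalEquiv hker).trans X.adjoint.symm

theorem dualEquiv_adjoint_restrict_apply {T : E →L[𝕜] E} {U : K →L[𝕜] K}
    (hA : ∀ x ∈ A, T x ∈ A) (hB : ∀ x ∈ Bᗮ, (T†) x ∈ Bᗮ) (hP : IsProj A P) (hker : P.ker = B)
    {X : A ≃L[𝕜] K} (hX : ∀ x, X (T.restrict hA x) = U (X x)) (x : Bᗮ) :
    hP.dualEquiv hker X ((T†).restrict hB x) = (U†) (hP.dualEquiv hker X x) := by
  rw [dualEquiv, ContinuousLinearEquiv.trans_apply, ContinuousLinearEquiv.trans_apply,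
    orthogonalEquiv_adjoint_restrict_apply hA hB]
  exact X.adjoint_symm_apply_adjoint_apply hX _

theorem norm_dualEquiv_mul_norm_symm_le (hP : IsProj A P) (hker : P.ker = B) (X : A ≃L[𝕜] K) :
    ‖(hP.dualEquiv hker X : Bᗮ →L[𝕜] K)‖ * ‖((hP.dualEquiv hker X).symm : K →L[𝕜] Bᗮ)‖ ≤
      ‖P‖ * (‖(X : A →L[𝕜] K)‖ * ‖(X.symm : K →L[𝕜] A)‖) := by
  have h1 : ‖(hP.dualEquiv hker X : Bᗮ →L[𝕜] K)‖ ≤ ‖(X.symm : K →L[𝕜] A)‖ :=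
    ContinuousLinearMap.opNorm_le_bound _ (norm_nonneg _) fun x ↦
      ((X.adjoint.symm : A →L[𝕜] K).le_of_opNorm_le X.norm_adjoint_symm.le _).trans
        (by gcongr; exact hP.norm_orthogonalEquiv_apply_le hker x)
  have h2 : ‖((hP.dualEquiv hker X).symm : K →L[𝕜] Bᗮ)‖ ≤ ‖P‖ * ‖(X : A →L[𝕜] K)‖ :=
    ContinuousLinearMap.opNorm_le_bound _ (by positivity) fun y ↦
      (hP.norm_orthogonalEquiv_symm_apply_le hker _).trans <| by
        rw [mul_assoc]
        gcongr
        exact (X.adjoint : K →L[𝕜] A).le_of_opNorm_le X.norm_adjoint.le y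
  calc _ ≤ ‖(X.symm : K →L[𝕜] A)‖ * (‖P‖ * ‖(X : A →L[𝕜] K)‖) :=
        mul_le_mul h1 h2 (norm_nonneg _) (norm_nonneg _)
    _ = _ := by ring

end LinearMap.IsProj
end Projection

section SumEstimates

variable {𝕜 E ι : Type*} [RCLike 𝕜] [NormedAddCommGroup E] [InnerProductSpace 𝕜 E]

def LowerSumEstimate (B : ι → Submodule 𝕜 E) (c : ℝ) : Prop :=
  ∀ (s : Finset ι) (x : ι → E), (∀ n ∈ s, x n ∈ B n) →
    c ^ 2 * ∑ n ∈ s, ‖x n‖ ^ 2 ≤ ‖∑ n ∈ s, x n‖ ^ 2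

def UpperSumEstimate (A : ι → Submodule 𝕜 E) (C : ℝ) : Prop :=
  ∀ (s : Finset ι) (x : ι → E), (∀ n ∈ s, x n ∈ A n) →
    ‖∑ n ∈ s, x n‖ ^ 2 ≤ C ^ 2 * ∑ n ∈ s, ‖x n‖ ^ 2

variable {A B : ι → Submodule 𝕜 E}

theorem inner_sum_sum_of_orthogonal (horth : ∀ n k, n ≠ k → ∀ a ∈ A n, ∀ b ∈ B k, ⟪a, b⟫_𝕜 = 0)
    {s t : Finset ι} (hst : s ⊆ t) {a b : ι → E} (ha : ∀ n ∈ s, a n ∈ A n)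
    (hb : ∀ k ∈ t, b k ∈ B k) : ⟪∑ n ∈ s, a n, ∑ k ∈ t, b k⟫_𝕜 = ∑ n ∈ s, ⟪a n, b n⟫_𝕜 := by
  rw [sum_inner]
  refine Finset.sum_congr rfl fun n hn ↦ ?_
  rw [inner_sum]
  exact Finset.sum_eq_single_of_mem n (hst hn) fun k hk hkn ↦
    horth n k (Ne.symm hkn) _ (ha n hn) _ (hb k hk)

theorem norm_inner_sq_le_of_lowerSumEstimate
    (horth : ∀ n k, n ≠ k → ∀ a ∈ A n, ∀ b ∈ B k, ⟪a, b⟫_𝕜 = 0) {c : ℝ}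
    (hlow : LowerSumEstimate B c) {s : Finset ι} {a : ι → E} (ha : ∀ n ∈ s, a n ∈ A n)
    {w : E} (hw : w ∈ ⨆ n, B n) :
    c ^ 2 * ‖⟪∑ n ∈ s, a n, w⟫_𝕜‖ ^ 2 ≤ (∑ n ∈ s, ‖a n‖ ^ 2) * ‖w‖ ^ 2 := by
  classical
  obtain ⟨f, hfB, rfl⟩ := (Submodule.mem_iSup_iff_exists_finsupp B w).mp hw
  set t := s ∪ f.support
  have hft : (f.sum fun _ y ↦ y) = ∑ k ∈ t, f k :=
    Finsupp.sum_of_support_subset f Finset.subset_union_right _ fun _ _ ↦ rfl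
  have hCS : ‖⟪∑ n ∈ s, a n, ∑ k ∈ t, f k⟫_𝕜‖ ^ 2 ≤
      (∑ n ∈ s, ‖a n‖ ^ 2) * ∑ n ∈ s, ‖f n‖ ^ 2 := by
    rw [inner_sum_sum_of_orthogonal horth Finset.subset_union_left ha fun k _ ↦ hfB k]
    calc ‖∑ n ∈ s, ⟪a n, f n⟫_𝕜‖ ^ 2 ≤ (∑ n ∈ s, ‖a n‖ * ‖f n‖) ^ 2 := by
          gcongr
          exact (norm_sum_le _ _).trans (Finset.sum_le_sum fun n _ ↦ norm_inner_le_norm _ _)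
      _ ≤ _ := Finset.sum_mul_sq_le_sq_mul_sq _ _ _
  have hsub : ∑ n ∈ s, ‖f n‖ ^ 2 ≤ ∑ k ∈ t, ‖f k‖ ^ 2 :=
    Finset.sum_le_sum_of_subset_of_nonneg Finset.subset_union_left fun _ _ _ ↦ by positivity
  have hlow' := hlow t f fun k _ ↦ hfB k
  rw [hft]
  calc c ^ 2 * ‖⟪∑ n ∈ s, a n, ∑ k ∈ t, f k⟫_𝕜‖ ^ 2
      ≤ c ^ 2 * ((∑ n ∈ s, ‖a n‖ ^ 2) * ∑ k ∈ t, ‖f k‖ ^ 2) := by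
        gcongr; exact hCS.trans (by gcongr)
    _ = (∑ n ∈ s, ‖a n‖ ^ 2) * (c ^ 2 * ∑ k ∈ t, ‖f k‖ ^ 2) := by ring
    _ ≤ _ := by gcongr

theorem upperSumEstimate_of_lowerSumEstimate
    (horth : ∀ n k, n ≠ k → ∀ a ∈ A n, ∀ b ∈ B k, ⟪a, b⟫_𝕜 = 0)
    (hdense : (⨆ n, B n).topologicalClosure = ⊤) {c : ℝ} (hc : 0 < c)
    (hlow : LowerSumEstimate B c) : UpperSumEstimate A c⁻¹ := by
  intro s a ha
  set u := ∑ n ∈ s, a n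
  set S := ∑ n ∈ s, ‖a n‖ ^ 2
  have hclosed : IsClosed {w : E | c ^ 2 * ‖⟪u, w⟫_𝕜‖ ^ 2 ≤ S * ‖w‖ ^ 2} :=
    isClosed_le (by fun_prop) (by fun_prop)
  have hu : c ^ 2 * ‖⟪u, u⟫_𝕜‖ ^ 2 ≤ S * ‖u‖ ^ 2 := by
    have hmem : u ∈ (⨆ n, B n).topologicalClosure := hdense ▸ Submodule.mem_top
    rw [← SetLike.mem_coe, Submodule.topologicalClosure_coe] at hmem
    exact closure_minimal (fun w hw ↦ norm_inner_sq_le_of_lowerSumEstimate horth hlow ha hw)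
      hclosed hmem
  rw [inner_self_eq_norm_sq_to_K, norm_pow, RCLike.norm_ofReal, abs_norm] at hu
  rw [inv_pow, ← div_eq_inv_mul, le_div_iff₀ (by positivity)]
  rcases (sq_nonneg ‖u‖).eq_or_lt with h0 | hpos
  · rw [← h0, zero_mul]; positivity
  · nlinarith

theorem lowerSumEstimate_of_upperSumEstimate [CompleteSpace E] {Q : ι → E →L[𝕜] E}
    (hQA : ∀ n x, Q n x ∈ A n) (hQB : ∀ n, ∀ b ∈ B n, ((Q n)†) b = b)
    (hQB' : ∀ n k, n ≠ k → ∀ b ∈ B k, ((Q n)†) b = 0) {M : ℝ} (hM : 0 < M)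
    (hQ : ∀ n, ‖Q n‖ ≤ M) {C : ℝ} (hC : 0 < C) (hup : UpperSumEstimate A C) :
    LowerSumEstimate B (C * M)⁻¹ := by
  intro s b hb
  set v := ∑ n ∈ s, b n
  set N := ∑ n ∈ s, ‖b n‖ ^ 2
  set w := ∑ n ∈ s, Q n (b n)
  have hproj : ∀ n ∈ s, ((Q n)†) v = b n := fun n hn ↦ by
    rw [map_sum, Finset.sum_eq_single_of_mem n hn fun k hk hkn ↦
      hQB' n k (Ne.symm hkn) _ (hb k hk)]
    exact hQB n _ (hb n hn)
  have hN : N = RCLike.re ⟪w, v⟫_𝕜 := by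
    simp only [N, w, sum_inner, map_sum]
    refine Finset.sum_congr rfl fun n hn ↦ ?_
    rw [← ContinuousLinearMap.adjoint_inner_right, hproj n hn, inner_self_eq_norm_sq]
  have hNv : N ≤ ‖w‖ * ‖v‖ := hN ▸ (RCLike.re_le_norm _).trans (norm_inner_le_norm _ _)
  have hQb : ∑ n ∈ s, ‖Q n (b n)‖ ^ 2 ≤ M ^ 2 * N := by
    rw [Finset.mul_sum]
    refine Finset.sum_le_sum fun n _ ↦ ?_
    rw [← mul_pow]
    gcongr
    exact (Q n).le_of_opNorm_le (hQ n) _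
  have hw : ‖w‖ ^ 2 ≤ (C * M) ^ 2 * N :=
    (hup s _ fun n _ ↦ hQA n _).trans (by rw [mul_pow, mul_assoc]; gcongr)
  have hN0 : 0 ≤ N := by positivity
  rw [inv_pow, ← div_eq_inv_mul, div_le_iff₀ (by positivity)]
  rcases hN0.eq_or_lt with h0 | hpos
  · rw [← h0]; positivity
  · nlinarith [norm_nonneg w, norm_nonneg v]

end SumEstimates

section SkewDecomposition

variable {𝕜 E : Type*} [RCLike 𝕜] [NormedAddCommGroup E] [InnerProductSpace 𝕜 E]
  {Hn : ℕ → Submodule 𝕜 E} {Q : ℕ → E →L[𝕜] E}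

theorem eq_zero_of_forall_apply_eq_zero (hQid : ∀ n, ∀ x ∈ Hn n, Q n x = x)
    (hQoff : ∀ n k, n ≠ k → ∀ x ∈ Hn k, Q n x = 0)
    (hdense : (⨆ k, Hn k).topologicalClosure = ⊤)
    (hcap : ⨅ n, (⨆ k ∈ {k : ℕ | n ≤ k}, Hn k).topologicalClosure = ⊥)
    {z : E} (hz : ∀ n, Q n z = 0) : z = 0 := by
  have hstep : ∀ n, ∀ x ∈ (⨆ k ∈ {k : ℕ | n ≤ k}, Hn k).topologicalClosure,
      x - Q n x ∈ (⨆ k ∈ {k : ℕ | n + 1 ≤ k}, Hn k).topologicalClosure := fun n x hx ↦ by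
    refine Submodule.apply_mem_of_mem_topologicalClosure_biSup
      (Submodule.isClosed_topologicalClosure _) (.id 𝕜 E - Q n) (fun k hk y hy ↦ ?_) hx
    rw [sub_apply, id_apply]
    obtain rfl | hnk := (show n ≤ k from hk).eq_or_lt
    · rw [hQid n y hy, sub_self]
      exact Submodule.zero_mem _
    · rw [hQoff n k hnk.ne y hy, sub_zero]
      exact Submodule.le_topologicalClosure_biSup hnk hy
  have hmem : ∀ n, z ∈ (⨆ k ∈ {k : ℕ | n ≤ k}, Hn k).topologicalClosure := fun n ↦ by
    induction n with
    | zero =>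
      have h0 : (⨆ k ∈ {k : ℕ | 0 ≤ k}, Hn k) = ⨆ k, Hn k := by simp
      rw [h0, hdense]
      exact Submodule.mem_top
    | succ n ih => simpa [hz n] using hstep n z ih
  have hz0 := (Submodule.mem_iInf _).mpr hmem
  rwa [hcap, Submodule.mem_bot] at hz0

theorem mem_of_forall_ne_apply_eq_zero (hQ : ∀ n, IsProj (Hn n) (Q n))
    (hQoff : ∀ n k, n ≠ k → ∀ x ∈ Hn k, Q n x = 0) (hzero : ∀ z, (∀ n, Q n z = 0) → z = 0)
    {n : ℕ} {x : E} (hx : ∀ k, k ≠ n → Q k x = 0) : x ∈ Hn n := by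
  have hx' : x - Q n x = 0 := hzero _ fun k ↦ by
    rcases eq_or_ne k n with rfl | hk
    · rw [map_sub, (hQ k).map_id _ ((hQ k).map_mem x), sub_self]
    · rw [map_sub, hx k hk, hQoff k n hk _ ((hQ n).map_mem x), sub_zero]
  rw [sub_eq_zero.mp hx']
  exact (hQ n).map_mem x

variable [CompleteSpace E]

theorem topologicalClosure_biSup_orthogonal_ker (hQ : ∀ n, IsProj (Hn n) (Q n))
    (hQoff : ∀ n k, n ≠ k → ∀ x ∈ Hn k, Q n x = 0) (hzero : ∀ z, (∀ n, Q n z = 0) → z = 0)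
    (n : ℕ) : (⨆ k ∈ {k : ℕ | k ≠ n}, (Q k).kerᗮ).topologicalClosure = (Hn n)ᗮ := by
  rw [← Submodule.orthogonal_orthogonal_eq_closure]
  congr 1
  refine le_antisymm (fun x hx ↦ mem_of_forall_ne_apply_eq_zero hQ hQoff hzero fun k hk ↦ ?_) ?_
  · have := (Q k).isClosed_ker.completeSpace_coe
    simpa using Submodule.orthogonal_le (le_biSup (fun k ↦ (Q k).kerᗮ) hk) hx
  · exact (Submodule.le_orthogonal_orthogonal _).trans <| Submodule.orthogonal_le <|
      iSup₂_le fun k hk ↦ Submodule.orthogonal_le fun y hy ↦ hQoff k n hk y hy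

theorem topologicalClosure_iSup_orthogonal_ker (hzero : ∀ z, (∀ n, Q n z = 0) → z = 0) :
    (⨆ n, (Q n).kerᗮ).topologicalClosure = ⊤ := by
  rw [Submodule.topologicalClosure_eq_top_iff, Submodule.eq_bot_iff]
  refine fun x hx ↦ hzero x fun n ↦ ?_
  have := (Q n).isClosed_ker.completeSpace_coe
  simpa using Submodule.orthogonal_le (le_iSup (fun n ↦ (Q n).kerᗮ) n) hx

theorem exists_lowerSumEstimate_orthogonal_ker_iff (hQ : ∀ n, IsProj (Hn n) (Q n))
    (hQoff : ∀ n k, n ≠ k → ∀ x ∈ Hn k, Q n x = 0) (hzero : ∀ z, (∀ n, Q n z = 0) → z = 0)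
    {CQ : ℝ} (hCQ : ∀ n, ‖Q n‖ ≤ CQ) :
    (∃ c, 0 < c ∧ LowerSumEstimate (fun n ↦ (Q n).kerᗮ) c) ↔
      ∃ C, 0 < C ∧ UpperSumEstimate Hn C := by
  have horth : ∀ n k, n ≠ k → ∀ a ∈ Hn n, ∀ b ∈ (Q k).kerᗮ, ⟪a, b⟫_𝕜 = 0 :=
    fun n k hnk a ha b hb ↦ (Submodule.mem_orthogonal _ _).mp hb a (hQoff k n hnk.symm a ha)
  have hQoff' : ∀ n k, n ≠ k → ∀ b ∈ (Q k).kerᗮ, ((Q n)†) b = 0 := fun n k hnk b hb ↦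
    LinearMap.mem_ker.mp <| (hQ n).ker_adjoint ▸
      Submodule.orthogonal_le (fun a ha ↦ hQoff k n hnk.symm a ha) hb
  constructor
  · rintro ⟨c, hc, hlow⟩
    exact ⟨c⁻¹, inv_pos.mpr hc, upperSumEstimate_of_lowerSumEstimate horth
      (topologicalClosure_iSup_orthogonal_ker hzero) hc hlow⟩
  · rintro ⟨C, hC, hup⟩
    exact ⟨(C * max CQ 1)⁻¹, by positivity, lowerSumEstimate_of_upperSumEstimate
      (fun n ↦ (hQ n).map_mem) (fun n ↦ ((hQ n).adjoint rfl).map_id) hQoff' (by positivity)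
      (fun n ↦ (hCQ n).trans (le_max_left _ _)) hC hup⟩

end SkewDecomposition

theorem dual_setup_for_adjoint_general
    {H : Type} [NormedAddCommGroup H] [InnerProductSpace ℂ H] [CompleteSpace H]
    (K0 : ℕ → Type) [∀ n, NormedAddCommGroup (K0 n)] [∀ n, InnerProductSpace ℂ (K0 n)]
    [∀ n, CompleteSpace (K0 n)]
    -- the unitaries `U_{0n}`, each reductive, with pairwise singular spectral measures:
    (U0 : ∀ n, K0 n →L[ℂ] K0 n)
    (hU0 : ∀ n, IsUnitaryOp (U0 n))
    (T : H →L[ℂ] H)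
    -- the nonzero closed `T`-invariant subspaces `H_n`:
    (Hn : ℕ → Submodule ℂ H)
    (hHcl : ∀ n, IsClosed ((Hn n : Set H)))
    (hHne : ∀ n, Hn n ≠ ⊥)
    (hTH : ∀ n, ∀ x ∈ Hn n, T x ∈ Hn n)
    -- `Vn n = ⋁_{k ≠ n} H_k`:
    (Vn : ℕ → Submodule ℂ H)
    (hVn : ∀ n, Vn n = (⨆ k ∈ {k : ℕ | k ≠ n}, Hn k).topologicalClosure)
    -- (main0):
    (hmain0 : ∀ n, Hn n ⊓ Vn n = ⊥ ∧ Hn n ⊔ Vn n = ⊤)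
    -- (main1): the invertible intertwiners `X_n : H_n → K_{0n}`:
    (X0 : ∀ n, ↥(Hn n) ≃L[ℂ] K0 n)
    (hX0 : ∀ (n) (x : ↥(Hn n)), X0 n ⟨T ↑x, hTH n ↑x x.2⟩ = U0 n (X0 n x))
    -- the skew projections `Q_n` onto `H_n` along `⋁_{k ≠ n} H_k`:
    (Q : ℕ → H →L[ℂ] H)
    (hQmem : ∀ n x, Q n x ∈ Hn n)
    (hQid : ∀ n, ∀ x ∈ Hn n, Q n x = x)
    (hQker : ∀ n, ∀ x ∈ Vn n, Q n x = 0)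
    -- the inverses `U_{0n}⁻¹`:
    (U0inv : ∀ n, K0 n →L[ℂ] K0 n)
    (hU0inv : ∀ n, (U0 n).comp (U0inv n) = ContinuousLinearMap.id ℂ (K0 n) ∧
      (U0inv n).comp (U0 n) = ContinuousLinearMap.id ℂ (K0 n))
    -- (xxnxxn1):
    (hXX : ∃ C : ℝ, ∀ n,
      ‖(X0 n : ↥(Hn n) →L[ℂ] K0 n)‖ * ‖((X0 n).symm : K0 n →L[ℂ] ↥(Hn n))‖ ≤ C)
    -- (qqn):
    (hQbd : ∃ C : ℝ, ∀ n, ‖Q n‖ ≤ C)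
    -- (cap):
    (hcap : (⨅ n : ℕ, (⨆ k ∈ {k : ℕ | n ≤ k}, Hn k).topologicalClosure) = ⊥)
    -- `H′_n = H ⊖ ⋁_{k ≠ n} H_k` and `V′_n = ⋁_{k ≠ n} H′_k`:
    (Hn' : ℕ → Submodule ℂ H) (hHn' : ∀ n, Hn' n = (Vn n)ᗮ)
    (Vn' : ℕ → Submodule ℂ H)
    (hVn' : ∀ n, Vn' n = (⨆ k ∈ {k : ℕ | k ≠ n}, Hn' k).topologicalClosure) :
    -- the `H′_n` are nonzero closed `T*`-invariant subspaces:
    (∀ n, Hn' n ≠ ⊥) ∧ (∀ n, IsClosed ((Hn' n : Set H))) ∧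
    ∃ hTadj : ∀ n, ∀ x ∈ Hn' n, ContinuousLinearMap.adjoint T x ∈ Hn' n,
      -- (main0) for the dual family:
      (∀ n, Hn' n ⊓ Vn' n = ⊥ ∧ Hn' n ⊔ Vn' n = ⊤) ∧
      -- (main1) and (xxnxxn1) for the dual family, with `U_{0n}⁻¹`:
      (∃ X0' : ∀ n, ↥(Hn' n) ≃L[ℂ] K0 n,
        (∀ (n) (x : ↥(Hn' n)),
          X0' n ⟨ContinuousLinearMap.adjoint T ↑x, hTadj n ↑x x.2⟩ = U0inv n (X0' n x)) ∧
        ∃ C1 : ℝ, ∀ n,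
          ‖(X0' n : ↥(Hn' n) →L[ℂ] K0 n)‖ * ‖((X0' n).symm : K0 n →L[ℂ] ↥(Hn' n))‖ ≤ C1) ∧
      -- (qqn) for the dual family:
      (∃ Q' : ℕ → H →L[ℂ] H, (∀ n x, Q' n x ∈ Hn' n) ∧ (∀ n, ∀ x ∈ Hn' n, Q' n x = x) ∧
        (∀ n, ∀ x ∈ Vn' n, Q' n x = 0) ∧ ∃ C2 : ℝ, ∀ n, ‖Q' n‖ ≤ C2) ∧
      -- the equivalence (i) ↔ (ii):
      ((∃ c' : ℝ, 0 < c' ∧ ∀ (s : Finset ℕ) (x' : ℕ → H), (∀ n ∈ s, x' n ∈ Hn' n) →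
          c' ^ 2 * ∑ n ∈ s, ‖x' n‖ ^ 2 ≤ ‖∑ n ∈ s, x' n‖ ^ 2) ↔
        (∃ C : ℝ, 0 < C ∧ ∀ (s : Finset ℕ) (x : ℕ → H), (∀ n ∈ s, x n ∈ Hn n) →
          ‖∑ n ∈ s, x n‖ ^ 2 ≤ C ^ 2 * ∑ n ∈ s, ‖x n‖ ^ 2)) := by
  have hQ : ∀ n, IsProj (Hn n) (Q n) := fun n ↦ ⟨hQmem n, hQid n⟩
  have hker : ∀ n, (Q n).ker = Vn n := fun n ↦ (hQ n).ker_eq (hQker n) (hmain0 n).2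
  have hQoff : ∀ n k, n ≠ k → ∀ x ∈ Hn k, Q n x = 0 := fun n k hnk x hx ↦
    hQker n x (hVn n ▸ Submodule.le_topologicalClosure_biSup hnk.symm hx)
  have hzero : ∀ z, (∀ n, Q n z = 0) → z = 0 := fun z ↦ eq_zero_of_forall_apply_eq_zero hQid hQoff
    (Submodule.topologicalClosure_iSup_eq_top (hVn 0 ▸ (hmain0 0).2)) hcap
  obtain rfl : Hn' = fun n ↦ (Q n).kerᗮ := funext fun n ↦ by rw [hHn', hker]
  obtain rfl : Vn' = fun n ↦ (Hn n)ᗮ :=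
    funext fun n ↦ (hVn' n).trans (topologicalClosure_biSup_orthogonal_ker hQ hQoff hzero n)
  have hTadj : ∀ n, ∀ x ∈ (Q n).kerᗮ, (T†) x ∈ (Q n).kerᗮ := fun n _ ↦
    ContinuousLinearMap.adjoint_mem_orthogonal fun x hx ↦ by
      rw [hker, hVn] at hx ⊢
      exact Submodule.apply_mem_of_mem_topologicalClosure_biSup
        (Submodule.isClosed_topologicalClosure _) T
        (fun k hk y hy ↦ Submodule.le_topologicalClosure_biSup hk (hTH k y hy)) hx
  have : ∀ n, CompleteSpace (Hn n) := fun n ↦ (hHcl n).completeSpace_coe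
  obtain ⟨C0, hC0⟩ := hXX
  obtain ⟨CQ, hCQ⟩ := hQbd
  refine ⟨fun n ↦ (hQ n).orthogonal_ker_ne_bot (hHne n), fun n ↦ Submodule.isClosed_orthogonal _,
    hTadj, fun n ↦ ⟨(hQ n).isCompl_orthogonal.inf_eq_bot, (hQ n).isCompl_orthogonal.sup_eq_top⟩,
    ⟨fun n ↦ (hQ n).dualEquiv rfl (X0 n), fun n x ↦ ?_, CQ * C0, fun n ↦ ?_⟩,
    ⟨fun n ↦ (Q n)†, fun n ↦ ((hQ n).adjoint rfl).map_mem, fun n ↦ ((hQ n).adjoint rfl).map_id,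
      fun n x hx ↦ LinearMap.mem_ker.mp ((hQ n).ker_adjoint ▸ hx), CQ,
      fun n ↦ (LinearIsometryEquiv.norm_map _ _).trans_le (hCQ n)⟩,
    exists_lowerSumEstimate_orthogonal_ker_iff hQ hQoff hzero hCQ⟩
  · rw [← ContinuousLinearMap.adjoint_eq_of_norm_map_of_comp_eq_id (hU0 n).1 (hU0inv n).1]
    exact (hQ n).dualEquiv_adjoint_restrict_apply (hTH n) (hTadj n) rfl (hX0 n) x
  · exact ((hQ n).norm_dualEquiv_mul_norm_symm_le rfl (X0 n)).trans <|
      mul_le_mul (hCQ n) (hC0 n) (by positivity) ((norm_nonneg _).trans (hCQ 0))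

/-- Proposition 2.8: the adjoint `T*` satisfies the Setup with the dual family
`H′_n = H ⊖ ⋁_{k ≠ n} H_k` and the inverses `U_{0n}⁻¹`; moreover the lower estimate for
the dual family is equivalent to the upper estimate for the original family. -/
theorem dual_setup_for_adjoint
    {H : Type} [NormedAddCommGroup H] [InnerProductSpace ℂ H] [CompleteSpace H]
    [TopologicalSpace.SeparableSpace H]
    (K0 : ℕ → Type) [∀ n, NormedAddCommGroup (K0 n)] [∀ n, InnerProductSpace ℂ (K0 n)]
    [∀ n, CompleteSpace (K0 n)] [∀ n, TopologicalSpace.SeparableSpace (K0 n)]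
    -- the unitaries `U_{0n}`, each reductive, with pairwise singular spectral measures:
    (U0 : ∀ n, K0 n →L[ℂ] K0 n)
    (hU0 : ∀ n, IsUnitaryOp (U0 n))
    (hU0red : ∀ (n) (F : Submodule ℂ (K0 n)), IsClosed (F : Set (K0 n)) →
      (∀ x ∈ F, U0 n x ∈ F) → ∀ x ∈ F, ContinuousLinearMap.adjoint (U0 n) x ∈ F)
    (hsing : ∀ n k, n ≠ k → ∀ Z : K0 n →L[ℂ] K0 k, Z.comp (U0 n) = (U0 k).comp Z → Z = 0)
    (T : H →L[ℂ] H)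
    -- the nonzero closed `T`-invariant subspaces `H_n`:
    (Hn : ℕ → Submodule ℂ H)
    (hHcl : ∀ n, IsClosed ((Hn n : Set H)))
    (hHne : ∀ n, Hn n ≠ ⊥)
    (hTH : ∀ n, ∀ x ∈ Hn n, T x ∈ Hn n)
    -- `Vn n = ⋁_{k ≠ n} H_k`:
    (Vn : ℕ → Submodule ℂ H)
    (hVn : ∀ n, Vn n = (⨆ k ∈ {k : ℕ | k ≠ n}, Hn k).topologicalClosure)
    -- (main0):
    (hmain0 : ∀ n, Hn n ⊓ Vn n = ⊥ ∧ Hn n ⊔ Vn n = ⊤)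
    -- (main1): the invertible intertwiners `X_n : H_n → K_{0n}`:
    (X0 : ∀ n, ↥(Hn n) ≃L[ℂ] K0 n)
    (hX0 : ∀ (n) (x : ↥(Hn n)), X0 n ⟨T ↑x, hTH n ↑x x.2⟩ = U0 n (X0 n x))
    -- the skew projections `Q_n` onto `H_n` along `⋁_{k ≠ n} H_k`:
    (Q : ℕ → H →L[ℂ] H)
    (hQmem : ∀ n x, Q n x ∈ Hn n)
    (hQid : ∀ n, ∀ x ∈ Hn n, Q n x = x)
    (hQker : ∀ n, ∀ x ∈ Vn n, Q n x = 0)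
    -- the inverses `U_{0n}⁻¹`:
    (U0inv : ∀ n, K0 n →L[ℂ] K0 n)
    (hU0inv : ∀ n, (U0 n).comp (U0inv n) = ContinuousLinearMap.id ℂ (K0 n) ∧
      (U0inv n).comp (U0 n) = ContinuousLinearMap.id ℂ (K0 n))
    -- (xxnxxn1):
    (hXX : ∃ C : ℝ, ∀ n,
      ‖(X0 n : ↥(Hn n) →L[ℂ] K0 n)‖ * ‖((X0 n).symm : K0 n →L[ℂ] ↥(Hn n))‖ ≤ C)
    -- (qqn):
    (hQbd : ∃ C : ℝ, ∀ n, ‖Q n‖ ≤ C)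
    -- (cap):
    (hcap : (⨅ n : ℕ, (⨆ k ∈ {k : ℕ | n ≤ k}, Hn k).topologicalClosure) = ⊥)
    -- `H′_n = H ⊖ ⋁_{k ≠ n} H_k` and `V′_n = ⋁_{k ≠ n} H′_k`:
    (Hn' : ℕ → Submodule ℂ H) (hHn' : ∀ n, Hn' n = (Vn n)ᗮ)
    (Vn' : ℕ → Submodule ℂ H)
    (hVn' : ∀ n, Vn' n = (⨆ k ∈ {k : ℕ | k ≠ n}, Hn' k).topologicalClosure) :
    -- the `H′_n` are nonzero closed `T*`-invariant subspaces:
    (∀ n, Hn' n ≠ ⊥) ∧ (∀ n, IsClosed ((Hn' n : Set H))) ∧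
    ∃ hTadj : ∀ n, ∀ x ∈ Hn' n, ContinuousLinearMap.adjoint T x ∈ Hn' n,
      -- (main0) for the dual family:
      (∀ n, Hn' n ⊓ Vn' n = ⊥ ∧ Hn' n ⊔ Vn' n = ⊤) ∧
      -- (main1) and (xxnxxn1) for the dual family, with `U_{0n}⁻¹`:
      (∃ X0' : ∀ n, ↥(Hn' n) ≃L[ℂ] K0 n,
        (∀ (n) (x : ↥(Hn' n)),
          X0' n ⟨ContinuousLinearMap.adjoint T ↑x, hTadj n ↑x x.2⟩ = U0inv n (X0' n x)) ∧
        ∃ C1 : ℝ, ∀ n,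
          ‖(X0' n : ↥(Hn' n) →L[ℂ] K0 n)‖ * ‖((X0' n).symm : K0 n →L[ℂ] ↥(Hn' n))‖ ≤ C1) ∧
      -- (qqn) for the dual family:
      (∃ Q' : ℕ → H →L[ℂ] H, (∀ n x, Q' n x ∈ Hn' n) ∧ (∀ n, ∀ x ∈ Hn' n, Q' n x = x) ∧
        (∀ n, ∀ x ∈ Vn' n, Q' n x = 0) ∧ ∃ C2 : ℝ, ∀ n, ‖Q' n‖ ≤ C2) ∧
      -- the equivalence (i) ↔ (ii):
      ((∃ c' : ℝ, 0 < c' ∧ ∀ (s : Finset ℕ) (x' : ℕ → H), (∀ n ∈ s, x' n ∈ Hn' n) →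
          c' ^ 2 * ∑ n ∈ s, ‖x' n‖ ^ 2 ≤ ‖∑ n ∈ s, x' n‖ ^ 2) ↔
        (∃ C : ℝ, 0 < C ∧ ∀ (s : Finset ℕ) (x : ℕ → H), (∀ n ∈ s, x n ∈ Hn n) →
          ‖∑ n ∈ s, x n‖ ^ 2 ≤ C ^ 2 * ∑ n ∈ s, ‖x n‖ ^ 2)) :=
  dual_setup_for_adjoint_general K0 U0 hU0 T Hn hHcl hHne hTH Vn hVn hmain0 X0 hX0 Q hQmem hQid
    hQker U0inv hU0inv hXX hQbd hcap Hn' hHn' Vn' hVn'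
end
end

section
/- Assume the Setup (Section 2) with conditions (sing), (main0), (main1), (xxnxxn1): sup_{n≥0} ‖X_n‖‖X_n⁻¹‖ < ∞, (qqn): sup_{n≥0} ‖Q_n‖ < ∞, and (cap): ∩_{n≥0} ⋁_{k≥n} H_k = {0}. If both T and T* have unitary asymptotes, then T is similar to U₀, i.e., there exists a bounded invertible operator X : H → K₀ with X T = U₀ X. -/
noncomputable section
set_option linter.unusedSectionVars false
set_option maxHeartbeats 2000000
open scoped ENNReal InnerProductSpace
open ContinuousLinearMap

/-- `(X, U)` is a unitary asymptote of `T`: `U` is unitary, `X` intertwines `T` with `U`,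
the pair is minimal (`⋁_{n ≥ 0} U^{-n} X H = K`), and it has the universal property with
respect to every pair `(Y, W)` with `W` unitary on a Hilbert space and `Y T = W Y`. -/
def IsUnitaryAsymptote {H : Type} [NormedAddCommGroup H] [InnerProductSpace ℂ H]
    [CompleteSpace H] (T : H →L[ℂ] H)
    (K : Type) [NormedAddCommGroup K] [InnerProductSpace ℂ K] [CompleteSpace K]
    (X : H →L[ℂ] K) (U : K →L[ℂ] K) : Prop :=
  IsUnitaryOp U ∧ X.comp T = U.comp X ∧
    (Submodule.span ℂ (⋃ n : ℕ, ⇑(U ^ n) ⁻¹' Set.range X)).topologicalClosure = ⊤ ∧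
    ∀ (K' : Type) [NormedAddCommGroup K'] [InnerProductSpace ℂ K'] [CompleteSpace K']
      (W : K' →L[ℂ] K') (Y : H →L[ℂ] K'), IsUnitaryOp W → Y.comp T = W.comp Y →
      ∃! Z : K →L[ℂ] K', Z.comp U = W.comp Z ∧ Y = Z.comp X

/-! ### Auxiliary lemmas -/

section UnitaryAux

variable {E : Type} [NormedAddCommGroup E] [InnerProductSpace ℂ E] [CompleteSpace E]

lemma IsUnitaryOp.adjoint_comp_self' {V : E →L[ℂ] E} (hV : IsUnitaryOp V) :
    (ContinuousLinearMap.adjoint V) ∘L V = 1 :=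
  (V.norm_map_iff_adjoint_comp_self).mp hV.1

lemma IsUnitaryOp.adjoint_apply_self {V : E →L[ℂ] E} (hV : IsUnitaryOp V) (x : E) :
    ContinuousLinearMap.adjoint V (V x) = x := by
  have h := hV.adjoint_comp_self'
  calc ContinuousLinearMap.adjoint V (V x) = ((ContinuousLinearMap.adjoint V) ∘L V) x := rfl
  _ = x := by rw [h]; rfl

lemma IsUnitaryOp.self_apply_adjoint {V : E →L[ℂ] E} (hV : IsUnitaryOp V) (x : E) :
    V (ContinuousLinearMap.adjoint V x) = x := by
  obtain ⟨y, rfl⟩ := hV.2 x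
  rw [hV.adjoint_apply_self]

lemma IsUnitaryOp.adjoint_unitary {V : E →L[ℂ] E} (hV : IsUnitaryOp V) :
    IsUnitaryOp (ContinuousLinearMap.adjoint V) := by
  constructor
  · intro x
    obtain ⟨y, rfl⟩ := hV.2 x
    rw [hV.adjoint_apply_self, hV.1]
  · intro y
    exact ⟨V y, hV.adjoint_apply_self y⟩

lemma pythagoras_finset {ι : Type*} (v : ι → E)
    (hv : ∀ i j, i ≠ j → ⟪v i, v j⟫_ℂ = 0) (s : Finset ι) :
    ‖∑ i ∈ s, v i‖ ^ 2 = ∑ i ∈ s, ‖v i‖ ^ 2 := by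
  have h := inner_self_eq_norm_sq (𝕜 := ℂ) (∑ i ∈ s, v i)
  rw [sum_inner] at h
  rw [← h, map_sum]
  refine Finset.sum_congr rfl fun i hi => ?_
  rw [inner_sum, Finset.sum_eq_single i]
  · exact inner_self_eq_norm_sq (v i)
  · intro j _ hj
    simp [hv i j (Ne.symm hj)]
  · intro h'; exact absurd hi h'

lemma norm_sum_le_of_orthogonal {ι : Type*} {v : ι → E} {c : ℝ}
    (hv : ∀ i j, i ≠ j → ⟪v i, v j⟫_ℂ = 0) (s : Finset ι)
    (hb : ∑ i ∈ s, ‖v i‖ ^ 2 ≤ c ^ 2) (hc : 0 ≤ c) : ‖∑ i ∈ s, v i‖ ≤ c := by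
  have := pythagoras_finset v hv s
  nlinarith [norm_nonneg (∑ i ∈ s, v i)]

lemma summable_of_orthogonal {v : ℕ → E}
    (hv : ∀ i j, i ≠ j → ⟪v i, v j⟫_ℂ = 0)
    (h2 : Summable fun n => ‖v n‖ ^ 2) : Summable v := by
  rw [summable_iff_cauchySeq_finset, cauchySeq_finset_iff_sum_vanishing]
  intro e he
  obtain ⟨ε, hε, hball⟩ := Metric.mem_nhds_iff.1 he
  obtain ⟨s, hs⟩ := h2.vanishing (e := Metric.ball 0 (ε ^ 2 / 2))
    (Metric.ball_mem_nhds 0 (by positivity))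
  refine ⟨s, fun t ht => hball ?_⟩
  have hsum := hs t ht
  simp only [Metric.mem_ball, dist_zero_right, Real.norm_eq_abs] at hsum ⊢
  have hpyth := pythagoras_finset v hv t
  have h1 : ‖∑ i ∈ t, v i‖ ^ 2 < ε ^ 2 := by
    rw [hpyth]
    calc ∑ i ∈ t, ‖v i‖ ^ 2 ≤ |∑ i ∈ t, ‖v i‖ ^ 2| := le_abs_self _
    _ < ε ^ 2 / 2 := hsum
    _ ≤ ε ^ 2 := by nlinarith
  nlinarith [norm_nonneg (∑ b ∈ t, v b)]

lemma norm_tsum_le_of_orthogonal {v : ℕ → E} {c : ℝ}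
    (hv : ∀ i j, i ≠ j → ⟪v i, v j⟫_ℂ = 0)
    (h2 : Summable fun n => ‖v n‖ ^ 2)
    (hb : ∀ s : Finset ℕ, ∑ i ∈ s, ‖v i‖ ^ 2 ≤ c ^ 2) (hc : 0 ≤ c) :
    ‖∑' n, v n‖ ≤ c := by
  have hsum := summable_of_orthogonal hv h2
  refine le_of_tendsto hsum.hasSum.norm (Filter.Eventually.of_forall fun s => ?_)
  exact norm_sum_le_of_orthogonal hv s (hb s) hc

lemma sq_sum_bound {G : ℕ → Type} [∀ n, NormedAddCommGroup (G n)]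
    [∀ n, InnerProductSpace ℂ (G n)] [∀ n, CompleteSpace (G n)]
    (Z : ∀ n, E →L[ℂ] G n) (M : ℝ) (hM : ∀ n, ‖Z n‖ ≤ M)
    (horto : ∀ n k, n ≠ k → (Z k).comp (ContinuousLinearMap.adjoint (Z n)) = 0)
    (k : E) (s : Finset ℕ) :
    ∑ n ∈ s, ‖Z n k‖ ^ 2 ≤ M ^ 2 * ‖k‖ ^ 2 := by
  set u : ℕ → E := fun n => ContinuousLinearMap.adjoint (Z n) (Z n k) with hu
  have hu_orth : ∀ n m, n ≠ m → ⟪u n, u m⟫_ℂ = 0 := by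
    intro n m hnm
    have h1 : ⟪u n, u m⟫_ℂ = ⟪Z m (u n), Z m k⟫_ℂ :=
      ContinuousLinearMap.adjoint_inner_right (Z m) (u n) (Z m k)
    have h2 : Z m (u n) = 0 := by
      have h3 := horto n m hnm
      calc Z m (u n) = ((Z m).comp (ContinuousLinearMap.adjoint (Z n))) (Z n k) := rfl
      _ = 0 := by rw [h3]; rfl
    rw [h1, h2, inner_zero_left]
  set S := ∑ n ∈ s, ‖Z n k‖ ^ 2 with hS
  have hS0 : 0 ≤ S := Finset.sum_nonneg fun n _ => sq_nonneg _
  have hsum_eq : S = RCLike.re (⟪k, ∑ n ∈ s, u n⟫_ℂ) := by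
    rw [inner_sum, map_sum]
    refine Finset.sum_congr rfl fun n _ => ?_
    have h4 : ⟪k, u n⟫_ℂ = ⟪Z n k, Z n k⟫_ℂ :=
      ContinuousLinearMap.adjoint_inner_right (Z n) k (Z n k)
    rw [h4, inner_self_eq_norm_sq]
  have h1 : S ≤ ‖k‖ * ‖∑ n ∈ s, u n‖ := by
    rw [hsum_eq]
    calc RCLike.re (⟪k, ∑ n ∈ s, u n⟫_ℂ) ≤ ‖⟪k, ∑ n ∈ s, u n⟫_ℂ‖ :=
      RCLike.re_le_norm _
    _ ≤ ‖k‖ * ‖∑ n ∈ s, u n‖ := norm_inner_le_norm _ _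
  have h2 : ‖∑ n ∈ s, u n‖ ^ 2 = ∑ n ∈ s, ‖u n‖ ^ 2 := pythagoras_finset u hu_orth s
  have h3 : ∑ n ∈ s, ‖u n‖ ^ 2 ≤ M ^ 2 * S := by
    rw [hS, Finset.mul_sum]
    refine Finset.sum_le_sum fun n _ => ?_
    have hn : ‖u n‖ ≤ M * ‖Z n k‖ := by
      calc ‖u n‖ ≤ ‖ContinuousLinearMap.adjoint (Z n)‖ * ‖Z n k‖ := le_opNorm _ _
      _ = ‖Z n‖ * ‖Z n k‖ := by
          rw [LinearIsometryEquiv.norm_map (ContinuousLinearMap.adjoint) (Z n)]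
      _ ≤ M * ‖Z n k‖ := mul_le_mul_of_nonneg_right (hM n) (norm_nonneg _)
    calc ‖u n‖ ^ 2 ≤ (M * ‖Z n k‖) ^ 2 := pow_le_pow_left₀ (norm_nonneg _) hn 2
    _ = M ^ 2 * ‖Z n k‖ ^ 2 := by ring
  rcases eq_or_lt_of_le hS0 with hS0' | hS0'
  · rw [← hS0']; positivity
  · have h4 : S ^ 2 ≤ ‖k‖ ^ 2 * (M ^ 2 * S) := by
      calc S ^ 2 ≤ (‖k‖ * ‖∑ n ∈ s, u n‖) ^ 2 := pow_le_pow_left₀ hS0 h1 2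
      _ = ‖k‖ ^ 2 * ‖∑ n ∈ s, u n‖ ^ 2 := by ring
      _ ≤ ‖k‖ ^ 2 * (M ^ 2 * S) := by
            rw [h2]
            exact mul_le_mul_of_nonneg_left h3 (sq_nonneg _)
    nlinarith

end UnitaryAux

lemma weight_bound (a : ℕ → ℝ) (ha : ∀ n, 0 ≤ a n)
    (h : ∀ w : ℕ → ℝ, (∀ n, 0 ≤ w n) → Summable (fun n => w n ^ 2) →
      ∃ B, ∀ n, w n * a n ≤ B) :
    ∃ M, 0 ≤ M ∧ ∀ n, a n ≤ M := by
  classical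
  by_contra hM
  push_neg at hM
  have key : ∀ (m : ℕ) (C : ℝ), ∃ n, m < n ∧ C < a n := by
    intro m C
    by_contra hc
    push_neg at hc
    set D := max C ((Finset.range (m+1)).sup' (by simp) a) with hD
    obtain ⟨n, hn⟩ := hM (max D 0) (le_max_right _ _)
    rcases le_or_gt n m with h1 | h1
    · have : a n ≤ D := le_trans (Finset.le_sup' a (by simp [Nat.lt_succ_iff, h1] :
        n ∈ Finset.range (m+1))) (le_max_right _ _)
      exact absurd hn (not_lt.2 (le_trans this (le_max_left _ _)))
    · have : a n ≤ D := le_trans (hc n h1) (le_max_left _ _)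
      exact absurd hn (not_lt.2 (le_trans this (le_max_left _ _)))
  let F : ℕ → ℕ := fun j => Nat.rec (key 0 (((0:ℕ)+1 : ℝ) * 2 ^ 0)).choose
    (fun j fj => (key fj (((j+1:ℕ)+1 : ℝ) * 2 ^ (j+1))).choose) j
  have hFsucc : ∀ j : ℕ, F j < F (j+1) :=
    fun j => (key (F j) (((j+1:ℕ)+1 : ℝ) * 2 ^ (j+1))).choose_spec.1
  have hFval : ∀ j : ℕ, ((j:ℝ) + 1) * 2 ^ j < a (F j) := by
    intro j
    cases j with
    | zero =>
      have h0 := (key 0 (((0:ℕ)+1 : ℝ) * 2 ^ 0)).choose_spec.2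
      have e0 : F 0 = (key 0 (((0:ℕ)+1 : ℝ) * 2 ^ 0)).choose := rfl
      rw [e0]
      convert h0 using 2 <;> norm_num
    | succ j =>
      have h2 := (key (F j) (((j+1:ℕ)+1 : ℝ) * 2 ^ (j+1))).choose_spec.2
      have e : (((j+1:ℕ):ℝ) + 1) = ((j+1:ℕ)+1 : ℝ) := by push_cast; ring
      rw [e]
      exact h2
  have hFmono : StrictMono F := strictMono_nat_of_lt_succ hFsucc
  let w : ℕ → ℝ := Function.extend F (fun j => ((2:ℝ)⁻¹) ^ j) (fun _ => 0)
  have hwF : ∀ j, w (F j) = ((2:ℝ)⁻¹) ^ j := fun j =>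
    hFmono.injective.extend_apply _ _ j
  have hw0 : ∀ n, n ∉ Set.range F → w n = 0 := by
    intro n hn
    have : ¬ ∃ j, F j = n := by simpa [Set.range] using hn
    exact Function.extend_apply' _ _ _ this
  have hwnn : ∀ n, 0 ≤ w n := by
    intro n
    by_cases h : n ∈ Set.range F
    · obtain ⟨j, rfl⟩ := h
      rw [hwF]; positivity
    · rw [hw0 n h]
  have hsummable : Summable (fun n => w n ^ 2) := by
    rw [← hFmono.injective.summable_iff (f := fun n => w n ^ 2)
      (by intro n hn; show w n ^ 2 = 0; rw [hw0 n hn]; ring)]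
    have e : ((fun n => w n ^ 2) ∘ F) = fun j => ((4:ℝ)⁻¹) ^ j := by
      funext j
      show w (F j) ^ 2 = _
      rw [hwF j, ← pow_mul, show ((4:ℝ)⁻¹) = ((2:ℝ)⁻¹) ^ 2 by norm_num, ← pow_mul,
        Nat.mul_comm]
    rw [e]
    exact summable_geometric_of_lt_one (by norm_num) (by norm_num)
  obtain ⟨B, hB⟩ := h w hwnn hsummable
  obtain ⟨j, hj⟩ := exists_nat_gt B
  have h1 : w (F j) * a (F j) ≤ B := hB (F j)
  rw [hwF j] at h1
  have hpos : (0:ℝ) < ((2:ℝ)⁻¹) ^ j := by positivity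
  have h2 : ((2:ℝ)⁻¹) ^ j * (((j:ℝ) + 1) * 2 ^ j) < ((2:ℝ)⁻¹) ^ j * a (F j) :=
    mul_lt_mul_of_pos_left (hFval j) hpos
  have e1 : ((2:ℝ)⁻¹) ^ j * (((j:ℝ) + 1) * 2 ^ j) = (j:ℝ) + 1 := by
    rw [inv_pow]
    field_simp
  rw [e1] at h2
  linarith

section LpAux

variable {E : ℕ → Type} [∀ n, NormedAddCommGroup (E n)] [∀ n, InnerProductSpace ℂ (E n)]
variable {H : Type} [NormedAddCommGroup H] [InnerProductSpace ℂ H]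

lemma lp_norm_sq_eq_tsum (f : lp E 2) : ‖f‖ ^ 2 = ∑' i, ‖f i‖ ^ 2 := by
  calc ‖f‖ ^ 2 = ‖f‖ ^ (2 : ℝ≥0∞).toReal := by norm_cast
  _ = ∑' i, ‖f i‖ ^ (2 : ℝ≥0∞).toReal := lp.norm_rpow_eq_tsum (by norm_num) f
  _ = ∑' i, ‖f i‖ ^ (2 : ℕ) := by norm_cast

lemma lp_summable_norm_sq (f : lp E 2) : Summable fun i => ‖f i‖ ^ 2 := by
  have h := lp.hasSum_norm (p := 2) (by norm_num) f
  have e : (fun i => ‖f i‖ ^ (2 : ℝ≥0∞).toReal) = fun i => ‖f i‖ ^ 2 := by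
    funext i
    rw [show (2 : ℝ≥0∞).toReal = ((2:ℕ):ℝ) by norm_num, Real.rpow_natCast]
  rw [e] at h
  exact h.summable

lemma lp_norm_le_of_sq {f : lp E 2} {c : ℝ} (hc : 0 ≤ c)
    (h : ∑' i, ‖f i‖ ^ 2 ≤ c ^ 2) : ‖f‖ ≤ c := by
  have h2 := lp_norm_sq_eq_tsum f
  nlinarith [norm_nonneg f]

/-- Coordinate projection as a continuous linear map. -/
def lpProj (n : ℕ) : lp E 2 →L[ℂ] E n :=
  LinearMap.mkContinuous
    { toFun := fun f => f n
      map_add' := fun f g => by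
        show (f + g : ∀ i, E i) n = _
        rfl
      map_smul' := fun c f => by
        show (c • f : ∀ i, E i) n = _
        rfl }
    1 (fun f => by simpa using lp.norm_apply_le_norm two_ne_zero f n)

@[simp] lemma lpProj_apply (n : ℕ) (f : lp E 2) : lpProj n f = f n := rfl

lemma lpProj_norm_le (n : ℕ) : ‖(lpProj (E := E) n)‖ ≤ 1 :=
  LinearMap.mkContinuous_norm_le _ zero_le_one _

/-- Build a continuous linear map into `lp E 2` from a family of CLMs with a uniform
square-sum bound. -/
def toLpCLM (Φ : ∀ n, H →L[ℂ] E n) (c : ℝ)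
    (hbound : ∀ (h : H) (s : Finset ℕ), ∑ n ∈ s, ‖Φ n h‖ ^ 2 ≤ c ^ 2 * ‖h‖ ^ 2) :
    H →L[ℂ] lp E 2 :=
  have hmem : ∀ h : H, Memℓp (fun n => Φ n h) 2 := fun h => by
    apply memℓp_gen' (C := c ^ 2 * ‖h‖ ^ 2)
    intro s
    have h5 := hbound h s
    calc ∑ i ∈ s, ‖Φ i h‖ ^ (2:ℝ≥0∞).toReal = ∑ i ∈ s, ‖Φ i h‖ ^ 2 := by
          refine Finset.sum_congr rfl fun i _ => ?_
          rw [show (2 : ℝ≥0∞).toReal = ((2:ℕ):ℝ) by norm_num, Real.rpow_natCast]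
    _ ≤ c ^ 2 * ‖h‖ ^ 2 := h5
  LinearMap.mkContinuous
    { toFun := fun h => (⟨fun n => Φ n h, hmem h⟩ : lp E 2)
      map_add' := fun x y => by
        apply lp.ext
        funext n
        simp only [lp.coeFn_add, Pi.add_apply]
        exact map_add (Φ n) x y
      map_smul' := fun m x => by
        apply lp.ext
        funext n
        simp only [lp.coeFn_smul, Pi.smul_apply]
        exact map_smul (Φ n) m x }
    (|c|) (fun h => by
      apply lp_norm_le_of_sq (by positivity)
      have hsum : Summable fun n => ‖Φ n h‖ ^ 2 :=
        summable_of_sum_le (fun n => sq_nonneg _) (fun s => hbound h s)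
      have h6 : ∑' n, ‖Φ n h‖ ^ 2 ≤ c ^ 2 * ‖h‖ ^ 2 :=
        Summable.tsum_le_of_sum_le hsum (fun s => hbound h s)
      calc ∑' n, ‖(fun n => Φ n h) n‖ ^ 2 ≤ c ^ 2 * ‖h‖ ^ 2 := h6
      _ = (|c| * ‖h‖) ^ 2 := by rw [mul_pow, sq_abs])

@[simp] lemma toLpCLM_apply (Φ : ∀ n, H →L[ℂ] E n) (c : ℝ) (hbound) (h : H) (n : ℕ) :
    (toLpCLM Φ c hbound h : ∀ i, E i) n = Φ n h := rfl

end LpAux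

/-- Corollary 2.9: under (xxnxxn1), (qqn) and (cap), if both `T` and `T*` have unitary
asymptotes then `T` is similar to `U₀`. -/
theorem similar_to_U0_of_unitary_asymptotes
    {H : Type} [NormedAddCommGroup H] [InnerProductSpace ℂ H] [CompleteSpace H]
    [TopologicalSpace.SeparableSpace H]
    (K0 : ℕ → Type) [∀ n, NormedAddCommGroup (K0 n)] [∀ n, InnerProductSpace ℂ (K0 n)]
    [∀ n, CompleteSpace (K0 n)] [∀ n, TopologicalSpace.SeparableSpace (K0 n)]
    -- the unitaries `U_{0n}`, each reductive, with pairwise singular spectral measures: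
    (U0 : ∀ n, K0 n →L[ℂ] K0 n)
    (hU0 : ∀ n, IsUnitaryOp (U0 n))
    (hU0red : ∀ (n) (F : Submodule ℂ (K0 n)), IsClosed (F : Set (K0 n)) →
      (∀ x ∈ F, U0 n x ∈ F) → ∀ x ∈ F, ContinuousLinearMap.adjoint (U0 n) x ∈ F)
    (hsing : ∀ n k, n ≠ k → ∀ Z : K0 n →L[ℂ] K0 k, Z.comp (U0 n) = (U0 k).comp Z → Z = 0)
    (T : H →L[ℂ] H)
    -- the nonzero closed `T`-invariant subspaces `H_n`:
    (Hn : ℕ → Submodule ℂ H)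
    (hHcl : ∀ n, IsClosed ((Hn n : Set H)))
    (hHne : ∀ n, Hn n ≠ ⊥)
    (hTH : ∀ n, ∀ x ∈ Hn n, T x ∈ Hn n)
    -- `Vn n = ⋁_{k ≠ n} H_k`:
    (Vn : ℕ → Submodule ℂ H)
    (hVn : ∀ n, Vn n = (⨆ k ∈ {k : ℕ | k ≠ n}, Hn k).topologicalClosure)
    -- (main0):
    (hmain0 : ∀ n, Hn n ⊓ Vn n = ⊥ ∧ Hn n ⊔ Vn n = ⊤)
    -- (main1): the invertible intertwiners `X_n : H_n → K_{0n}`: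
    (X0 : ∀ n, ↥(Hn n) ≃L[ℂ] K0 n)
    (hX0 : ∀ (n) (x : ↥(Hn n)), X0 n ⟨T ↑x, hTH n ↑x x.2⟩ = U0 n (X0 n x))
    -- the skew projections `Q_n` onto `H_n` along `⋁_{k ≠ n} H_k`:
    (Q : ℕ → H →L[ℂ] H)
    (hQmem : ∀ n x, Q n x ∈ Hn n)
    (hQid : ∀ n, ∀ x ∈ Hn n, Q n x = x)
    (hQker : ∀ n, ∀ x ∈ Vn n, Q n x = 0)
    -- `U₀ = ⊕_n U_{0n}` acting on the Hilbert direct sum `K₀ = ⊕_n K_{0n} = lp K0 2`: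
    (Uz : lp K0 2 →L[ℂ] lp K0 2) (hUzU : IsUnitaryOp Uz)
    (hUz : ∀ (a : lp K0 2) (n : ℕ), (Uz a : ∀ i, K0 i) n = U0 n (a n))
    -- (xxnxxn1):
    (hXX : ∃ C : ℝ, ∀ n,
      ‖(X0 n : ↥(Hn n) →L[ℂ] K0 n)‖ * ‖((X0 n).symm : K0 n →L[ℂ] ↥(Hn n))‖ ≤ C)
    -- (qqn):
    (hQbd : ∃ C : ℝ, ∀ n, ‖Q n‖ ≤ C)
    -- (cap):
    (hcap : (⨅ n : ℕ, (⨆ k ∈ {k : ℕ | n ≤ k}, Hn k).topologicalClosure) = ⊥)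
    -- `T` and `T*` have unitary asymptotes:
    (hTasym : ∃ (K : Type) (_ : NormedAddCommGroup K) (_ : InnerProductSpace ℂ K)
      (_ : CompleteSpace K) (X : H →L[ℂ] K) (U : K →L[ℂ] K), IsUnitaryAsymptote T K X U)
    (hTadjasym : ∃ (K : Type) (_ : NormedAddCommGroup K) (_ : InnerProductSpace ℂ K)
      (_ : CompleteSpace K) (X : H →L[ℂ] K) (U : K →L[ℂ] K),
      IsUnitaryAsymptote (ContinuousLinearMap.adjoint T) K X U) :
    ∃ X : H ≃L[ℂ] lp K0 2, ∀ x : H, X (T x) = Uz (X x) := by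
  classical
  obtain ⟨cq0, hQbd⟩ := hQbd
  obtain ⟨CX0, hXX⟩ := hXX
  set cq : ℝ := max cq0 0 with hcq
  have hcq0 : 0 ≤ cq := le_max_right _ _
  have hQn : ∀ n, ‖Q n‖ ≤ cq := fun n => le_trans (hQbd n) (le_max_left _ _)
  set CX : ℝ := max CX0 0 with hCX
  have hCX0 : 0 ≤ CX := le_max_right _ _
  have hXXn : ∀ n, ‖(X0 n : ↥(Hn n) →L[ℂ] K0 n)‖ *
      ‖((X0 n).symm : K0 n →L[ℂ] ↥(Hn n))‖ ≤ CX := fun n =>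
    le_trans (hXX n) (le_max_left _ _)
  set c : ℕ → ℝ := fun n => ‖(X0 n : ↥(Hn n) →L[ℂ] K0 n)‖ with hcdef
  have hcpos : ∀ n, 0 < c n := by
    intro n
    obtain ⟨x, hxmem, hxne⟩ := Submodule.exists_mem_ne_zero_of_ne_bot (hHne n)
    set ξ : ↥(Hn n) := ⟨x, hxmem⟩ with hξ
    have hξne : ξ ≠ 0 := by
      intro hcon
      apply hxne
      have := congrArg (Subtype.val) hcon
      exact this
    have h1 : X0 n ξ ≠ 0 := by
      intro hcon
      apply hξne
      have := congrArg (X0 n).symm hcon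
      simpa using this
    have h2 : 0 < ‖X0 n ξ‖ := norm_pos_iff.mpr h1
    have h3 : ‖X0 n ξ‖ ≤ c n * ‖ξ‖ := by
      have := (X0 n : ↥(Hn n) →L[ℂ] K0 n).le_opNorm ξ
      simpa [hcdef] using this
    nlinarith [norm_nonneg ξ]
  have hcne : ∀ n, (c n : ℂ) ≠ 0 := fun n =>
    Complex.ofReal_ne_zero.mpr (ne_of_gt (hcpos n))
  -- The normalized intertwiners Yop n : H →L K0 n and Cop n : K0 n →L H
  set Yop : ∀ n, H →L[ℂ] K0 n := fun n =>
    ((c n : ℂ))⁻¹ • ((X0 n : ↥(Hn n) →L[ℂ] K0 n).comp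
      ((Q n).codRestrict (Hn n) (hQmem n))) with hYopdef
  set Cop : ∀ n, K0 n →L[ℂ] H := fun n =>
    (c n : ℂ) • ((Hn n).subtypeL.comp ((X0 n).symm : K0 n →L[ℂ] ↥(Hn n))) with hCopdef
  have hYapp : ∀ n h, Yop n h = ((c n : ℂ))⁻¹ • (X0 n ⟨Q n h, hQmem n h⟩) := fun n h => rfl
  have hCapp : ∀ n a, Cop n a = (c n : ℂ) • (((X0 n).symm a : ↥(Hn n)) : H) := fun n a => rfl
  have hCmem : ∀ n a, Cop n a ∈ Hn n := by
    intro n a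
    rw [hCapp]
    exact Submodule.smul_mem _ _ (Subtype.coe_prop _)
  -- norm bounds
  have hYbound : ∀ n h, ‖Yop n h‖ ≤ cq * ‖h‖ := by
    intro n h
    rw [hYapp, norm_smul]
    have e1 : ‖((c n : ℂ))⁻¹‖ = (c n)⁻¹ := by
      rw [norm_inv, Complex.norm_real, Real.norm_eq_abs, abs_of_pos (hcpos n)]
    rw [e1]
    have e2 : ‖(⟨Q n h, hQmem n h⟩ : ↥(Hn n))‖ = ‖Q n h‖ := rfl
    have h3 : ‖X0 n (⟨Q n h, hQmem n h⟩ : ↥(Hn n))‖ ≤ c n * ‖Q n h‖ := by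
      have := (X0 n : ↥(Hn n) →L[ℂ] K0 n).le_opNorm (⟨Q n h, hQmem n h⟩ : ↥(Hn n))
      rw [e2] at this
      simpa [hcdef] using this
    have h4 : ‖Q n h‖ ≤ cq * ‖h‖ :=
      le_trans ((Q n).le_opNorm h) (mul_le_mul_of_nonneg_right (hQn n) (norm_nonneg _))
    calc (c n)⁻¹ * ‖X0 n (⟨Q n h, hQmem n h⟩ : ↥(Hn n))‖
        ≤ (c n)⁻¹ * (c n * ‖Q n h‖) := by
          exact mul_le_mul_of_nonneg_left h3 (by positivity)
    _ = ‖Q n h‖ := by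
          rw [← mul_assoc, inv_mul_cancel₀ (ne_of_gt (hcpos n)), one_mul]
    _ ≤ cq * ‖h‖ := h4
  have hCbound : ∀ n a, ‖Cop n a‖ ≤ CX * ‖a‖ := by
    intro n a
    rw [hCapp, norm_smul]
    have e1 : ‖((c n : ℂ))‖ = c n := by
      rw [Complex.norm_real, Real.norm_eq_abs, abs_of_pos (hcpos n)]
    rw [e1]
    have e2 : ‖((((X0 n).symm a : ↥(Hn n))) : H)‖ = ‖(X0 n).symm a‖ := rfl
    have h3 : ‖(X0 n).symm a‖ ≤ ‖((X0 n).symm : K0 n →L[ℂ] ↥(Hn n))‖ * ‖a‖ :=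
      ((X0 n).symm : K0 n →L[ℂ] ↥(Hn n)).le_opNorm a
    calc c n * ‖((((X0 n).symm a : ↥(Hn n))) : H)‖
        = c n * ‖(X0 n).symm a‖ := by rw [e2]
    _ ≤ c n * (‖((X0 n).symm : K0 n →L[ℂ] ↥(Hn n))‖ * ‖a‖) :=
          mul_le_mul_of_nonneg_left h3 (le_of_lt (hcpos n))
    _ = (c n * ‖((X0 n).symm : K0 n →L[ℂ] ↥(Hn n))‖) * ‖a‖ := by ring
    _ ≤ CX * ‖a‖ := mul_le_mul_of_nonneg_right (hXXn n) (norm_nonneg _)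
  have hCopnorm : ∀ n, ‖Cop n‖ ≤ CX := fun n =>
    opNorm_le_bound _ hCX0 (hCbound n)
  -- Hn k ≤ Vn n for k ≠ n
  have hHV : ∀ k n, k ≠ n → Hn k ≤ Vn n := by
    intro k n hkn
    rw [hVn n]
    refine le_trans ?_ (Submodule.le_topologicalClosure _)
    exact le_iSup₂ (f := fun k (_ : k ∈ {k : ℕ | k ≠ n}) => Hn k) k hkn
  -- Q commutes with T
  have hdecomp : ∀ n x, x - Q n x ∈ Vn n := by
    intro n x
    have hx : x ∈ Hn n ⊔ Vn n := by rw [(hmain0 n).2]; trivial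
    obtain ⟨y, hy, z, hz, hyz⟩ := Submodule.mem_sup.mp hx
    have hQx : Q n x = y := by
      rw [← hyz, map_add, hQid n y hy, hQker n z hz, add_zero]
    rw [hQx, ← hyz]
    simpa using hz
  have hTV : ∀ n, ∀ v ∈ Vn n, T v ∈ Vn n := by
    intro n
    have hclosed : IsClosed ((Submodule.comap (T : H →ₗ[ℂ] H) (Vn n)) : Set H) := by
      have : IsClosed ((Vn n) : Set H) := by
        rw [hVn n]; exact Submodule.isClosed_topologicalClosure _
      exact this.preimage T.continuous
    have hle : (⨆ k ∈ {k : ℕ | k ≠ n}, Hn k) ≤ Submodule.comap (T : H →ₗ[ℂ] H) (Vn n) := by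
      refine iSup₂_le fun k hk => ?_
      intro x hx
      exact Submodule.mem_comap.mpr (hHV k n hk (hTH k x hx))
    have h2 : Vn n ≤ Submodule.comap (T : H →ₗ[ℂ] H) (Vn n) := by
      conv_lhs => rw [hVn n]
      exact Submodule.topologicalClosure_minimal _ hle hclosed
    intro v hv
    exact Submodule.mem_comap.mp (h2 hv)
  have hQT : ∀ n x, Q n (T x) = T (Q n x) := by
    intro n x
    have h1 : T x = T (Q n x) + T (x - Q n x) := by rw [← map_add]; congr 1; abel
    have h2 : Q n (T x) = Q n (T (Q n x)) + Q n (T (x - Q n x)) := by rw [h1, map_add]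
    rw [hQid n _ (hTH n _ (hQmem n x)), hQker n _ (hTV n _ (hdecomp n x)), add_zero] at h2
    exact h2
  -- intertwining relations
  have hYT : ∀ n h, Yop n (T h) = U0 n (Yop n h) := by
    intro n h
    rw [hYapp, hYapp]
    have e1 : (⟨Q n (T h), hQmem n (T h)⟩ : ↥(Hn n)) =
        ⟨T ↑(⟨Q n h, hQmem n h⟩ : ↥(Hn n)), hTH n _ (hQmem n h)⟩ := by
      apply Subtype.ext
      exact hQT n h
    rw [e1, hX0 n (⟨Q n h, hQmem n h⟩ : ↥(Hn n)), map_smul]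
  have hTC : ∀ n a, T (Cop n a) = Cop n (U0 n a) := by
    intro n a
    rw [hCapp, hCapp, map_smul]
    congr 1
    have h1 := hX0 n ((X0 n).symm a)
    rw [(X0 n).apply_symm_apply] at h1
    have h2 : (⟨T ↑((X0 n).symm a), hTH n _ (Subtype.coe_prop _)⟩ : ↥(Hn n)) =
        (X0 n).symm (U0 n a) := by
      apply (X0 n).injective
      rw [h1, (X0 n).apply_symm_apply]
    calc T ↑((X0 n).symm a)
        = ↑((⟨T ↑((X0 n).symm a), hTH n _ (Subtype.coe_prop _)⟩ : ↥(Hn n))) := rfl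
    _ = ↑((X0 n).symm (U0 n a)) := by rw [h2]
  -- the composition identities
  have hYCeq : ∀ n a, Yop n (Cop n a) = a := by
    intro n a
    rw [hYapp]
    have hmem : Cop n a ∈ Hn n := hCmem n a
    have h1 : Q n (Cop n a) = Cop n a := hQid n _ hmem
    have e1 : (⟨Q n (Cop n a), hQmem n _⟩ : ↥(Hn n)) =
        (c n : ℂ) • ((X0 n).symm a) := by
      apply Subtype.ext
      show Q n (Cop n a) = (((c n : ℂ) • ((X0 n).symm a) : ↥(Hn n)) : H)
      rw [h1, hCapp n a]
      rfl
    rw [e1, map_smul, (X0 n).apply_symm_apply, smul_smul,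
      inv_mul_cancel₀ (hcne n), one_smul]
  have hYCne : ∀ n k, n ≠ k → ∀ a, Yop k (Cop n a) = 0 := by
    intro n k hnk a
    rw [hYapp]
    have hmem : Cop n a ∈ Vn k := hHV n k hnk (hCmem n a)
    have h1 : Q k (Cop n a) = 0 := hQker k _ hmem
    have e1 : (⟨Q k (Cop n a), hQmem k _⟩ : ↥(Hn k)) = 0 := by
      apply Subtype.ext
      show Q k (Cop n a) = ((0 : ↥(Hn k)) : H)
      rw [h1]
      rfl
    rw [e1, map_zero, smul_zero]
  have hQY : ∀ n h, Cop n (Yop n h) = Q n h := by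
    intro n h
    rw [hYapp, map_smul, hCapp, (X0 n).symm_apply_apply, smul_smul,
      inv_mul_cancel₀ (hcne n), one_smul]
  -- density of the span of the union of the Hn
  have htop : (⨆ k, Hn k).topologicalClosure = ⊤ := by
    rw [eq_top_iff, ← (hmain0 0).2]
    refine sup_le ?_ ?_
    · exact le_trans (le_iSup Hn 0) (Submodule.le_topologicalClosure _)
    · rw [hVn 0]
      refine Submodule.topologicalClosure_mono ?_
      exact iSup₂_le fun k _ => le_iSup Hn k
  -- obtain the unitary asymptote of T
  obtain ⟨K, iK1, iK2, iK3, X, U, hUA⟩ := hTasym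
  letI := iK1; letI := iK2; letI := iK3
  obtain ⟨hUuni, hXT, -, huniv⟩ := hUA
  -- obtain the unitary asymptote of T*
  obtain ⟨K', iK1', iK2', iK3', X', U', hUA'⟩ := hTadjasym
  letI := iK1'; letI := iK2'; letI := iK3'
  obtain ⟨hUuni', hXT', -, huniv'⟩ := hUA'
  -- intertwiners from the asymptote of T
  have hYint : ∀ n, (Yop n).comp T = (U0 n).comp (Yop n) := by
    intro n; ext h; exact hYT n h
  have hZex : ∀ n, ∃! Z : K →L[ℂ] K0 n,
      Z.comp U = (U0 n).comp Z ∧ Yop n = Z.comp X :=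
    fun n => huniv (K0 n) (U0 n) (Yop n) (hU0 n) (hYint n)
  set Z : ∀ n, K →L[ℂ] K0 n := fun n => (hZex n).choose with hZdef
  have hZU : ∀ n, (Z n).comp U = (U0 n).comp (Z n) := fun n => (hZex n).choose_spec.1.1
  have hZX : ∀ n, Yop n = (Z n).comp X := fun n => (hZex n).choose_spec.1.2
  have hZUp : ∀ n k, Z n (U k) = U0 n (Z n k) := by
    intro n k
    have := DFunLike.congr_fun (hZU n) k
    simpa using this
  have hZXp : ∀ n h, Yop n h = Z n (X h) := by
    intro n h
    have := DFunLike.congr_fun (hZX n) h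
    simpa using this
  -- orthogonality of the Z n
  have hadjZU : ∀ n y, ContinuousLinearMap.adjoint (Z n) (U0 n y) =
      U (ContinuousLinearMap.adjoint (Z n) y) := by
    intro n y
    have hadj : (ContinuousLinearMap.adjoint U).comp (ContinuousLinearMap.adjoint (Z n)) =
        (ContinuousLinearMap.adjoint (Z n)).comp (ContinuousLinearMap.adjoint (U0 n)) := by
      rw [← ContinuousLinearMap.adjoint_comp, ← ContinuousLinearMap.adjoint_comp, hZU n]
    have hadjp : ∀ x, ContinuousLinearMap.adjoint U (ContinuousLinearMap.adjoint (Z n) x) =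
        ContinuousLinearMap.adjoint (Z n) (ContinuousLinearMap.adjoint (U0 n) x) := by
      intro x
      have := DFunLike.congr_fun hadj x
      simpa using this
    have h1 := hadjp (U0 n y)
    rw [(hU0 n).adjoint_apply_self] at h1
    calc ContinuousLinearMap.adjoint (Z n) (U0 n y)
        = U (ContinuousLinearMap.adjoint U (ContinuousLinearMap.adjoint (Z n) (U0 n y))) :=
          (hUuni.self_apply_adjoint _).symm
    _ = U (ContinuousLinearMap.adjoint (Z n) y) := by rw [h1]
  have hZorto : ∀ n k, n ≠ k → (Z k).comp (ContinuousLinearMap.adjoint (Z n)) = 0 := by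
    intro n k hnk
    refine hsing n k hnk _ ?_
    ext y
    show Z k (ContinuousLinearMap.adjoint (Z n) (U0 n y)) = U0 k (Z k ((ContinuousLinearMap.adjoint (Z n)) y))
    rw [hadjZU n y, hZUp k]
  -- uniform bound on ‖Z n‖
  have hZbd : ∃ M, 0 ≤ M ∧ ∀ n, ‖Z n‖ ≤ M := by
    apply weight_bound (fun n => ‖Z n‖) (fun n => norm_nonneg _)
    intro w hw hwsum
    have hwtsum : 0 ≤ ∑' n, w n ^ 2 := tsum_nonneg (fun n => sq_nonneg _)
    set cw : ℝ := Real.sqrt (∑' n, w n ^ 2) * cq with hcw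
    have hcwsq : cw ^ 2 = (∑' n, w n ^ 2) * cq ^ 2 := by
      rw [hcw, mul_pow, Real.sq_sqrt hwtsum]
    have hbound : ∀ (h : H) (s : Finset ℕ),
        ∑ n ∈ s, ‖((w n : ℂ) • Yop n) h‖ ^ 2 ≤ cw ^ 2 * ‖h‖ ^ 2 := by
      intro h s
      have h1 : ∀ n, ‖((w n : ℂ) • Yop n) h‖ ^ 2 ≤ w n ^ 2 * (cq ^ 2 * ‖h‖ ^ 2) := by
        intro n
        have e1 : ‖((w n : ℂ) • Yop n) h‖ = w n * ‖Yop n h‖ := by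
          show ‖(w n : ℂ) • (Yop n h)‖ = _
          rw [norm_smul, Complex.norm_real, Real.norm_eq_abs, abs_of_nonneg (hw n)]
        rw [e1, mul_pow]
        have h2 : ‖Yop n h‖ ^ 2 ≤ cq ^ 2 * ‖h‖ ^ 2 := by
          have := hYbound n h
          nlinarith [norm_nonneg (Yop n h), norm_nonneg h]
        exact mul_le_mul_of_nonneg_left h2 (sq_nonneg _)
      calc ∑ n ∈ s, ‖((w n : ℂ) • Yop n) h‖ ^ 2
          ≤ ∑ n ∈ s, w n ^ 2 * (cq ^ 2 * ‖h‖ ^ 2) := Finset.sum_le_sum fun n _ => h1 n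
      _ = (∑ n ∈ s, w n ^ 2) * (cq ^ 2 * ‖h‖ ^ 2) := by rw [Finset.sum_mul]
      _ ≤ (∑' n, w n ^ 2) * (cq ^ 2 * ‖h‖ ^ 2) := by
            refine mul_le_mul_of_nonneg_right ?_ (by positivity)
            exact Summable.sum_le_tsum s (fun n _ => sq_nonneg _) hwsum
      _ = cw ^ 2 * ‖h‖ ^ 2 := by rw [hcwsq]; ring
    set Yw : H →L[ℂ] lp K0 2 := toLpCLM (fun n => (w n : ℂ) • Yop n) cw hbound with hYw
    have hYwapp : ∀ h n, (Yw h : ∀ i, K0 i) n = (w n : ℂ) • Yop n h := fun h n => rfl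
    have hYwT : Yw.comp T = Uz.comp Yw := by
      ext h n
      show (Yw (T h) : ∀ i, K0 i) n = (Uz (Yw h) : ∀ i, K0 i) n
      rw [hYwapp, hUz, hYwapp]
      show (w n : ℂ) • (Yop n (T h)) = U0 n ((w n : ℂ) • (Yop n h))
      rw [hYT n h, map_smul]
    obtain ⟨Zw, ⟨hZwU, hZwX⟩, -⟩ := huniv (lp K0 2) Uz Yw hUzU hYwT
    refine ⟨‖Zw‖, fun n => ?_⟩
    -- identify the n-th component of Zw
    have hwint : ((w n : ℂ) • Yop n).comp T = (U0 n).comp ((w n : ℂ) • Yop n) := by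
      ext h
      show (w n : ℂ) • (Yop n (T h)) = U0 n ((w n : ℂ) • (Yop n h))
      rw [hYT n h, map_smul]
    have hwZex := huniv (K0 n) (U0 n) ((w n : ℂ) • Yop n) (hU0 n) hwint
    have hP1 : ((lpProj n).comp Zw).comp U = (U0 n).comp ((lpProj n).comp Zw) ∧
        (w n : ℂ) • Yop n = ((lpProj n).comp Zw).comp X := by
      constructor
      · ext k
        show (Zw (U k) : ∀ i, K0 i) n = U0 n ((Zw k : ∀ i, K0 i) n)
        have h5 : Zw (U k) = Uz (Zw k) := by
          have := DFunLike.congr_fun hZwU k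
          simpa using this
        rw [h5, hUz]
      · ext h
        show (w n : ℂ) • (Yop n h) = (Zw (X h) : ∀ i, K0 i) n
        have h5 : Yw h = Zw (X h) := by
          have := DFunLike.congr_fun hZwX h
          simpa using this
        rw [← h5, hYwapp]
    have hP2 : ((w n : ℂ) • Z n).comp U = (U0 n).comp ((w n : ℂ) • Z n) ∧
        (w n : ℂ) • Yop n = ((w n : ℂ) • Z n).comp X := by
      constructor
      · ext k
        show (w n : ℂ) • (Z n (U k)) = U0 n ((w n : ℂ) • (Z n k))
        rw [hZUp n k, map_smul]
      · ext h
        show (w n : ℂ) • (Yop n h) = (w n : ℂ) • (Z n (X h))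
        rw [hZXp n h]
    have heq := hwZex.unique hP1 hP2
    have hnorm : ‖(w n : ℂ) • Z n‖ = w n * ‖Z n‖ := by
      rw [norm_smul ((w n : ℂ)) (Z n), Complex.norm_real, Real.norm_eq_abs,
        abs_of_nonneg (hw n)]
    calc w n * ‖Z n‖ = ‖(w n : ℂ) • Z n‖ := hnorm.symm
    _ = ‖(lpProj n).comp Zw‖ := by rw [← heq]
    _ ≤ ‖(lpProj (E := K0) n)‖ * ‖Zw‖ := opNorm_comp_le _ _
    _ ≤ 1 * ‖Zw‖ := mul_le_mul_of_nonneg_right (lpProj_norm_le n) (norm_nonneg _)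
    _ = ‖Zw‖ := one_mul _
  obtain ⟨MZ, hMZ0, hMZ⟩ := hZbd
  -- intertwiners from the asymptote of T*
  have hTCcomp : ∀ n, T.comp (Cop n) = (Cop n).comp (U0 n) := by
    intro n; ext a; exact hTC n a
  have hCadj : ∀ n, (ContinuousLinearMap.adjoint (Cop n)).comp (ContinuousLinearMap.adjoint T) =
      (ContinuousLinearMap.adjoint (U0 n)).comp (ContinuousLinearMap.adjoint (Cop n)) := by
    intro n
    rw [← ContinuousLinearMap.adjoint_comp, ← ContinuousLinearMap.adjoint_comp, hTCcomp n]
  have hZ'ex : ∀ n, ∃! Z' : K' →L[ℂ] K0 n,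
      Z'.comp U' = (ContinuousLinearMap.adjoint (U0 n)).comp Z' ∧
      ContinuousLinearMap.adjoint (Cop n) = Z'.comp X' :=
    fun n => huniv' (K0 n) (ContinuousLinearMap.adjoint (U0 n))
      (ContinuousLinearMap.adjoint (Cop n)) (hU0 n).adjoint_unitary (hCadj n)
  set Z' : ∀ n, K' →L[ℂ] K0 n := fun n => (hZ'ex n).choose with hZ'def
  have hZ'U : ∀ n, (Z' n).comp U' = (ContinuousLinearMap.adjoint (U0 n)).comp (Z' n) :=
    fun n => (hZ'ex n).choose_spec.1.1
  have hZ'X : ∀ n, ContinuousLinearMap.adjoint (Cop n) = (Z' n).comp X' :=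
    fun n => (hZ'ex n).choose_spec.1.2
  have hZ'Up : ∀ n k, Z' n (U' k) = ContinuousLinearMap.adjoint (U0 n) (Z' n k) := by
    intro n k
    have := DFunLike.congr_fun (hZ'U n) k
    simpa using this
  have hCopeq : ∀ n, Cop n = (ContinuousLinearMap.adjoint X').comp
      (ContinuousLinearMap.adjoint (Z' n)) := by
    intro n
    have h1 := congrArg (fun A => ContinuousLinearMap.adjoint A) (hZ'X n)
    simp only [ContinuousLinearMap.adjoint_comp, ContinuousLinearMap.adjoint_adjoint] at h1
    exact h1
  -- orthogonality of the Z' n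
  have hadjZ'U0 : ∀ n y, ContinuousLinearMap.adjoint (Z' n) (U0 n y) =
      ContinuousLinearMap.adjoint U' (ContinuousLinearMap.adjoint (Z' n) y) := by
    intro n y
    have hadj : (ContinuousLinearMap.adjoint U').comp (ContinuousLinearMap.adjoint (Z' n)) =
        (ContinuousLinearMap.adjoint (Z' n)).comp (U0 n) := by
      rw [← ContinuousLinearMap.adjoint_comp, hZ'U n, ContinuousLinearMap.adjoint_comp,
        ContinuousLinearMap.adjoint_adjoint]
    have := DFunLike.congr_fun hadj y
    simpa using this.symm
  have hZ'adjU' : ∀ k m, Z' k (ContinuousLinearMap.adjoint U' m) = U0 k (Z' k m) := by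
    intro k m
    have h1 := hZ'Up k (ContinuousLinearMap.adjoint U' m)
    rw [hUuni'.self_apply_adjoint] at h1
    have h2 := congrArg (U0 k) h1
    rw [(hU0 k).self_apply_adjoint] at h2
    exact h2.symm
  have hZ'orto : ∀ n k, n ≠ k → (Z' k).comp (ContinuousLinearMap.adjoint (Z' n)) = 0 := by
    intro n k hnk
    refine hsing n k hnk _ ?_
    ext y
    show Z' k (ContinuousLinearMap.adjoint (Z' n) (U0 n y)) =
      U0 k (Z' k (ContinuousLinearMap.adjoint (Z' n) y))
    rw [hadjZ'U0 n y, hZ'adjU' k]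
  -- adjoint of Uz acts componentwise
  have hUzsingle : ∀ (n : ℕ) (x : K0 n), Uz (lp.single 2 n x) = lp.single 2 n (U0 n x) := by
    intro n x
    apply lp.ext
    funext k
    rw [hUz]
    by_cases hk : k = n
    · subst hk
      rw [lp.single_apply_self, lp.single_apply_self]
    · rw [lp.single_apply_ne 2 n _ hk, lp.single_apply_ne 2 n _ hk, map_zero]
  have hUzadj : ∀ (a : lp K0 2) (n : ℕ),
      ((ContinuousLinearMap.adjoint Uz) a : ∀ i, K0 i) n =
      ContinuousLinearMap.adjoint (U0 n) (a n) := by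
    intro a n
    apply ext_inner_left ℂ
    intro x
    calc ⟪x, ((ContinuousLinearMap.adjoint Uz) a : ∀ i, K0 i) n⟫_ℂ
        = ⟪lp.single 2 n x, (ContinuousLinearMap.adjoint Uz) a⟫_ℂ :=
          (lp.inner_single_left n x _).symm
    _ = ⟪Uz (lp.single 2 n x), a⟫_ℂ := ContinuousLinearMap.adjoint_inner_right Uz _ a
    _ = ⟪lp.single 2 n (U0 n x), a⟫_ℂ := by rw [hUzsingle]
    _ = ⟪U0 n x, a n⟫_ℂ := lp.inner_single_left n (U0 n x) a
    _ = ⟪x, ContinuousLinearMap.adjoint (U0 n) (a n)⟫_ℂ :=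
          (ContinuousLinearMap.adjoint_inner_right (U0 n) x (a n)).symm
  -- uniform bound on ‖Z' n‖
  have hadjCbound : ∀ n (x : H), ‖ContinuousLinearMap.adjoint (Cop n) x‖ ≤ CX * ‖x‖ := by
    intro n x
    calc ‖ContinuousLinearMap.adjoint (Cop n) x‖
        ≤ ‖ContinuousLinearMap.adjoint (Cop n)‖ * ‖x‖ := le_opNorm _ _
    _ = ‖Cop n‖ * ‖x‖ := by
          rw [LinearIsometryEquiv.norm_map (ContinuousLinearMap.adjoint) (Cop n)]
    _ ≤ CX * ‖x‖ := mul_le_mul_of_nonneg_right (hCopnorm n) (norm_nonneg _)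
  have hZ'bd : ∃ M, 0 ≤ M ∧ ∀ n, ‖Z' n‖ ≤ M := by
    apply weight_bound (fun n => ‖Z' n‖) (fun n => norm_nonneg _)
    intro w hw hwsum
    have hwtsum : 0 ≤ ∑' n, w n ^ 2 := tsum_nonneg (fun n => sq_nonneg _)
    set cw : ℝ := Real.sqrt (∑' n, w n ^ 2) * CX with hcw
    have hcwsq : cw ^ 2 = (∑' n, w n ^ 2) * CX ^ 2 := by
      rw [hcw, mul_pow, Real.sq_sqrt hwtsum]
    have hbound : ∀ (h : H) (s : Finset ℕ),
        ∑ n ∈ s, ‖((w n : ℂ) • ContinuousLinearMap.adjoint (Cop n)) h‖ ^ 2 ≤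
          cw ^ 2 * ‖h‖ ^ 2 := by
      intro h s
      have h1 : ∀ n, ‖((w n : ℂ) • ContinuousLinearMap.adjoint (Cop n)) h‖ ^ 2 ≤
          w n ^ 2 * (CX ^ 2 * ‖h‖ ^ 2) := by
        intro n
        have e1 : ‖((w n : ℂ) • ContinuousLinearMap.adjoint (Cop n)) h‖ =
            w n * ‖ContinuousLinearMap.adjoint (Cop n) h‖ := by
          show ‖(w n : ℂ) • (ContinuousLinearMap.adjoint (Cop n) h)‖ = _
          rw [norm_smul, Complex.norm_real, Real.norm_eq_abs, abs_of_nonneg (hw n)]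
        rw [e1, mul_pow]
        have h2 : ‖ContinuousLinearMap.adjoint (Cop n) h‖ ^ 2 ≤ CX ^ 2 * ‖h‖ ^ 2 := by
          have := hadjCbound n h
          nlinarith [norm_nonneg (ContinuousLinearMap.adjoint (Cop n) h), norm_nonneg h]
        exact mul_le_mul_of_nonneg_left h2 (sq_nonneg _)
      calc ∑ n ∈ s, ‖((w n : ℂ) • ContinuousLinearMap.adjoint (Cop n)) h‖ ^ 2
          ≤ ∑ n ∈ s, w n ^ 2 * (CX ^ 2 * ‖h‖ ^ 2) := Finset.sum_le_sum fun n _ => h1 n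
      _ = (∑ n ∈ s, w n ^ 2) * (CX ^ 2 * ‖h‖ ^ 2) := by rw [Finset.sum_mul]
      _ ≤ (∑' n, w n ^ 2) * (CX ^ 2 * ‖h‖ ^ 2) := by
            refine mul_le_mul_of_nonneg_right ?_ (by positivity)
            exact Summable.sum_le_tsum s (fun n _ => sq_nonneg _) hwsum
      _ = cw ^ 2 * ‖h‖ ^ 2 := by rw [hcwsq]; ring
    set Yw : H →L[ℂ] lp K0 2 :=
      toLpCLM (fun n => (w n : ℂ) • ContinuousLinearMap.adjoint (Cop n)) cw hbound with hYw
    have hYwapp : ∀ h n, (Yw h : ∀ i, K0 i) n =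
        (w n : ℂ) • ContinuousLinearMap.adjoint (Cop n) h := fun h n => rfl
    have hCadjp : ∀ n h, ContinuousLinearMap.adjoint (Cop n) (ContinuousLinearMap.adjoint T h) =
        ContinuousLinearMap.adjoint (U0 n) (ContinuousLinearMap.adjoint (Cop n) h) := by
      intro n h
      have := DFunLike.congr_fun (hCadj n) h
      simpa using this
    have hYwT : Yw.comp (ContinuousLinearMap.adjoint T) = (ContinuousLinearMap.adjoint Uz).comp Yw := by
      ext h n
      show (Yw (ContinuousLinearMap.adjoint T h) : ∀ i, K0 i) n =
        ((ContinuousLinearMap.adjoint Uz) (Yw h) : ∀ i, K0 i) n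
      rw [hYwapp, hUzadj, hYwapp]
      show (w n : ℂ) • (ContinuousLinearMap.adjoint (Cop n) (ContinuousLinearMap.adjoint T h)) =
        ContinuousLinearMap.adjoint (U0 n) ((w n : ℂ) • (ContinuousLinearMap.adjoint (Cop n) h))
      rw [hCadjp n h, (ContinuousLinearMap.adjoint (U0 n)).map_smul]
    obtain ⟨Zw, ⟨hZwU, hZwX⟩, -⟩ := huniv' (lp K0 2) (ContinuousLinearMap.adjoint Uz) Yw
      hUzU.adjoint_unitary hYwT
    refine ⟨‖Zw‖, fun n => ?_⟩
    have hwint : ((w n : ℂ) • ContinuousLinearMap.adjoint (Cop n)).comp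
        (ContinuousLinearMap.adjoint T) = (ContinuousLinearMap.adjoint (U0 n)).comp
        ((w n : ℂ) • ContinuousLinearMap.adjoint (Cop n)) := by
      ext h
      show (w n : ℂ) • (ContinuousLinearMap.adjoint (Cop n) (ContinuousLinearMap.adjoint T h)) =
        ContinuousLinearMap.adjoint (U0 n) ((w n : ℂ) • (ContinuousLinearMap.adjoint (Cop n) h))
      rw [hCadjp n h, (ContinuousLinearMap.adjoint (U0 n)).map_smul]
    have hwZex := huniv' (K0 n) (ContinuousLinearMap.adjoint (U0 n))
      ((w n : ℂ) • ContinuousLinearMap.adjoint (Cop n)) (hU0 n).adjoint_unitary hwint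
    have hP1 : ((lpProj n).comp Zw).comp U' =
        (ContinuousLinearMap.adjoint (U0 n)).comp ((lpProj n).comp Zw) ∧
        (w n : ℂ) • ContinuousLinearMap.adjoint (Cop n) = ((lpProj n).comp Zw).comp X' := by
      constructor
      · ext k
        show (Zw (U' k) : ∀ i, K0 i) n = ContinuousLinearMap.adjoint (U0 n) ((Zw k : ∀ i, K0 i) n)
        have h5 : Zw (U' k) = (ContinuousLinearMap.adjoint Uz) (Zw k) := by
          have := DFunLike.congr_fun hZwU k
          simpa using this
        rw [h5, hUzadj]
      · ext h
        show (w n : ℂ) • (ContinuousLinearMap.adjoint (Cop n) h) = (Zw (X' h) : ∀ i, K0 i) n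
        have h5 : Yw h = Zw (X' h) := by
          have := DFunLike.congr_fun hZwX h
          simpa using this
        rw [← h5, hYwapp]
    have hP2 : ((w n : ℂ) • Z' n).comp U' =
        (ContinuousLinearMap.adjoint (U0 n)).comp ((w n : ℂ) • Z' n) ∧
        (w n : ℂ) • ContinuousLinearMap.adjoint (Cop n) = ((w n : ℂ) • Z' n).comp X' := by
      constructor
      · ext k
        show (w n : ℂ) • (Z' n (U' k)) = ContinuousLinearMap.adjoint (U0 n) ((w n : ℂ) • (Z' n k))
        rw [hZ'Up n k, map_smul]
      · ext h
        show (w n : ℂ) • (ContinuousLinearMap.adjoint (Cop n) h) = (w n : ℂ) • (Z' n (X' h))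
        have h5 : ContinuousLinearMap.adjoint (Cop n) h = Z' n (X' h) := by
          have := DFunLike.congr_fun (hZ'X n) h
          simpa using this
        rw [h5]
    have heq := hwZex.unique hP1 hP2
    have hnorm : ‖(w n : ℂ) • Z' n‖ = w n * ‖Z' n‖ := by
      rw [norm_smul ((w n : ℂ)) (Z' n), Complex.norm_real, Real.norm_eq_abs,
        abs_of_nonneg (hw n)]
    calc w n * ‖Z' n‖ = ‖(w n : ℂ) • Z' n‖ := hnorm.symm
    _ = ‖(lpProj n).comp Zw‖ := by rw [← heq]
    _ ≤ ‖(lpProj (E := K0) n)‖ * ‖Zw‖ := opNorm_comp_le _ _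
    _ ≤ 1 * ‖Zw‖ := mul_le_mul_of_nonneg_right (lpProj_norm_le n) (norm_nonneg _)
    _ = ‖Zw‖ := one_mul _
  obtain ⟨MZ', hMZ'0, hMZ'⟩ := hZ'bd
  -- Xhat : H →L lp K0 2
  have hXhatbound : ∀ (h : H) (s : Finset ℕ),
      ∑ n ∈ s, ‖Yop n h‖ ^ 2 ≤ (MZ * ‖X‖) ^ 2 * ‖h‖ ^ 2 := by
    intro h s
    have h1 : ∀ n, ‖Yop n h‖ ^ 2 = ‖Z n (X h)‖ ^ 2 := fun n => by rw [hZXp n h]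
    calc ∑ n ∈ s, ‖Yop n h‖ ^ 2 = ∑ n ∈ s, ‖Z n (X h)‖ ^ 2 :=
          Finset.sum_congr rfl fun n _ => h1 n
    _ ≤ MZ ^ 2 * ‖X h‖ ^ 2 := sq_sum_bound Z MZ hMZ hZorto (X h) s
    _ ≤ MZ ^ 2 * (‖X‖ * ‖h‖) ^ 2 := by
          refine mul_le_mul_of_nonneg_left ?_ (sq_nonneg _)
          have := X.le_opNorm h
          nlinarith [norm_nonneg (X h), norm_nonneg h, norm_nonneg X]
    _ = (MZ * ‖X‖) ^ 2 * ‖h‖ ^ 2 := by ring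
  set Xhat : H →L[ℂ] lp K0 2 := toLpCLM Yop (MZ * ‖X‖) hXhatbound with hXhatdef
  have hXhatapp : ∀ h n, (Xhat h : ∀ i, K0 i) n = Yop n h := fun h n => rfl
  -- Yhat : lp K0 2 →L H
  set v : lp K0 2 → ℕ → K' := fun a n => ContinuousLinearMap.adjoint (Z' n) (a n) with hvdef
  have hv_orth : ∀ (a b : lp K0 2), ∀ n m, n ≠ m → ⟪v a n, v b m⟫_ℂ = 0 := by
    intro a b n m hnm
    have h1 : ⟪v a n, v b m⟫_ℂ = ⟪Z' m (v a n), b m⟫_ℂ :=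
      ContinuousLinearMap.adjoint_inner_right (Z' m) (v a n) (b m)
    have h2 : Z' m (v a n) = 0 := by
      have h3 := hZ'orto n m hnm
      calc Z' m (v a n) = ((Z' m).comp (ContinuousLinearMap.adjoint (Z' n))) (a n) := rfl
      _ = 0 := by rw [h3]; rfl
    rw [h1, h2, inner_zero_left]
  have hv_normle : ∀ (a : lp K0 2) n, ‖v a n‖ ≤ MZ' * ‖a n‖ := by
    intro a n
    calc ‖v a n‖ ≤ ‖ContinuousLinearMap.adjoint (Z' n)‖ * ‖a n‖ := le_opNorm _ _
    _ = ‖Z' n‖ * ‖a n‖ := by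
          rw [LinearIsometryEquiv.norm_map (ContinuousLinearMap.adjoint) (Z' n)]
    _ ≤ MZ' * ‖a n‖ := mul_le_mul_of_nonneg_right (hMZ' n) (norm_nonneg _)
  have hv_sqle : ∀ (a : lp K0 2) n, ‖v a n‖ ^ 2 ≤ MZ' ^ 2 * ‖a n‖ ^ 2 := by
    intro a n
    have := hv_normle a n
    nlinarith [norm_nonneg (v a n), norm_nonneg (a n)]
  have hv_sumsq : ∀ a : lp K0 2, Summable fun n => ‖v a n‖ ^ 2 := by
    intro a
    refine Summable.of_nonneg_of_le (fun n => sq_nonneg _) (fun n => hv_sqle a n) ?_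
    exact (lp_summable_norm_sq a).mul_left _
  have hv_summable : ∀ a : lp K0 2, Summable (v a) := fun a =>
    summable_of_orthogonal (hv_orth a a) (hv_sumsq a)
  have hv_sqbound : ∀ (a : lp K0 2) (s : Finset ℕ),
      ∑ n ∈ s, ‖v a n‖ ^ 2 ≤ (MZ' * ‖a‖) ^ 2 := by
    intro a s
    calc ∑ n ∈ s, ‖v a n‖ ^ 2 ≤ ∑ n ∈ s, MZ' ^ 2 * ‖a n‖ ^ 2 :=
          Finset.sum_le_sum fun n _ => hv_sqle a n
    _ = MZ' ^ 2 * ∑ n ∈ s, ‖a n‖ ^ 2 := by rw [Finset.mul_sum]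
    _ ≤ MZ' ^ 2 * ∑' n, ‖a n‖ ^ 2 := by
          refine mul_le_mul_of_nonneg_left ?_ (sq_nonneg _)
          exact Summable.sum_le_tsum s (fun n _ => sq_nonneg _) (lp_summable_norm_sq a)
    _ = MZ' ^ 2 * ‖a‖ ^ 2 := by rw [lp_norm_sq_eq_tsum a]
    _ = (MZ' * ‖a‖) ^ 2 := by ring
  have hv_tsum_norm : ∀ a : lp K0 2, ‖∑' n, v a n‖ ≤ MZ' * ‖a‖ := by
    intro a
    exact norm_tsum_le_of_orthogonal (hv_orth a a) (hv_sumsq a) (hv_sqbound a)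
      (by positivity)
  set Yhat : lp K0 2 →L[ℂ] H := LinearMap.mkContinuous
    { toFun := fun a => ContinuousLinearMap.adjoint X' (∑' n, v a n)
      map_add' := fun a b => by
        have e1 : v (a + b) = fun n => v a n + v b n := by
          funext n
          have e2 : ((a + b : lp K0 2) : ∀ i, K0 i) n = a n + b n := rfl
          show ContinuousLinearMap.adjoint (Z' n) ((a + b : lp K0 2) n) = v a n + v b n
          rw [e2, map_add]
        simp only [e1]
        rw [Summable.tsum_add (hv_summable a) (hv_summable b), map_add]
      map_smul' := fun m a => by
        have e1 : v (m • a) = fun n => m • v a n := by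
          funext n
          have e2 : ((m • a : lp K0 2) : ∀ i, K0 i) n = m • a n := rfl
          show ContinuousLinearMap.adjoint (Z' n) ((m • a : lp K0 2) n) = m • v a n
          rw [e2, map_smul]
        simp only [e1]
        rw [Summable.tsum_const_smul m (hv_summable a),
          (ContinuousLinearMap.adjoint X').map_smul]
        rfl }
    (‖X'‖ * MZ') (fun a => by
      show ‖ContinuousLinearMap.adjoint X' (∑' n, v a n)‖ ≤ ‖X'‖ * MZ' * ‖a‖
      calc ‖ContinuousLinearMap.adjoint X' (∑' n, v a n)‖
          ≤ ‖ContinuousLinearMap.adjoint X'‖ * ‖∑' n, v a n‖ := le_opNorm _ _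
      _ = ‖X'‖ * ‖∑' n, v a n‖ := by
            rw [LinearIsometryEquiv.norm_map (ContinuousLinearMap.adjoint) X']
      _ ≤ ‖X'‖ * (MZ' * ‖a‖) :=
            mul_le_mul_of_nonneg_left (hv_tsum_norm a) (norm_nonneg _)
      _ = ‖X'‖ * MZ' * ‖a‖ := by ring) with hYhatdef
  have hYhatapp : ∀ a : lp K0 2, Yhat a = ContinuousLinearMap.adjoint X' (∑' n, v a n) :=
    fun a => rfl
  have hYhatC : ∀ a : lp K0 2, Yhat a = ∑' n, Cop n (a n) := by
    intro a
    rw [hYhatapp, ContinuousLinearMap.map_tsum _ (hv_summable a)]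
    refine tsum_congr fun n => ?_
    rw [hCopeq n]
    rfl
  have hCsummable : ∀ a : lp K0 2, Summable fun n => Cop n (a n) := by
    intro a
    have h1 : (fun n => Cop n (a n)) = fun n => ContinuousLinearMap.adjoint X' (v a n) := by
      funext n
      rw [hCopeq n]
      rfl
    rw [h1]
    exact (hv_summable a).mapL _
  -- the intertwining identity
  have hXhatT : ∀ x : H, Xhat (T x) = Uz (Xhat x) := by
    intro x
    apply lp.ext
    funext n
    rw [hXhatapp, hUz, hXhatapp]
    exact hYT n x
  -- left inverse: Yhat ∘ Xhat = id
  have hYXQ : ∀ h : H, Yhat (Xhat h) = ∑' n, Q n h := by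
    intro h
    rw [hYhatC]
    refine tsum_congr fun n => ?_
    rw [hXhatapp, hQY n h]
  have hleft : ∀ h : H, Yhat (Xhat h) = h := by
    have hdense : Dense ((Submodule.span ℂ (⋃ k, (Hn k : Set H)) : Submodule ℂ H) : Set H) := by
      have e1 : Submodule.span ℂ (⋃ k, (Hn k : Set H)) = ⨆ k, Hn k := by
        rw [Submodule.span_iUnion]
        refine iSup_congr fun k => Submodule.span_eq _
      rw [e1]
      exact Submodule.dense_iff_topologicalClosure_eq_top.mpr htop
    have heqon : Set.EqOn (Yhat.comp Xhat) (ContinuousLinearMap.id ℂ H)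
        (⋃ k, (Hn k : Set H)) := by
      intro x hx
      obtain ⟨s, ⟨k, rfl⟩, hxk⟩ := hx
      show Yhat (Xhat x) = x
      rw [hYXQ x]
      have h1 : ∀ n, n ≠ k → Q n x = 0 := fun n hn =>
        hQker n x (hHV k n (Ne.symm hn) hxk)
      rw [tsum_eq_single k h1]
      exact hQid k x hxk
    have h2 : Yhat.comp Xhat = ContinuousLinearMap.id ℂ H :=
      ContinuousLinearMap.ext_on hdense heqon
    intro h
    have := DFunLike.congr_fun h2 h
    simpa using this
  -- right inverse: Xhat ∘ Yhat = id
  have hright : ∀ a : lp K0 2, Xhat (Yhat a) = a := by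
    intro a
    apply lp.ext
    funext k
    rw [hXhatapp]
    rw [hYhatC a]
    rw [ContinuousLinearMap.map_tsum (Yop k) (hCsummable a)]
    have h1 : ∀ n, n ≠ k → Yop k (Cop n (a n)) = 0 := fun n hn => hYCne n k hn (a n)
    rw [tsum_eq_single k h1, hYCeq k (a k)]
  -- conclude
  refine ⟨ContinuousLinearEquiv.equivOfInverse Xhat Yhat hleft hright, fun x => ?_⟩
  show Xhat (T x) = Uz (Xhat x)
  exact hXhatT x
end
end

section
/- Assume the Setup (Section 2) with conditions (sing), (main0), (main1), (xxnxxn1): sup_{n≥0} ‖X_n‖‖X_n⁻¹‖ < ∞, and (cap): ∩_{n≥0} ⋁_{k≥n} H_k = {0}, and suppose T is power bounded (sup_m ‖T^m‖ < ∞). Then T is similar to U₀, i.e., there exists a bounded invertible operator X : H → K₀ with X T = U₀ X. -/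
noncomputable section
set_option linter.unusedSectionVars false
open scoped ENNReal InnerProductSpace
open ContinuousLinearMap

open Filter

namespace Cor210

def ces (f : ℕ → ℂ) (N : ℕ) : ℂ := (N : ℂ)⁻¹ * ∑ m ∈ Finset.range N, f m

def UF : Ultrafilter ℕ := Ultrafilter.of Filter.atTop

lemma UF_le : (UF : Filter ℕ) ≤ Filter.atTop := Ultrafilter.of_le _

def IsBdd (f : ℕ → ℂ) : Prop := ∃ C : ℝ, ∀ m, ‖f m‖ ≤ C

lemma ces_norm_le {f : ℕ → ℂ} {C : ℝ} (hC : 0 ≤ C) (h : ∀ m, ‖f m‖ ≤ C) (N : ℕ) :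
    ‖ces f N‖ ≤ C := by
  rcases Nat.eq_zero_or_pos N with h0 | hpos
  · simp [ces, h0, hC]
  · have hsum : ‖∑ m ∈ Finset.range N, f m‖ ≤ (N : ℝ) * C := by
      calc ‖∑ m ∈ Finset.range N, f m‖ ≤ ∑ m ∈ Finset.range N, ‖f m‖ :=
            norm_sum_le _ _
        _ ≤ ∑ _m ∈ Finset.range N, C := Finset.sum_le_sum (fun m _ => h m)
        _ = (N : ℝ) * C := by simp [mul_comm]
    have hN : (0 : ℝ) < (N : ℝ) := by exact_mod_cast hpos
    calc ‖ces f N‖ = ‖((N : ℂ))⁻¹‖ * ‖∑ m ∈ Finset.range N, f m‖ := norm_mul _ _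
      _ ≤ (N : ℝ)⁻¹ * ((N : ℝ) * C) := by
          apply mul_le_mul _ hsum (norm_nonneg _) (by positivity)
          simp [norm_inv]
      _ = C := by field_simp
    
open Classical in
def LIM (f : ℕ → ℂ) : ℂ :=
  if h : ∃ c, Tendsto (ces f) (UF : Filter ℕ) (nhds c) then h.choose else 0

lemma LIM_spec {f : ℕ → ℂ} (hf : IsBdd f) :
    Tendsto (ces f) (UF : Filter ℕ) (nhds (LIM f)) := by
  obtain ⟨C, hC⟩ := hf
  have hC0 : 0 ≤ C := le_trans (norm_nonneg _) (hC 0)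
  have hex : ∃ c, Tendsto (ces f) (UF : Filter ℕ) (nhds c) := by
    have hcpt : IsCompact (Metric.closedBall (0 : ℂ) C) := isCompact_closedBall _ _
    have hle : (Ultrafilter.map (ces f) UF : Filter ℂ) ≤ 𝓟 (Metric.closedBall 0 C) := by
      rw [le_principal_iff]
      refine Filter.mem_map.2 ?_
      have : ∀ N, ces f N ∈ Metric.closedBall (0 : ℂ) C := by
        intro N
        simpa [Metric.mem_closedBall, dist_eq_norm] using ces_norm_le hC0 hC N
      exact Filter.univ_mem' this
    obtain ⟨c, _, hc⟩ := hcpt.ultrafilter_le_nhds (Ultrafilter.map (ces f) UF) hle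
    exact ⟨c, hc⟩
  rw [LIM]
  rw [dif_pos hex]
  exact hex.choose_spec

lemma LIM_eq {f : ℕ → ℂ} (hf : IsBdd f) {c : ℂ}
    (h : Tendsto (ces f) (UF : Filter ℕ) (nhds c)) : LIM f = c :=
  tendsto_nhds_unique (LIM_spec hf) h

lemma ces_add (f g : ℕ → ℂ) (N : ℕ) :
    ces (fun m => f m + g m) N = ces f N + ces g N := by
  simp [ces, Finset.sum_add_distrib, mul_add]

lemma IsBdd.add {f g : ℕ → ℂ} (hf : IsBdd f) (hg : IsBdd g) :
    IsBdd (fun m => f m + g m) := by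
  obtain ⟨C, hC⟩ := hf; obtain ⟨D, hD⟩ := hg
  exact ⟨C + D, fun m => le_trans (norm_add_le _ _) (add_le_add (hC m) (hD m))⟩

lemma LIM_add {f g : ℕ → ℂ} (hf : IsBdd f) (hg : IsBdd g) :
    LIM (fun m => f m + g m) = LIM f + LIM g := by
  refine LIM_eq (hf.add hg) ?_
  have h2 := (LIM_spec hf).add (LIM_spec hg)
  have he : (fun N => ces f N + ces g N) = ces (fun m => f m + g m) := by
    funext N; rw [ces_add]
  rwa [he] at h2

lemma IsBdd.const_mul {f : ℕ → ℂ} (hf : IsBdd f) (c : ℂ) :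
    IsBdd (fun m => c * f m) := by
  obtain ⟨C, hC⟩ := hf
  exact ⟨‖c‖ * C, fun m => by
    rw [norm_mul]; exact mul_le_mul_of_nonneg_left (hC m) (norm_nonneg c)⟩

lemma LIM_const_mul {f : ℕ → ℂ} (hf : IsBdd f) (c : ℂ) :
    LIM (fun m => c * f m) = c * LIM f := by
  refine LIM_eq (hf.const_mul c) ?_
  have h : Tendsto (fun N => c * ces f N) (UF : Filter ℕ) (nhds (c * LIM f)) :=
    (LIM_spec hf).const_mul c
  have he : (fun N => c * ces f N) = ces (fun m => c * f m) := by
    funext N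
    simp only [ces, ← Finset.mul_sum]
    ring
  rwa [he] at h

lemma IsBdd.conj {f : ℕ → ℂ} (hf : IsBdd f) :
    IsBdd (fun m => (starRingEnd ℂ) (f m)) := by
  obtain ⟨C, hC⟩ := hf
  exact ⟨C, fun m => by simpa using hC m⟩

lemma LIM_conj {f : ℕ → ℂ} (hf : IsBdd f) :
    LIM (fun m => (starRingEnd ℂ) (f m)) = (starRingEnd ℂ) (LIM f) := by
  refine LIM_eq hf.conj ?_
  have h : Tendsto (fun N => (starRingEnd ℂ) (ces f N)) (UF : Filter ℕ)
      (nhds ((starRingEnd ℂ) (LIM f))) :=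
    ((Complex.continuous_conj).tendsto _).comp (LIM_spec hf)
  have he : (fun N => (starRingEnd ℂ) (ces f N)) = ces (fun m => (starRingEnd ℂ) (f m)) := by
    funext N
    simp [ces, map_mul, map_sum]
  rwa [he] at h

lemma LIM_shift {f : ℕ → ℂ} (hf : IsBdd f) :
    LIM (fun m => f (m + 1)) = LIM f := by
  obtain ⟨C, hC⟩ := hf
  have hC0 : 0 ≤ C := le_trans (norm_nonneg _) (hC 0)
  refine LIM_eq ⟨C, fun m => hC (m+1)⟩ ?_
  have he : ∀ N, ces (fun m => f (m + 1)) N = ces f N + (N : ℂ)⁻¹ * (f N - f 0) := by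
    intro N
    have : ∑ m ∈ Finset.range N, f (m + 1) = (∑ m ∈ Finset.range N, f m) + f N - f 0 := by
      induction N with
      | zero => simp
      | succ n ih => rw [Finset.sum_range_succ, ih, Finset.sum_range_succ]; ring
    simp only [ces, this]
    ring
  have hbnd : ∀ (N : ℕ), ‖((N : ℕ) : ℂ)⁻¹ * (f N - f 0)‖ ≤ (fun (N : ℕ) => (N : ℝ)⁻¹ * (2 * C)) N := by
    intro N
    rw [norm_mul]
    apply mul_le_mul _ _ (norm_nonneg _) (by positivity)
    · simp [norm_inv]
    · calc ‖f N - f 0‖ ≤ ‖f N‖ + ‖f 0‖ := norm_sub_le _ _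
        _ ≤ 2 * C := by have := hC N; have := hC 0; linarith
  have hten : Tendsto (fun (N : ℕ) => (N : ℝ)⁻¹ * (2 * C)) Filter.atTop (nhds 0) := by
    have := tendsto_inv_atTop_nhds_zero_nat.mul_const (2 * C)
    simpa using this
  have hcorr : Tendsto (fun (N : ℕ) => ((N : ℕ) : ℂ)⁻¹ * (f N - f 0)) Filter.atTop (nhds 0) :=
    squeeze_zero_norm hbnd hten
  have hcorr' : Tendsto (fun (N : ℕ) => ((N : ℕ) : ℂ)⁻¹ * (f N - f 0)) (UF : Filter ℕ) (nhds 0) :=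
    hcorr.mono_left UF_le
  have := (LIM_spec ⟨C, hC⟩).add hcorr'
  simp only [add_zero] at this
  convert this using 1
  funext N
  exact he N

lemma LIM_norm_le {f : ℕ → ℂ} {C : ℝ} (hC : 0 ≤ C) (h : ∀ m, ‖f m‖ ≤ C) :
    ‖LIM f‖ ≤ C := by
  have hT : Tendsto (fun N => ‖ces f N‖) (UF : Filter ℕ) (nhds ‖LIM f‖) :=
    (continuous_norm.tendsto _).comp (LIM_spec ⟨C, h⟩)
  exact le_of_tendsto hT (Filter.Eventually.of_forall (ces_norm_le hC h))

lemma LIM_im_zero {f : ℕ → ℂ} (hf : IsBdd f) (h : ∀ m, (f m).im = 0) :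
    (LIM f).im = 0 := by
  have hT : Tendsto (fun N => (ces f N).im) (UF : Filter ℕ) (nhds (LIM f).im) :=
    (Complex.continuous_im.tendsto _).comp (LIM_spec hf)
  have hz : ∀ N, (ces f N).im = 0 := by
    intro N
    have him : (∑ m ∈ Finset.range N, f m).im = 0 := by
      rw [Complex.im_sum]
      exact Finset.sum_eq_zero (fun m _ => h m)
    have : ((N:ℂ))⁻¹.im = 0 := by
      simp [Complex.inv_im]
    show (((N:ℂ))⁻¹ * ∑ m ∈ Finset.range N, f m).im = 0
    rw [Complex.mul_im, him, this]
    ring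
  have : Tendsto (fun N => (ces f N).im) (UF : Filter ℕ) (nhds 0) := by
    simp only [hz]; exact tendsto_const_nhds
  exact tendsto_nhds_unique hT this

lemma LIM_re_ge {f : ℕ → ℂ} (hf : IsBdd f) {lo : ℝ}
    (h : ∀ m, lo ≤ (f m).re) : lo ≤ (LIM f).re := by
  have hT : Tendsto (fun N => (ces f N).re) (UF : Filter ℕ) (nhds (LIM f).re) :=
    (Complex.continuous_re.tendsto _).comp (LIM_spec hf)
  refine ge_of_tendsto hT ?_
  have hev : ∀ᶠ N in (UF : Filter ℕ), 1 ≤ N :=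
    Filter.Eventually.filter_mono UF_le (Filter.eventually_ge_atTop 1)
  refine hev.mono ?_
  intro N hN
  have hNpos : (0:ℝ) < (N:ℝ) := by exact_mod_cast hN
  have hre : (ces f N).re = (N:ℝ)⁻¹ * (∑ m ∈ Finset.range N, f m).re := by
    show (((N:ℂ))⁻¹ * ∑ m ∈ Finset.range N, f m).re = _
    have h1 : ((N:ℂ))⁻¹.re = (N:ℝ)⁻¹ := by simp [Complex.inv_re, Complex.normSq_natCast]
    have h2 : ((N:ℂ))⁻¹.im = 0 := by simp [Complex.inv_im]
    rw [Complex.mul_re, h1, h2]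
    ring
  rw [hre, Complex.re_sum]
  have hs : (N:ℝ) * lo ≤ ∑ m ∈ Finset.range N, (f m).re := by
    calc (N:ℝ) * lo = ∑ _m ∈ Finset.range N, lo := by simp [mul_comm]
      _ ≤ _ := Finset.sum_le_sum (fun m _ => h m)
  calc lo = (N:ℝ)⁻¹ * ((N:ℝ) * lo) := by field_simp
    _ ≤ (N:ℝ)⁻¹ * ∑ m ∈ Finset.range N, (f m).re :=
        mul_le_mul_of_nonneg_left hs (by positivity)

end Cor210

set_option linter.unusedSectionVars false

namespace Cor210

open ContinuousLinearMap
open scoped InnerProductSpace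

variable {K1 K2 : Type} [NormedAddCommGroup K1] [InnerProductSpace ℂ K1] [CompleteSpace K1]
  [NormedAddCommGroup K2] [InnerProductSpace ℂ K2] [CompleteSpace K2]

/-- unitary basics -/
lemma unitary_inner_map {U : K1 →L[ℂ] K1} (hU : ∀ x, ‖U x‖ = ‖x‖) (x y : K1) :
    (inner ℂ (U x) (U y) : ℂ) = inner ℂ x y := by
  let li : K1 →ₗᵢ[ℂ] K1 := ⟨(U : K1 →ₗ[ℂ] K1), hU⟩
  exact li.inner_map_map x y

lemma unitary_adj_comp {U : K1 →L[ℂ] K1} (hU : ∀ x, ‖U x‖ = ‖x‖) (x : K1) :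
    adjoint U (U x) = x := by
  apply ext_inner_right ℂ
  intro v
  rw [adjoint_inner_left]
  exact unitary_inner_map hU x v

lemma unitary_comp_adj {U : K1 →L[ℂ] K1} (hU : IsUnitaryOp U) (x : K1) :
    U (adjoint U x) = x := by
  obtain ⟨y, rfl⟩ := hU.2 x
  rw [unitary_adj_comp hU.1]

lemma unitary_adj_norm {U : K1 →L[ℂ] K1} (hU : IsUnitaryOp U) (x : K1) :
    ‖adjoint U x‖ = ‖x‖ := by
  obtain ⟨y, rfl⟩ := hU.2 x
  rw [unitary_adj_comp hU.1, hU.1]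

lemma unitary_adj_unitary {U : K1 →L[ℂ] K1} (hU : IsUnitaryOp U) :
    IsUnitaryOp (adjoint U) :=
  ⟨unitary_adj_norm hU, fun x => ⟨U x, unitary_adj_comp hU.1 x⟩⟩

lemma pow_apply_succ_out {A : K1 →L[ℂ] K1} (m : ℕ) (x : K1) :
    (A ^ (m+1)) x = A ((A ^ m) x) := by
  rw [pow_succ']
  rfl

lemma pow_apply_succ_in {A : K1 →L[ℂ] K1} (m : ℕ) (x : K1) :
    (A ^ (m+1)) x = (A ^ m) (A x) := by
  rw [pow_succ]
  rfl

lemma unitary_pow_norm {U : K1 →L[ℂ] K1} (hU : ∀ x, ‖U x‖ = ‖x‖) (m : ℕ) (x : K1) :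
    ‖(U ^ m) x‖ = ‖x‖ := by
  induction m with
  | zero => simp
  | succ n ih => rw [pow_apply_succ_out, hU, ih]

lemma pow_comp_adj_pow {U : K1 →L[ℂ] K1} (hU : IsUnitaryOp U) (m : ℕ) (x : K1) :
    (U ^ m) (((adjoint U) ^ m) x) = x := by
  induction m with
  | zero => simp
  | succ n ih =>
      rw [pow_apply_succ_in (A := U), pow_apply_succ_out (A := adjoint U),
        unitary_comp_adj hU, ih]

/-- move a power from the second slot of the inner product to the first, as adjoint power. -/
lemma inner_pow_right_move (B : K1 →L[ℂ] K1) (m : ℕ) (w v : K1) :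
    (inner ℂ w ((B ^ m) v) : ℂ) = inner ℂ (((adjoint B) ^ m) w) v := by
  induction m generalizing v with
  | zero => simp
  | succ n ih =>
      rw [pow_apply_succ_in (A := B), ih (B v), ← adjoint_inner_left,
        ← pow_apply_succ_out]

/-- The key cross-term lemma: Cesàro-ultrafilter limits of matrix elements
`⟪(U2*)^m D (U1^m u), v⟫` vanish when the only intertwiner is 0. -/
lemma cross_lim (U1 : K1 →L[ℂ] K1) (U2 : K2 →L[ℂ] K2)
    (hU1 : IsUnitaryOp U1) (hU2 : IsUnitaryOp U2)
    (hZ : ∀ Z : K1 →L[ℂ] K2, Z.comp U1 = U2.comp Z → Z = 0)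
    (D : K1 →L[ℂ] K2) (u : K1) (v : K2) :
    LIM (fun m => (inner ℂ (((adjoint U2) ^ m) (D ((U1 ^ m) u))) v : ℂ)) = 0 := by
  set A2 := adjoint U2 with hA2
  have hA2u : IsUnitaryOp A2 := unitary_adj_unitary hU2
  -- the sequences and their bounds
  set g : K1 → K2 → ℕ → ℂ := fun u v m => (inner ℂ ((A2 ^ m) (D ((U1 ^ m) u))) v : ℂ) with hg
  have hbdd : ∀ u v, IsBdd (g u v) := by
    intro u v
    refine ⟨‖D‖ * ‖u‖ * ‖v‖, fun m => ?_⟩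
    calc ‖g u v m‖ ≤ ‖(A2 ^ m) (D ((U1 ^ m) u))‖ * ‖v‖ := norm_inner_le_norm _ _
      _ ≤ ‖D‖ * ‖u‖ * ‖v‖ := by
          rw [unitary_pow_norm hA2u.1]
          have h1 : ‖D ((U1 ^ m) u)‖ ≤ ‖D‖ * ‖u‖ := by
            calc ‖D ((U1 ^ m) u)‖ ≤ ‖D‖ * ‖(U1 ^ m) u‖ := D.le_opNorm _
              _ = ‖D‖ * ‖u‖ := by rw [unitary_pow_norm hU1.1]
          exact mul_le_mul_of_nonneg_right h1 (norm_nonneg _)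
  -- construct the intertwiner E
  have hlinmap : ∀ u : K1, ∃ e : K2, ∀ v : K2, (inner ℂ e v : ℂ) = LIM (g u v) := by
    intro u
    have hadd : ∀ v w : K2, LIM (g u (v + w)) = LIM (g u v) + LIM (g u w) := by
      intro v w
      have : g u (v + w) = fun m => g u v m + g u w m := by
        funext m; simp only [hg, inner_add_right]
      rw [this, LIM_add (hbdd u v) (hbdd u w)]
    have hsmul : ∀ (c : ℂ) (v : K2), LIM (g u (c • v)) = c * LIM (g u v) := by
      intro c v
      have : g u (c • v) = fun m => c * g u v m := by
        funext m; simp only [hg, inner_smul_right]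
      rw [this, LIM_const_mul (hbdd u v) c]
    let φlin : K2 →ₗ[ℂ] ℂ :=
      { toFun := fun v => LIM (g u v)
        map_add' := hadd
        map_smul' := hsmul }
    have hφb : ∀ v, ‖φlin v‖ ≤ (‖D‖ * ‖u‖) * ‖v‖ := by
      intro v
      exact LIM_norm_le (by positivity) fun m => by
        calc ‖g u v m‖ ≤ ‖(A2 ^ m) (D ((U1 ^ m) u))‖ * ‖v‖ := norm_inner_le_norm _ _
          _ ≤ ‖D‖ * ‖u‖ * ‖v‖ := by
              rw [unitary_pow_norm hA2u.1]
              refine mul_le_mul_of_nonneg_right ?_ (norm_nonneg _)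
              calc ‖D ((U1 ^ m) u)‖ ≤ ‖D‖ * ‖(U1 ^ m) u‖ := D.le_opNorm _
                _ = ‖D‖ * ‖u‖ := by rw [unitary_pow_norm hU1.1]
    let φ : K2 →L[ℂ] ℂ := φlin.mkContinuous (‖D‖ * ‖u‖) hφb
    refine ⟨(InnerProductSpace.toDual ℂ K2).symm φ, fun v => ?_⟩
    rw [InnerProductSpace.toDual_symm_apply]
    rfl
  choose E0 hE0 using hlinmap
  have hE0add : ∀ u w, E0 (u + w) = E0 u + E0 w := by
    intro u w
    apply ext_inner_right ℂ
    intro v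
    rw [hE0, inner_add_left, hE0, hE0]
    have : g (u + w) v = fun m => g u v m + g w v m := by
      funext m
      simp only [hg, map_add, inner_add_left]
    rw [this, LIM_add (hbdd u v) (hbdd w v)]
  have hE0smul : ∀ (c : ℂ) u, E0 (c • u) = c • E0 u := by
    intro c u
    apply ext_inner_right ℂ
    intro v
    rw [hE0, inner_smul_left, hE0]
    have : g (c • u) v = fun m => (starRingEnd ℂ) c * g u v m := by
      funext m
      simp only [hg, map_smul, inner_smul_left]
    rw [this, LIM_const_mul (hbdd u v) _]
  have hE0norm : ∀ u, ‖E0 u‖ ≤ ‖D‖ * ‖u‖ := by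
    intro u
    rcases eq_or_ne (E0 u) 0 with h | h
    · rw [h]; simp; positivity
    · have h1 : (‖E0 u‖ : ℝ) ^ 2 = RCLike.re (inner ℂ (E0 u) (E0 u) : ℂ) :=
        (inner_self_eq_norm_sq _).symm
      have h2 : RCLike.re (inner ℂ (E0 u) (E0 u) : ℂ) ≤ ‖(inner ℂ (E0 u) (E0 u) : ℂ)‖ :=
        RCLike.re_le_norm _
      have h3 : ‖(inner ℂ (E0 u) (E0 u) : ℂ)‖ ≤ (‖D‖ * ‖u‖) * ‖E0 u‖ := by
        rw [hE0]
        exact LIM_norm_le (by positivity) fun m => by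
          calc ‖g u (E0 u) m‖ ≤ ‖(A2 ^ m) (D ((U1 ^ m) u))‖ * ‖E0 u‖ := norm_inner_le_norm _ _
            _ ≤ ‖D‖ * ‖u‖ * ‖E0 u‖ := by
                rw [unitary_pow_norm hA2u.1]
                refine mul_le_mul_of_nonneg_right ?_ (norm_nonneg _)
                calc ‖D ((U1 ^ m) u)‖ ≤ ‖D‖ * ‖(U1 ^ m) u‖ := D.le_opNorm _
                  _ = ‖D‖ * ‖u‖ := by rw [unitary_pow_norm hU1.1]
      have hpos : 0 < ‖E0 u‖ := norm_pos_iff.2 h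
      nlinarith
  let Elin : K1 →ₗ[ℂ] K2 :=
    { toFun := E0
      map_add' := hE0add
      map_smul' := hE0smul }
  let E : K1 →L[ℂ] K2 := Elin.mkContinuous ‖D‖ hE0norm
  have hEapp : ∀ u, E u = E0 u := fun u => rfl
  have hEint : E.comp U1 = U2.comp E := by
    ext u
    apply ext_inner_right ℂ
    intro v
    simp only [ContinuousLinearMap.comp_apply, hEapp]
    rw [hE0]
    -- RHS: ⟪U2 (E0 u), v⟫ = ⟪E0 u, A2 v⟫ = LIM (g u (A2 v))
    have hr : (inner ℂ (U2 (E0 u)) v : ℂ) = LIM (g u (A2 v)) := by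
      rw [← adjoint_inner_right U2, ← hA2, hE0]
    rw [hr]
    -- LHS sequence g (U1 u) v is the shift of h := g u (A2 v)
    have hshift : ∀ m, g u (A2 v) (m + 1) = g (U1 u) v m := by
      intro m
      simp only [hg]
      have h1 : (U1 ^ (m+1)) u = (U1 ^ m) (U1 u) := pow_apply_succ_in m u
      have h2 : (A2 ^ (m+1)) (D ((U1 ^ m) (U1 u))) = A2 ((A2 ^ m) (D ((U1 ^ m) (U1 u)))) :=
        pow_apply_succ_out m _
      rw [h1, h2]
      exact unitary_inner_map hA2u.1 _ v
    have : g (U1 u) v = fun m => g u (A2 v) (m + 1) := by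
      funext m; rw [hshift m]
    rw [this, LIM_shift (hbdd u (A2 v))]
  have hE := hZ E hEint
  have := hE0 u v
  rw [← this, show E0 u = E u from rfl, hE]
  simp

end Cor210


open Cor210 Filter
open scoped InnerProductSpace ENNReal

set_option maxHeartbeats 4000000

/-- Corollary 2.10: under (xxnxxn1) and (cap), a power bounded `T` satisfying the Setup is
similar to `U₀`. -/
theorem power_bounded_similar_to_U0
    {H : Type} [NormedAddCommGroup H] [InnerProductSpace ℂ H] [CompleteSpace H]
    [TopologicalSpace.SeparableSpace H]
    (K0 : ℕ → Type) [∀ n, NormedAddCommGroup (K0 n)] [∀ n, InnerProductSpace ℂ (K0 n)]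
    [∀ n, CompleteSpace (K0 n)] [∀ n, TopologicalSpace.SeparableSpace (K0 n)]
    -- the unitaries `U_{0n}`, each reductive, with pairwise singular spectral measures:
    (U0 : ∀ n, K0 n →L[ℂ] K0 n)
    (hU0 : ∀ n, IsUnitaryOp (U0 n))
    (hU0red : ∀ (n) (F : Submodule ℂ (K0 n)), IsClosed (F : Set (K0 n)) →
      (∀ x ∈ F, U0 n x ∈ F) → ∀ x ∈ F, ContinuousLinearMap.adjoint (U0 n) x ∈ F)
    (hsing : ∀ n k, n ≠ k → ∀ Z : K0 n →L[ℂ] K0 k, Z.comp (U0 n) = (U0 k).comp Z → Z = 0)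
    (T : H →L[ℂ] H)
    -- the nonzero closed `T`-invariant subspaces `H_n`:
    (Hn : ℕ → Submodule ℂ H)
    (hHcl : ∀ n, IsClosed ((Hn n : Set H)))
    (hHne : ∀ n, Hn n ≠ ⊥)
    (hTH : ∀ n, ∀ x ∈ Hn n, T x ∈ Hn n)
    -- `Vn n = ⋁_{k ≠ n} H_k`:
    (Vn : ℕ → Submodule ℂ H)
    (hVn : ∀ n, Vn n = (⨆ k ∈ {k : ℕ | k ≠ n}, Hn k).topologicalClosure)
    -- (main0):
    (hmain0 : ∀ n, Hn n ⊓ Vn n = ⊥ ∧ Hn n ⊔ Vn n = ⊤)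
    -- (main1): the invertible intertwiners `X_n : H_n → K_{0n}`:
    (X0 : ∀ n, ↥(Hn n) ≃L[ℂ] K0 n)
    (hX0 : ∀ (n) (x : ↥(Hn n)), X0 n ⟨T ↑x, hTH n ↑x x.2⟩ = U0 n (X0 n x))
    -- the skew projections `Q_n` onto `H_n` along `⋁_{k ≠ n} H_k`:
    (Q : ℕ → H →L[ℂ] H)
    (hQmem : ∀ n x, Q n x ∈ Hn n)
    (hQid : ∀ n, ∀ x ∈ Hn n, Q n x = x)
    (hQker : ∀ n, ∀ x ∈ Vn n, Q n x = 0)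
    -- `U₀ = ⊕_n U_{0n}` acting on the Hilbert direct sum `K₀ = ⊕_n K_{0n} = lp K0 2`:
    (Uz : lp K0 2 →L[ℂ] lp K0 2) (hUzU : IsUnitaryOp Uz)
    (hUz : ∀ (a : lp K0 2) (n : ℕ), (Uz a : ∀ i, K0 i) n = U0 n (a n))
    -- (xxnxxn1):
    (hXX : ∃ C : ℝ, ∀ n,
      ‖(X0 n : ↥(Hn n) →L[ℂ] K0 n)‖ * ‖((X0 n).symm : K0 n →L[ℂ] ↥(Hn n))‖ ≤ C)
    -- (cap):
    (hcap : (⨅ n : ℕ, (⨆ k ∈ {k : ℕ | n ≤ k}, Hn k).topologicalClosure) = ⊥)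
    -- `T` is power bounded:
    (hpb : ∃ C : ℝ, ∀ m : ℕ, ‖T ^ m‖ ≤ C) :
    ∃ X : H ≃L[ℂ] lp K0 2, ∀ x : H, X (T x) = Uz (X x) := by
  classical
  obtain ⟨CX0, hCX0⟩ := hXX
  obtain ⟨Cp0, hCp0⟩ := hpb
  set CX : ℝ := max CX0 1 with hCXdef
  set Cp : ℝ := max Cp0 1 with hCpdef
  have hCX1 : (1:ℝ) ≤ CX := le_max_right _ _
  have hCp1 : (1:ℝ) ≤ Cp := le_max_right _ _
  have hCXpos : (0:ℝ) < CX := lt_of_lt_of_le one_pos hCX1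
  have hCppos : (0:ℝ) < Cp := lt_of_lt_of_le one_pos hCp1
  have hCX : ∀ n, ‖(X0 n : ↥(Hn n) →L[ℂ] K0 n)‖ * ‖((X0 n).symm : K0 n →L[ℂ] ↥(Hn n))‖ ≤ CX :=
    fun n => le_trans (hCX0 n) (le_max_left _ _)
  have hCp : ∀ m, ‖T ^ m‖ ≤ Cp := fun m => le_trans (hCp0 m) (le_max_left _ _)
  -- basic projection lemmas
  have hkerQ : ∀ n x, Q n x = 0 → x ∈ Vn n := by
    intro n x hx
    have hx2 : x ∈ Hn n ⊔ Vn n := by rw [(hmain0 n).2]; trivial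
    obtain ⟨u, hu, v, hv, rfl⟩ := Submodule.mem_sup.1 hx2
    have : Q n (u + v) = u := by rw [map_add, hQid n u hu, hQker n v hv, add_zero]
    rw [hx] at this
    rw [← this, zero_add]
    exact hv
  have hQQ : ∀ n x, Q n (Q n x) = Q n x := fun n x => hQid n _ (hQmem n x)
  have hHV : ∀ k n, n ≠ k → Hn n ≤ Vn k := by
    intro k n hnk
    rw [hVn k]
    refine le_trans ?_ (Submodule.le_topologicalClosure _)
    exact le_iSup₂ (f := fun (i : ℕ) (_ : i ∈ {k' : ℕ | k' ≠ k}) => Hn i) n hnk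
  have hTV : ∀ n, ∀ v ∈ Vn n, T v ∈ Vn n := by
    intro n v hv
    rw [hVn n] at hv ⊢
    have hsub : Submodule.map (T : H →ₗ[ℂ] H) (⨆ k ∈ {k : ℕ | k ≠ n}, Hn k) ≤ ⨆ k ∈ {k : ℕ | k ≠ n}, Hn k := by
      rw [Submodule.map_iSup]
      refine iSup_le fun k => ?_
      rw [Submodule.map_iSup]
      refine iSup_le fun hk => ?_
      refine le_trans ?_ (le_iSup₂ (f := fun (i : ℕ) (_ : i ∈ {k' : ℕ | k' ≠ n}) => Hn i) k hk)
      rintro y ⟨z, hz, rfl⟩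
      exact hTH k z hz
    have hv' : (v : H) ∈ closure ((⨆ k ∈ {k : ℕ | k ≠ n}, Hn k : Submodule ℂ H) : Set H) := hv
    have himg : T v ∈ closure (T '' ((⨆ k ∈ {k : ℕ | k ≠ n}, Hn k : Submodule ℂ H) : Set H)) :=
      image_closure_subset_closure_image T.continuous ⟨v, hv', rfl⟩
    refine closure_mono ?_ himg
    rintro y ⟨z, hz, rfl⟩
    exact hsub ⟨z, hz, rfl⟩
  have hQT : ∀ n x, Q n (T x) = T (Q n x) := by
    intro n x
    have hd : x - Q n x ∈ Vn n := hkerQ n _ (by rw [map_sub, hQQ, sub_self])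
    have : T x = T (Q n x) + T (x - Q n x) := by rw [← map_add]; congr 1; abel
    rw [this, map_add, hQid n _ (hTH n _ (hQmem n x)), hQker n _ (hTV n _ hd), add_zero]
  -- construct the normalized similarities and associated maps
  have hGA : ∀ n : ℕ, ∃ (G : H →L[ℂ] K0 n) (A : K0 n →L[ℂ] H),
      (∀ x, G (T x) = U0 n (G x)) ∧
      (∀ u, T (A u) = A (U0 n u)) ∧
      (∀ u, G (A u) = u) ∧
      (∀ x, A (G x) = Q n x) ∧
      (∀ u, A u ∈ Hn n) ∧
      (∀ u, ‖A u‖ ≤ CX * ‖u‖) ∧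
      (∀ x, ‖G x‖ ≤ ‖Q n x‖) := by
    intro n
    set c : ℝ := ‖(X0 n : ↥(Hn n) →L[ℂ] K0 n)‖ with hc
    have hcpos : 0 < c := by
      obtain ⟨x, hx, hx0⟩ := Submodule.exists_mem_ne_zero_of_ne_bot (hHne n)
      have hX0x : X0 n ⟨x, hx⟩ ≠ 0 := by
        intro h
        apply hx0
        have h2 : X0 n ⟨x, hx⟩ = X0 n 0 := by simpa using h
        have h3 := (X0 n).injective h2
        simpa [Subtype.ext_iff] using h3
      have h1 : 0 < ‖X0 n ⟨x, hx⟩‖ := norm_pos_iff.2 hX0x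
      have h2 : ‖X0 n ⟨x, hx⟩‖ ≤ c * ‖(⟨x, hx⟩ : ↥(Hn n))‖ :=
        ((X0 n : ↥(Hn n) →L[ℂ] K0 n)).le_opNorm _
      have h3 : 0 < ‖(⟨x, hx⟩ : ↥(Hn n))‖ := by
        simpa [norm_pos_iff, Subtype.ext_iff] using hx0
      nlinarith
    have hcC : (c : ℂ) ≠ 0 := by
      simp only [ne_eq, Complex.ofReal_eq_zero]
      exact ne_of_gt hcpos
    set Yf : ↥(Hn n) →L[ℂ] K0 n := ((c : ℂ))⁻¹ • (X0 n : ↥(Hn n) →L[ℂ] K0 n) with hYf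
    set Yi : K0 n →L[ℂ] ↥(Hn n) := ((c : ℂ)) • ((X0 n).symm : K0 n →L[ℂ] ↥(Hn n)) with hYi
    have hYfYi : ∀ u, Yf (Yi u) = u := by
      intro u
      simp only [hYf, hYi, ContinuousLinearMap.smul_apply, map_smul, smul_smul,
        inv_mul_cancel₀ hcC, one_smul]
      rw [mul_inv_cancel₀ hcC, one_smul]
      simp
    have hYiYf : ∀ x, Yi (Yf x) = x := by
      intro x
      simp only [hYf, hYi, ContinuousLinearMap.smul_apply, map_smul, smul_smul,
        mul_inv_cancel₀ hcC, one_smul]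
      rw [inv_mul_cancel₀ hcC, one_smul]
      simp
    have hYfT : ∀ x : ↥(Hn n), Yf ⟨T ↑x, hTH n ↑x x.2⟩ = U0 n (Yf x) := by
      intro x
      simp only [hYf, ContinuousLinearMap.smul_apply, ContinuousLinearEquiv.coe_coe]
      rw [hX0 n x, map_smul]
    have hYfnorm : ∀ x, ‖Yf x‖ ≤ ‖x‖ := by
      intro x
      simp only [hYf, ContinuousLinearMap.smul_apply]
      rw [norm_smul]
      have h1 : ‖((c:ℂ))⁻¹‖ = c⁻¹ := by
        rw [norm_inv, Complex.norm_real, Real.norm_of_nonneg hcpos.le]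
      rw [h1]
      have h2 : ‖(X0 n : ↥(Hn n) →L[ℂ] K0 n) x‖ ≤ c * ‖x‖ :=
        ((X0 n : ↥(Hn n) →L[ℂ] K0 n)).le_opNorm _
      calc c⁻¹ * ‖(X0 n : ↥(Hn n) →L[ℂ] K0 n) x‖ ≤ c⁻¹ * (c * ‖x‖) := by
            apply mul_le_mul_of_nonneg_left h2 (by positivity)
        _ = ‖x‖ := by field_simp
    have hYinorm : ∀ u, ‖Yi u‖ ≤ CX * ‖u‖ := by
      intro u
      simp only [hYi, ContinuousLinearMap.smul_apply]
      rw [norm_smul]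
      have h1 : ‖((c:ℂ))‖ = c := by rw [Complex.norm_real, Real.norm_of_nonneg hcpos.le]
      rw [h1]
      have h2 : ‖((X0 n).symm : K0 n →L[ℂ] ↥(Hn n)) u‖ ≤
          ‖((X0 n).symm : K0 n →L[ℂ] ↥(Hn n))‖ * ‖u‖ :=
        (((X0 n).symm : K0 n →L[ℂ] ↥(Hn n))).le_opNorm _
      calc c * ‖((X0 n).symm : K0 n →L[ℂ] ↥(Hn n)) u‖
          ≤ c * (‖((X0 n).symm : K0 n →L[ℂ] ↥(Hn n))‖ * ‖u‖) := by
            apply mul_le_mul_of_nonneg_left h2 hcpos.le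
        _ ≤ CX * ‖u‖ := by
            have := hCX n
            have hu : 0 ≤ ‖u‖ := norm_nonneg u
            nlinarith
    set QH : H →L[ℂ] ↥(Hn n) := (Q n).codRestrict (Hn n) (hQmem n) with hQH
    refine ⟨Yf.comp QH, (Hn n).subtypeL.comp Yi, ?_, ?_, ?_, ?_, ?_, ?_, ?_⟩
    · intro x
      simp only [ContinuousLinearMap.comp_apply]
      have h1 : QH (T x) = ⟨T (Q n x), hTH n _ (hQmem n x)⟩ := by
        apply Subtype.ext
        simp only [hQH, ContinuousLinearMap.coe_codRestrict_apply]
        exact hQT n x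
      rw [h1]
      have h2 : (⟨T (Q n x), hTH n _ (hQmem n x)⟩ : ↥(Hn n)) = ⟨T ↑(QH x), hTH n ↑(QH x) (QH x).2⟩ := by
        apply Subtype.ext
        simp only [hQH, ContinuousLinearMap.coe_codRestrict_apply]
      rw [h2, hYfT (QH x)]
    · intro u
      simp only [ContinuousLinearMap.comp_apply, Submodule.subtypeL_apply]
      have h1 : T ↑(Yi u) = ↑(⟨T ↑(Yi u), hTH n _ (Yi u).2⟩ : ↥(Hn n)) := rfl
      rw [h1]
      congr 1
      apply (X0 n).injective
      have h2 : X0 n ⟨T ↑(Yi u), hTH n _ (Yi u).2⟩ = U0 n (X0 n (Yi u)) := hX0 n (Yi u)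
      rw [h2]
      simp only [hYi, ContinuousLinearMap.smul_apply, map_smul]
      simp
    · intro u
      simp only [ContinuousLinearMap.comp_apply, Submodule.subtypeL_apply]
      have h1 : QH ↑(Yi u) = Yi u := by
        apply Subtype.ext
        simp only [hQH, ContinuousLinearMap.coe_codRestrict_apply]
        exact hQid n _ (Yi u).2
      rw [h1, hYfYi]
    · intro x
      simp only [ContinuousLinearMap.comp_apply, Submodule.subtypeL_apply]
      rw [hYiYf]
      simp only [hQH, ContinuousLinearMap.coe_codRestrict_apply]
    · intro u
      simp only [ContinuousLinearMap.comp_apply, Submodule.subtypeL_apply]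
      exact (Yi u).2
    · intro u
      simp only [ContinuousLinearMap.comp_apply, Submodule.subtypeL_apply]
      rw [Submodule.norm_coe]
      exact hYinorm u
    · intro x
      simp only [ContinuousLinearMap.comp_apply]
      calc ‖Yf (QH x)‖ ≤ ‖QH x‖ := hYfnorm _
        _ = ‖Q n x‖ := by
            rw [hQH]
            simp only [ContinuousLinearMap.coe_codRestrict_apply, Submodule.coe_norm]
  choose Gn An hGnT hTAn hGAn hAGn hAnmem hAnnorm hGnnorm using hGA
  -- power lemmas
  have hTpowA : ∀ n u m, (T ^ m) (An n u) = An n (((U0 n) ^ m) u) := by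
    intro n u m
    induction m with
    | zero => simp
    | succ j ih =>
        rw [pow_apply_succ_out, ih, hTAn, ← pow_apply_succ_out]
  have hGnpow : ∀ n x m, Gn n ((T ^ m) x) = ((U0 n) ^ m) (Gn n x) := by
    intro n x m
    induction m with
    | zero => simp
    | succ j ih =>
        rw [pow_apply_succ_out, hGnT, ih, ← pow_apply_succ_out]
  have hU0pow : ∀ n m (u : K0 n), ‖((U0 n) ^ m) u‖ = ‖u‖ :=
    fun n m u => unitary_pow_norm (hU0 n).1 m u
  have hAGH : ∀ n x, x ∈ Hn n → An n (Gn n x) = x := by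
    intro n x hx
    rw [hAGn, hQid n x hx]
  have hTpowHn : ∀ n x, x ∈ Hn n → ∀ m, (T ^ m) x = An n (((U0 n) ^ m) (Gn n x)) := by
    intro n x hx m
    rw [← hAGH n x hx, hTpowA, hGAn]
  have hTmHn_mem : ∀ n x, x ∈ Hn n → ∀ m, (T ^ m) x ∈ Hn n := by
    intro n x hx m
    rw [hTpowHn n x hx m]
    exact hAnmem n _
  have hxHn_up : ∀ n x, x ∈ Hn n → ∀ m, ‖(T ^ m) x‖ ≤ CX * ‖Gn n x‖ := by
    intro n x hx m
    rw [hTpowHn n x hx m]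
    calc ‖An n (((U0 n) ^ m) (Gn n x))‖ ≤ CX * ‖((U0 n) ^ m) (Gn n x)‖ := hAnnorm n _
      _ = CX * ‖Gn n x‖ := by rw [hU0pow]
  have hxHn_low : ∀ n x, x ∈ Hn n → ∀ m, ‖Gn n x‖ ≤ ‖(T ^ m) x‖ := by
    intro n x hx m
    calc ‖Gn n x‖ = ‖((U0 n) ^ m) (Gn n x)‖ := (hU0pow n m _).symm
      _ = ‖Gn n ((T ^ m) x)‖ := by rw [hGnpow]
      _ ≤ ‖Q n ((T ^ m) x)‖ := hGnnorm n _
      _ = ‖(T ^ m) x‖ := by rw [hQid n _ (hTmHn_mem n x hx m)]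
  -- the sesquilinear form a
  set a : H → H → ℂ := fun x y => LIM (fun m => (inner ℂ ((T ^ m) x) ((T ^ m) y) : ℂ)) with hadef
  have haBdd : ∀ x y, IsBdd (fun m => (inner ℂ ((T ^ m) x) ((T ^ m) y) : ℂ)) := by
    intro x y
    refine ⟨Cp * ‖x‖ * (Cp * ‖y‖), fun m => ?_⟩
    calc ‖(inner ℂ ((T ^ m) x) ((T ^ m) y) : ℂ)‖ ≤ ‖(T ^ m) x‖ * ‖(T ^ m) y‖ :=
          norm_inner_le_norm _ _
      _ ≤ (Cp * ‖x‖) * (Cp * ‖y‖) := by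
          have h1 : ‖(T ^ m) x‖ ≤ Cp * ‖x‖ :=
            le_trans ((T ^ m).le_opNorm x) (mul_le_mul_of_nonneg_right (hCp m) (norm_nonneg x))
          have h2 : ‖(T ^ m) y‖ ≤ Cp * ‖y‖ :=
            le_trans ((T ^ m).le_opNorm y) (mul_le_mul_of_nonneg_right (hCp m) (norm_nonneg y))
          exact mul_le_mul h1 h2 (norm_nonneg _) (by positivity)
  have haconj : ∀ x y, a y x = (starRingEnd ℂ) (a x y) := by
    intro x y
    rw [hadef]
    simp only
    rw [← LIM_conj (haBdd x y)]
    congr 1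
    funext m
    rw [← inner_conj_symm]
  have hasubl : ∀ x y z, a (x - y) z = a x z - a y z := by
    intro x y z
    rw [hadef]
    simp only
    have h1 : (fun m => (inner ℂ ((T ^ m) (x - y)) ((T ^ m) z) : ℂ))
        = fun m => (inner ℂ ((T ^ m) x) ((T ^ m) z) : ℂ) +
            (-1 : ℂ) * (inner ℂ ((T ^ m) y) ((T ^ m) z) : ℂ) := by
      funext m
      rw [map_sub, inner_sub_left]
      ring
    rw [h1, LIM_add (haBdd x z) ((haBdd y z).const_mul _), LIM_const_mul (haBdd y z)]
    ring
  have hasubr : ∀ x y z, a x (y - z) = a x y - a x z := by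
    intro x y z
    rw [hadef]
    simp only
    have h1 : (fun m => (inner ℂ ((T ^ m) x) ((T ^ m) (y - z)) : ℂ))
        = fun m => (inner ℂ ((T ^ m) x) ((T ^ m) y) : ℂ) +
            (-1 : ℂ) * (inner ℂ ((T ^ m) x) ((T ^ m) z) : ℂ) := by
      funext m
      rw [map_sub, inner_sub_right]
      ring
    rw [h1, LIM_add (haBdd x y) ((haBdd x z).const_mul _), LIM_const_mul (haBdd x z)]
    ring
  have haim : ∀ x, (a x x).im = 0 := by
    intro x
    rw [hadef]
    refine LIM_im_zero (haBdd x x) fun m => ?_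
    have h := inner_self_im (𝕜 := ℂ) ((T ^ m) x)
    rwa [RCLike.im_to_complex] at h
  have hare_up : ∀ x, (a x x).re ≤ Cp ^ 2 * ‖x‖ ^ 2 := by
    intro x
    have h1 : ‖a x x‖ ≤ Cp * ‖x‖ * (Cp * ‖x‖) := by
      rw [hadef]
      refine LIM_norm_le (by positivity) fun m => ?_
      obtain ⟨C, hC⟩ := haBdd x x
      calc ‖(inner ℂ ((T ^ m) x) ((T ^ m) x) : ℂ)‖ ≤ ‖(T ^ m) x‖ * ‖(T ^ m) x‖ :=
            norm_inner_le_norm _ _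
        _ ≤ (Cp * ‖x‖) * (Cp * ‖x‖) := by
            have h1 : ‖(T ^ m) x‖ ≤ Cp * ‖x‖ :=
              le_trans ((T ^ m).le_opNorm x) (mul_le_mul_of_nonneg_right (hCp m) (norm_nonneg x))
            exact mul_le_mul h1 h1 (norm_nonneg _) (by positivity)
    calc (a x x).re ≤ ‖a x x‖ := Complex.re_le_norm _
      _ ≤ Cp * ‖x‖ * (Cp * ‖x‖) := h1
      _ = Cp ^ 2 * ‖x‖ ^ 2 := by ring
  have halow : ∀ n x, x ∈ Hn n → ‖Gn n x‖ ^ 2 ≤ (a x x).re := by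
    intro n x hx
    rw [hadef]
    refine LIM_re_ge (haBdd x x) fun m => ?_
    have h1 : ((inner ℂ ((T ^ m) x) ((T ^ m) x) : ℂ)).re = ‖(T ^ m) x‖ ^ 2 := by
      have := @inner_self_eq_norm_sq ℂ _ _ _ _ ((T ^ m) x)
      simpa using this
    rw [h1]
    have h2 := hxHn_low n x hx m
    nlinarith [norm_nonneg (Gn n x), norm_nonneg ((T ^ m) x)]
  -- orthogonality from the cross lemma
  have hortho : ∀ n k, n ≠ k → ∀ x y, x ∈ Hn n → y ∈ Hn k → a x y = 0 := by
    intro n k hnk x y hx hy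
    rw [hadef]
    simp only
    have heq : (fun m => (inner ℂ ((T ^ m) x) ((T ^ m) y) : ℂ))
        = fun m => (inner ℂ (((ContinuousLinearMap.adjoint (U0 k)) ^ m)
            (((ContinuousLinearMap.adjoint (An k)).comp (An n)) (((U0 n) ^ m) (Gn n x))))
            (Gn k y) : ℂ) := by
      funext m
      rw [hTpowHn n x hx m, hTpowHn k y hy m]
      rw [← ContinuousLinearMap.adjoint_inner_left (An k)]
      rw [inner_pow_right_move]
      rfl
    rw [heq]
    exact cross_lim (U0 n) (U0 k) (hU0 n) (hU0 k) (hsing n k hnk) _ _ _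
  -- continuity of a in each slot and vanishing on closures
  have haLip : ∀ x, Continuous (fun y => a x y) := by
    intro x
    have hlip : LipschitzWith (Real.toNNReal (Cp ^ 2 * ‖x‖)) (fun y => a x y) := by
      refine LipschitzWith.of_dist_le_mul fun y z => ?_
      rw [dist_eq_norm, dist_eq_norm, ← hasubr]
      have h1 : ‖a x (y - z)‖ ≤ Cp * ‖x‖ * (Cp * ‖y - z‖) := by
        rw [hadef]
        refine LIM_norm_le (by positivity) fun m => ?_
        calc ‖(inner ℂ ((T ^ m) x) ((T ^ m) (y - z)) : ℂ)‖
            ≤ ‖(T ^ m) x‖ * ‖(T ^ m) (y - z)‖ := norm_inner_le_norm _ _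
          _ ≤ (Cp * ‖x‖) * (Cp * ‖y - z‖) := by
              have h1 : ‖(T ^ m) x‖ ≤ Cp * ‖x‖ :=
                le_trans ((T ^ m).le_opNorm x)
                  (mul_le_mul_of_nonneg_right (hCp m) (norm_nonneg x))
              have h2 : ‖(T ^ m) (y - z)‖ ≤ Cp * ‖y - z‖ :=
                le_trans ((T ^ m).le_opNorm _)
                  (mul_le_mul_of_nonneg_right (hCp m) (norm_nonneg _))
              exact mul_le_mul h1 h2 (norm_nonneg _) (by positivity)
      calc ‖a x (y - z)‖ ≤ Cp * ‖x‖ * (Cp * ‖y - z‖) := h1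
        _ ≤ Real.toNNReal (Cp ^ 2 * ‖x‖) * ‖y - z‖ := by
            rw [Real.coe_toNNReal _ (by positivity)]
            nlinarith [norm_nonneg (y - z), norm_nonneg x]
    exact hlip.continuous
  have hazero : ∀ x, a x 0 = 0 := by
    intro x
    have := hasubr x 0 0
    simpa using this
  have havanr : ∀ n x, x ∈ Hn n → ∀ y ∈ Vn n, a x y = 0 := by
    intro n x hx y hy
    have haddr : ∀ y z, a x (y + z) = a x y + a x z := by
      intro y z
      have h1 := hasubr x (y + z) z
      simp only [add_sub_cancel_right] at h1
      linear_combination -h1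
    set Z : Submodule ℂ H :=
      { carrier := {y | a x y = 0}
        add_mem' := by
          intro u v hu hv
          simp only [Set.mem_setOf_eq] at hu hv ⊢
          rw [haddr, hu, hv, add_zero]
        zero_mem' := hazero x
        smul_mem' := by
          intro c v hv
          simp only [Set.mem_setOf_eq] at hv ⊢
          have h1 : a x (c • v) = c * a x v := by
            rw [hadef]
            simp only
            have h2 : (fun m => (inner ℂ ((T ^ m) x) ((T ^ m) (c • v)) : ℂ))
                = fun m => c * (inner ℂ ((T ^ m) x) ((T ^ m) v) : ℂ) := by
              funext m
              rw [map_smul, inner_smul_right]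
            rw [h2, LIM_const_mul (haBdd x v)]
          rw [h1, hv, mul_zero] } with hZdef
    have hZclosed : IsClosed (Z : Set H) := by
      have : (Z : Set H) = (fun y => a x y) ⁻¹' {0} := rfl
      rw [this]
      exact IsClosed.preimage (haLip x) isClosed_singleton
    have hle : (⨆ k ∈ {k : ℕ | k ≠ n}, Hn k) ≤ Z := by
      refine iSup_le fun k => iSup_le fun hk => ?_
      intro y hy
      exact hortho n k (Ne.symm hk) x y hx hy
    have h2 : Vn n ≤ Z := by
      rw [hVn n]
      exact Submodule.topologicalClosure_minimal _ hle hZclosed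
    exact h2 hy
  have havanl : ∀ n y x, y ∈ Vn n → x ∈ Hn n → a y x = 0 := by
    intro n y x hy hx
    rw [haconj, havanr n x hx y hy, map_zero]
  -- finite sums in the second slot
  have hasumr : ∀ x (F : Finset ℕ) (w : ℕ → H), a x (∑ n ∈ F, w n) = ∑ n ∈ F, a x (w n) := by
    intro x F w
    refine Finset.induction_on F (by simpa using hazero x) ?_
    intro s F' hns ih
    rw [Finset.sum_insert hns, Finset.sum_insert hns, ← ih]
    have h1 := hasubr x (w s + ∑ n ∈ F', w n) (∑ n ∈ F', w n)
    simp only [add_sub_cancel_right] at h1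
    linear_combination -h1
  have hasuml : ∀ x (F : Finset ℕ) (w : ℕ → H), a (∑ n ∈ F, w n) x = ∑ n ∈ F, a (w n) x := by
    intro x F w
    rw [haconj, hasumr, map_sum]
    exact Finset.sum_congr rfl fun n _ => (haconj x (w n)).symm
  -- primal Bessel inequality
  have hbesselP : ∀ x (F : Finset ℕ),
      ∑ n ∈ F, (a (Q n x) (Q n x)).re ≤ (a x x).re := by
    intro x F
    set s := ∑ n ∈ F, Q n x with hsdef
    have hkey1 : ∀ n ∈ F, a x (Q n x) = a (Q n x) (Q n x) := by
      intro n _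
      have h1 : a (x - Q n x) (Q n x) = 0 := by
        refine havanl n _ _ ?_ (hQmem n x)
        exact hkerQ n _ (by rw [map_sub, hQQ, sub_self])
      have h2 := hasubl x (Q n x) (Q n x)
      rw [h1] at h2
      linear_combination -h2
    have hkey2 : ∀ n ∈ F, ∀ k ∈ F, n ≠ k → a (Q n x) (Q k x) = 0 := by
      intro n _ k _ hnk
      exact hortho n k hnk _ _ (hQmem n x) (hQmem k x)
    have hS : a x s = ∑ n ∈ F, a (Q n x) (Q n x) := by
      rw [hsdef, hasumr]
      exact Finset.sum_congr rfl hkey1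
    have hss : a s s = ∑ n ∈ F, a (Q n x) (Q n x) := by
      rw [hsdef, hasuml]
      refine Finset.sum_congr rfl fun n hn => ?_
      rw [hasumr]
      rw [Finset.sum_eq_single_of_mem n hn]
      intro k hk hkn
      exact hkey2 n hn k hk (Ne.symm hkn)
    have hsx : a s x = (starRingEnd ℂ) (a x s) := (haconj x s)
    have hexp : a (x - s) (x - s) = a x x - a x s - a s x + a s s := by
      rw [hasubl, hasubr, hasubr]
      ring
    have hSim : (a x s).im = 0 := by
      rw [hS, Complex.im_sum]
      refine Finset.sum_eq_zero fun n _ => ?_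
      exact haim (Q n x)
    have hconjS : (starRingEnd ℂ) (a x s) = a x s := by
      rw [Complex.conj_eq_iff_im]
      exact hSim
    have hfinal : a (x - s) (x - s) = a x x - a x s := by
      rw [hexp, hsx, hconjS, hS, hss]
      ring
    have hnonneg : 0 ≤ (a (x - s) (x - s)).re := by
      rw [hadef]
      refine LIM_re_ge (haBdd _ _) fun m => ?_
      have h1 : ((inner ℂ ((T ^ m) (x - s)) ((T ^ m) (x - s)) : ℂ)).re = ‖(T ^ m) (x - s)‖ ^ 2 := by
        have := @inner_self_eq_norm_sq ℂ _ _ _ _ ((T ^ m) (x - s))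
        simpa using this
      rw [h1]
      positivity
    have h2 : (a x x).re - (a x s).re ≥ 0 := by
      have := hnonneg
      rw [hfinal] at this
      simpa [Complex.sub_re] using this
    have h3 : (a x s).re = ∑ n ∈ F, (a (Q n x) (Q n x)).re := by
      rw [hS, Complex.re_sum]
    linarith
  -- consequences: uniform bounds
  have hGQ : ∀ n x, Gn n (Q n x) = Gn n x := by
    intro n x
    have h1 : An n (Gn n (Q n x)) = An n (Gn n x) := by
      rw [hAGn, hAGn, hQQ]
    have h2 : Gn n (An n (Gn n (Q n x))) = Gn n (An n (Gn n x)) := by rw [h1]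
    rwa [hGAn, hGAn] at h2
  have hsumG : ∀ x (F : Finset ℕ), ∑ n ∈ F, ‖Gn n x‖ ^ 2 ≤ Cp ^ 2 * ‖x‖ ^ 2 := by
    intro x F
    have h1 : ∀ n ∈ F, ‖Gn n x‖ ^ 2 ≤ (a (Q n x) (Q n x)).re := by
      intro n _
      rw [← hGQ n x]
      exact halow n (Q n x) (hQmem n x)
    calc ∑ n ∈ F, ‖Gn n x‖ ^ 2 ≤ ∑ n ∈ F, (a (Q n x) (Q n x)).re :=
          Finset.sum_le_sum h1
      _ ≤ (a x x).re := hbesselP x F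
      _ ≤ Cp ^ 2 * ‖x‖ ^ 2 := hare_up x
  have hGle : ∀ n x, ‖Gn n x‖ ≤ Cp * ‖x‖ := by
    intro n x
    have h1 : ‖Gn n x‖ ^ 2 ≤ Cp ^ 2 * ‖x‖ ^ 2 := by
      have := hsumG x {n}
      simpa using this
    nlinarith [norm_nonneg (Gn n x), norm_nonneg x, mul_nonneg hCppos.le (norm_nonneg x)]
  have hQnorm : ∀ n x, ‖Q n x‖ ≤ CX * Cp * ‖x‖ := by
    intro n x
    calc ‖Q n x‖ = ‖An n (Gn n x)‖ := by rw [hAGn]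
      _ ≤ CX * ‖Gn n x‖ := hAnnorm n _
      _ ≤ CX * (Cp * ‖x‖) := mul_le_mul_of_nonneg_left (hGle n x) hCXpos.le
      _ = CX * Cp * ‖x‖ := by ring
  -- dual side
  set Ts : H →L[ℂ] H := ContinuousLinearMap.adjoint T with hTsdef
  have hTs_pow : ∀ m, Ts ^ m = ContinuousLinearMap.adjoint (T ^ m) := by
    intro m
    induction m with
    | zero =>
        rw [pow_zero, pow_zero]
        ext u
        apply ext_inner_right ℂ
        intro v
        rw [ContinuousLinearMap.adjoint_inner_left]
        simp
    | succ j ih =>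
        rw [pow_succ, ih, hTsdef]
        rw [show T ^ (j+1) = T.comp (T ^ j) by rw [pow_succ']; rfl]
        rw [ContinuousLinearMap.adjoint_comp]
        rfl
  have hTs_app : ∀ m (y : H), (Ts ^ m) y = ContinuousLinearMap.adjoint (T ^ m) y := by
    intro m y; rw [hTs_pow]
  have hTs_norm : ∀ m (y : H), ‖(Ts ^ m) y‖ ≤ Cp * ‖y‖ := by
    intro m y
    rw [hTs_app]
    have h1 : ‖ContinuousLinearMap.adjoint (T ^ m)‖ = ‖T ^ m‖ :=
      ContinuousLinearMap.adjoint.norm_map (T ^ m)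
    calc ‖ContinuousLinearMap.adjoint (T ^ m) y‖
        ≤ ‖ContinuousLinearMap.adjoint (T ^ m)‖ * ‖y‖ := ContinuousLinearMap.le_opNorm _ _
      _ ≤ Cp * ‖y‖ := by
          rw [h1]
          exact mul_le_mul_of_nonneg_right (hCp m) (norm_nonneg y)
  set A' : ∀ n, K0 n →L[ℂ] H := fun n => ContinuousLinearMap.adjoint (Gn n) with hA'def
  have hA'mem : ∀ n u, A' n u ∈ (Vn n)ᗮ := by
    intro n u
    rw [Submodule.mem_orthogonal]
    intro v hv
    rw [hA'def]
    simp only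
    rw [ContinuousLinearMap.adjoint_inner_right]
    have : Gn n v = 0 := by
      have h1 : An n (Gn n v) = 0 := by rw [hAGn, hQker n v hv]
      have h2 : Gn n (An n (Gn n v)) = Gn n 0 := by rw [h1]
      rwa [hGAn, map_zero] at h2
    rw [this, inner_zero_left]
  have hA'bb : ∀ n u, ‖u‖ ≤ CX * ‖A' n u‖ := by
    intro n u
    rcases eq_or_ne u 0 with rfl | hu
    · simp
    · have h1 : (‖u‖ : ℝ) ^ 2 = RCLike.re (inner ℂ u u : ℂ) := (inner_self_eq_norm_sq _).symm
      have h2 : (inner ℂ u u : ℂ) = inner ℂ (A' n u) (An n u) := by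
        rw [hA'def]
        simp only
        rw [ContinuousLinearMap.adjoint_inner_left, hGAn]
      have h3 : ‖(inner ℂ (A' n u) (An n u) : ℂ)‖ ≤ ‖A' n u‖ * (CX * ‖u‖) := by
        calc ‖(inner ℂ (A' n u) (An n u) : ℂ)‖ ≤ ‖A' n u‖ * ‖An n u‖ := norm_inner_le_norm _ _
          _ ≤ ‖A' n u‖ * (CX * ‖u‖) :=
              mul_le_mul_of_nonneg_left (hAnnorm n u) (norm_nonneg _)
      have h4 : RCLike.re (inner ℂ u u : ℂ) ≤ ‖(inner ℂ (A' n u) (An n u) : ℂ)‖ := by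
        rw [h2]; exact RCLike.re_le_norm _
      have h5 : 0 < ‖u‖ := norm_pos_iff.2 hu
      nlinarith [norm_nonneg (A' n u)]
  have hA'surj : ∀ n y, y ∈ (Vn n)ᗮ → ∃ u, A' n u = y := by
    intro n y hy
    have hanti : AntilipschitzWith (Real.toNNReal CX) (A' n) := by
      refine AntilipschitzWith.of_le_mul_dist fun u v => ?_
      rw [dist_eq_norm, dist_eq_norm, ← map_sub, Real.coe_toNNReal _ hCXpos.le]
      exact hA'bb n (u - v)
    have hclosed : IsClosed (Set.range (A' n)) :=
      hanti.isClosed_range (A' n).uniformContinuous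
    set R : Submodule ℂ H := LinearMap.range (A' n : K0 n →ₗ[ℂ] H) with hRdef
    have hRclosed : IsClosed (R : Set H) := by
      have : (R : Set H) = Set.range (A' n) := by
        rw [hRdef]
        exact LinearMap.coe_range _
      rw [this]
      exact hclosed
    haveI : CompleteSpace R := hRclosed.completeSpace_coe
    have hyR : y ∈ Rᗮᗮ := by
      rw [Submodule.mem_orthogonal]
      intro z hz
      have hGnz : Gn n z = 0 := by
        have h1 : ∀ u, (inner ℂ u (Gn n z) : ℂ) = 0 := by
          intro u
          have h2 : A' n u ∈ R := LinearMap.mem_range_self _ u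
          have h3 := (Submodule.mem_orthogonal R z).1 hz (A' n u) h2
          rw [hA'def] at h3
          simp only at h3
          rwa [ContinuousLinearMap.adjoint_inner_left] at h3
        have := h1 (Gn n z)
        rwa [inner_self_eq_zero] at this
      have hzV : z ∈ Vn n := by
        apply hkerQ n z
        have h1 : An n (Gn n z) = Q n z := hAGn n z
        rw [hGnz, map_zero] at h1
        exact h1.symm
      exact (Submodule.mem_orthogonal (Vn n) y).1 hy z hzV
    rw [Submodule.orthogonal_orthogonal R] at hyR
    obtain ⟨u, hu⟩ := hyR
    exact ⟨u, hu⟩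
  have hGnT_clm : ∀ n, (Gn n).comp T = (U0 n).comp (Gn n) := by
    intro n
    ext x
    exact hGnT n x
  have hTsA' : ∀ n u, Ts (A' n u) = A' n (ContinuousLinearMap.adjoint (U0 n) u) := by
    intro n u
    have h1 := congrArg ContinuousLinearMap.adjoint (hGnT_clm n)
    rw [ContinuousLinearMap.adjoint_comp, ContinuousLinearMap.adjoint_comp] at h1
    rw [hTsdef, hA'def]
    simp only
    calc ContinuousLinearMap.adjoint T (ContinuousLinearMap.adjoint (Gn n) u)
        = ((ContinuousLinearMap.adjoint T).comp (ContinuousLinearMap.adjoint (Gn n))) u := rfl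
      _ = ((ContinuousLinearMap.adjoint (Gn n)).comp (ContinuousLinearMap.adjoint (U0 n))) u := by
          rw [h1]
      _ = _ := rfl
  have hTspowA' : ∀ n u m, (Ts ^ m) (A' n u) =
      A' n (((ContinuousLinearMap.adjoint (U0 n)) ^ m) u) := by
    intro n u m
    induction m with
    | zero => simp
    | succ j ih =>
        rw [pow_apply_succ_out, ih, hTsA', ← pow_apply_succ_out]
  have hadjU_unit : ∀ n, IsUnitaryOp (ContinuousLinearMap.adjoint (U0 n)) :=
    fun n => unitary_adj_unitary (hU0 n)
  have hdual_low : ∀ n y, y ∈ (Vn n)ᗮ → ∀ m, ‖y‖ ≤ (CX ^ 2 * Cp) * ‖(Ts ^ m) y‖ := by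
    intro n y hy m
    rcases eq_or_ne y 0 with rfl | hy0
    · simp
    · set q := Q n y with hq
      set xm := An n (((ContinuousLinearMap.adjoint (U0 n)) ^ m) (Gn n q)) with hxm
      have hTmxm : (T ^ m) xm = q := by
        rw [hxm, hTpowA, pow_comp_adj_pow (hU0 n), hAGn, hq, hQQ]
      have hyy : (inner ℂ y y : ℂ) = inner ℂ y q := by
        have hdq : y - q ∈ Vn n := by
          apply hkerQ
          rw [map_sub, hq, hQQ, sub_self]
        have h1 : (inner ℂ (y - q) y : ℂ) = 0 := by
          have h2 := (Submodule.mem_orthogonal (Vn n) y).1 hy _ hdq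
          exact h2
        have h3 : (inner ℂ y (y - q) : ℂ) = 0 := by
          rw [← inner_conj_symm, h1, map_zero]
        rw [inner_sub_right] at h3
        linear_combination h3
      have hxmnorm : ‖xm‖ ≤ CX ^ 2 * Cp * ‖y‖ := by
        calc ‖xm‖ ≤ CX * ‖((ContinuousLinearMap.adjoint (U0 n)) ^ m) (Gn n q)‖ :=
              hAnnorm n _
          _ = CX * ‖Gn n q‖ := by rw [unitary_pow_norm (hadjU_unit n).1]
          _ ≤ CX * ‖Q n q‖ := mul_le_mul_of_nonneg_left (hGnnorm n q) hCXpos.le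
          _ = CX * ‖q‖ := by rw [hq, hQQ]
          _ ≤ CX * (CX * Cp * ‖y‖) := by
              apply mul_le_mul_of_nonneg_left _ hCXpos.le
              rw [hq]
              exact hQnorm n y
          _ = CX ^ 2 * Cp * ‖y‖ := by ring
      have hpair : (inner ℂ y q : ℂ) = inner ℂ ((Ts ^ m) y) xm := by
        rw [← hTmxm, hTs_app]
        rw [ContinuousLinearMap.adjoint_inner_left]
      have h1 : (‖y‖ : ℝ) ^ 2 = RCLike.re (inner ℂ y y : ℂ) := (inner_self_eq_norm_sq _).symm
      have h2 : RCLike.re (inner ℂ y y : ℂ) ≤ ‖(inner ℂ ((Ts ^ m) y) xm : ℂ)‖ := by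
        rw [hyy, hpair]
        exact RCLike.re_le_norm _
      have h3 : ‖(inner ℂ ((Ts ^ m) y) xm : ℂ)‖ ≤ ‖(Ts ^ m) y‖ * (CX ^ 2 * Cp * ‖y‖) := by
        calc ‖(inner ℂ ((Ts ^ m) y) xm : ℂ)‖ ≤ ‖(Ts ^ m) y‖ * ‖xm‖ := norm_inner_le_norm _ _
          _ ≤ _ := mul_le_mul_of_nonneg_left hxmnorm (norm_nonneg _)
      have h5 : 0 < ‖y‖ := norm_pos_iff.2 hy0
      nlinarith [norm_nonneg ((Ts ^ m) y)]
  -- intersection lemmas from (cap)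
  have hQzero : ∀ r : H, (∀ k, Q k r = 0) → r = 0 := by
    intro r hr
    have htail : ∀ j, r ∈ (⨆ k ∈ {k : ℕ | j ≤ k}, Hn k).topologicalClosure := by
      intro j
      induction j with
      | zero =>
          have h0 : Hn 0 ⊔ Vn 0 ≤ (⨆ k ∈ {k : ℕ | 0 ≤ k}, Hn k).topologicalClosure := by
            apply sup_le
            · exact le_trans
                (le_iSup₂ (f := fun (i : ℕ) (_ : i ∈ {k : ℕ | 0 ≤ k}) => Hn i) 0 (Nat.zero_le 0))
                (Submodule.le_topologicalClosure _)
            · rw [hVn 0]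
              apply Submodule.topologicalClosure_mono
              refine iSup_le fun k => iSup_le fun _ => ?_
              exact le_iSup₂ (f := fun (i : ℕ) (_ : i ∈ {k : ℕ | 0 ≤ k}) => Hn i) k (Nat.zero_le k)
          exact h0 (by rw [(hmain0 0).2]; trivial)
      | succ j ih =>
          set Rj : H →L[ℂ] H := ContinuousLinearMap.id ℂ H - Q j with hRj
          have hRjapp : ∀ z : H, Rj z = z - Q j z := by
            intro z
            rw [hRj]
            simp
          have hmapR : Submodule.map (Rj : H →ₗ[ℂ] H) (⨆ k ∈ {k : ℕ | j ≤ k}, Hn k)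
              ≤ ⨆ k ∈ {k : ℕ | j + 1 ≤ k}, Hn k := by
            rw [Submodule.map_iSup]
            refine iSup_le fun k => ?_
            rw [Submodule.map_iSup]
            refine iSup_le fun hk => ?_
            rcases Nat.lt_or_ge j k with hlt | hge
            · intro y hy
              obtain ⟨z, hz, rfl⟩ := hy
              have hz' : Rj z = z := by
                rw [hRjapp, hQker j z (hHV j k (by omega) hz), sub_zero]
              rw [ContinuousLinearMap.coe_coe, hz']
              exact le_iSup₂ (f := fun (i : ℕ) (_ : i ∈ {k : ℕ | j + 1 ≤ k}) => Hn i) k hlt hz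
            · have hkj : k = j := le_antisymm hge hk
              subst hkj
              intro y hy
              obtain ⟨z, hz, rfl⟩ := hy
              have hz' : Rj z = 0 := by
                rw [hRjapp, hQid k z hz, sub_self]
              rw [ContinuousLinearMap.coe_coe, hz']
              exact Submodule.zero_mem _
          have hr' : (r : H) ∈ closure ((⨆ k ∈ {k : ℕ | j ≤ k}, Hn k : Submodule ℂ H) : Set H) := by
            have h : r ∈ (((⨆ k ∈ {k : ℕ | j ≤ k}, Hn k).topologicalClosure : Submodule ℂ H) : Set H) := ih
            rwa [Submodule.topologicalClosure_coe] at h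
          have h2 : Rj r ∈
              closure (Rj '' ((⨆ k ∈ {k : ℕ | j ≤ k}, Hn k : Submodule ℂ H) : Set H)) :=
            image_closure_subset_closure_image Rj.continuous ⟨r, hr', rfl⟩
          have hRr : Rj r = r := by rw [hRjapp, hr j, sub_zero]
          rw [hRr] at h2
          have h3 : r ∈ closure ((⨆ k ∈ {k : ℕ | j + 1 ≤ k}, Hn k : Submodule ℂ H) : Set H) := by
            refine closure_mono ?_ h2
            rintro y ⟨z, hz, rfl⟩
            exact hmapR ⟨z, hz, rfl⟩
          have h4 : r ∈ (((⨆ k ∈ {k : ℕ | j + 1 ≤ k}, Hn k).topologicalClosure : Submodule ℂ H) : Set H) := by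
            rw [Submodule.topologicalClosure_coe]
            exact h3
          exact h4
    have hmem : r ∈ (⨅ n : ℕ, (⨆ k ∈ {k : ℕ | n ≤ k}, Hn k).topologicalClosure) :=
      (Submodule.mem_iInf _).2 htail
    rw [hcap] at hmem
    simpa using hmem
  have hInter : ∀ n z, (∀ k, k ≠ n → z ∈ Vn k) → z ∈ Hn n := by
    intro n z hz
    have hrk : ∀ k, Q k (z - Q n z) = 0 := by
      intro k
      rcases eq_or_ne k n with rfl | hkn
      · rw [map_sub, hQQ, sub_self]
      · rw [map_sub, hQker k z (hz k hkn),
          hQker k (Q n z) (hHV k n (Ne.symm hkn) (hQmem n z)), sub_self]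
    have h0 : z - Q n z = 0 := hQzero _ hrk
    have : z = Q n z := by
      have := sub_eq_zero.1 h0
      exact this
    rw [this]
    exact hQmem n z
  have hVnclosed : ∀ k, IsClosed ((Vn k : Set H)) := by
    intro k
    rw [hVn k]
    exact Submodule.isClosed_topologicalClosure _
  -- the dual form b
  set b : H → H → ℂ := fun y z => LIM (fun m => (inner ℂ ((Ts ^ m) y) ((Ts ^ m) z) : ℂ)) with hbdef
  have hbBdd : ∀ y z, IsBdd (fun m => (inner ℂ ((Ts ^ m) y) ((Ts ^ m) z) : ℂ)) := by
    intro y z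
    refine ⟨Cp * ‖y‖ * (Cp * ‖z‖), fun m => ?_⟩
    calc ‖(inner ℂ ((Ts ^ m) y) ((Ts ^ m) z) : ℂ)‖ ≤ ‖(Ts ^ m) y‖ * ‖(Ts ^ m) z‖ :=
          norm_inner_le_norm _ _
      _ ≤ (Cp * ‖y‖) * (Cp * ‖z‖) :=
          mul_le_mul (hTs_norm m y) (hTs_norm m z) (norm_nonneg _) (by positivity)
  have hbconj : ∀ y z, b z y = (starRingEnd ℂ) (b y z) := by
    intro y z
    rw [hbdef]
    simp only
    rw [← LIM_conj (hbBdd y z)]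
    congr 1
    funext m
    rw [← inner_conj_symm]
  have hbsubl : ∀ x y z, b (x - y) z = b x z - b y z := by
    intro x y z
    rw [hbdef]
    simp only
    have h1 : (fun m => (inner ℂ ((Ts ^ m) (x - y)) ((Ts ^ m) z) : ℂ))
        = fun m => (inner ℂ ((Ts ^ m) x) ((Ts ^ m) z) : ℂ) +
            (-1 : ℂ) * (inner ℂ ((Ts ^ m) y) ((Ts ^ m) z) : ℂ) := by
      funext m
      rw [map_sub, inner_sub_left]
      ring
    rw [h1, LIM_add (hbBdd x z) ((hbBdd y z).const_mul _), LIM_const_mul (hbBdd y z)]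
    ring
  have hbsubr : ∀ x y z, b x (y - z) = b x y - b x z := by
    intro x y z
    rw [hbdef]
    simp only
    have h1 : (fun m => (inner ℂ ((Ts ^ m) x) ((Ts ^ m) (y - z)) : ℂ))
        = fun m => (inner ℂ ((Ts ^ m) x) ((Ts ^ m) y) : ℂ) +
            (-1 : ℂ) * (inner ℂ ((Ts ^ m) x) ((Ts ^ m) z) : ℂ) := by
      funext m
      rw [map_sub, inner_sub_right]
      ring
    rw [h1, LIM_add (hbBdd x y) ((hbBdd x z).const_mul _), LIM_const_mul (hbBdd x z)]
    ring
  have hbim : ∀ y, (b y y).im = 0 := by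
    intro y
    rw [hbdef]
    refine LIM_im_zero (hbBdd y y) fun m => ?_
    have h := inner_self_im (𝕜 := ℂ) ((Ts ^ m) y)
    rwa [RCLike.im_to_complex] at h
  have hbre_up : ∀ y, (b y y).re ≤ Cp ^ 2 * ‖y‖ ^ 2 := by
    intro y
    have h1 : ‖b y y‖ ≤ Cp * ‖y‖ * (Cp * ‖y‖) := by
      rw [hbdef]
      refine LIM_norm_le (by positivity) fun m => ?_
      calc ‖(inner ℂ ((Ts ^ m) y) ((Ts ^ m) y) : ℂ)‖ ≤ ‖(Ts ^ m) y‖ * ‖(Ts ^ m) y‖ :=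
            norm_inner_le_norm _ _
        _ ≤ (Cp * ‖y‖) * (Cp * ‖y‖) :=
            mul_le_mul (hTs_norm m y) (hTs_norm m y) (norm_nonneg _) (by positivity)
    calc (b y y).re ≤ ‖b y y‖ := Complex.re_le_norm _
      _ ≤ Cp * ‖y‖ * (Cp * ‖y‖) := h1
      _ = Cp ^ 2 * ‖y‖ ^ 2 := by ring
  have hbzero : ∀ y, b y 0 = 0 := by
    intro y
    have := hbsubr y 0 0
    simpa using this
  have hbLip : ∀ y, Continuous (fun z => b y z) := by
    intro y
    have hlip : LipschitzWith (Real.toNNReal (Cp ^ 2 * ‖y‖)) (fun z => b y z) := by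
      refine LipschitzWith.of_dist_le_mul fun z w => ?_
      rw [dist_eq_norm, dist_eq_norm, ← hbsubr]
      have h1 : ‖b y (z - w)‖ ≤ Cp * ‖y‖ * (Cp * ‖z - w‖) := by
        rw [hbdef]
        refine LIM_norm_le (by positivity) fun m => ?_
        calc ‖(inner ℂ ((Ts ^ m) y) ((Ts ^ m) (z - w)) : ℂ)‖
            ≤ ‖(Ts ^ m) y‖ * ‖(Ts ^ m) (z - w)‖ := norm_inner_le_norm _ _
          _ ≤ (Cp * ‖y‖) * (Cp * ‖z - w‖) :=
              mul_le_mul (hTs_norm m y) (hTs_norm m _) (norm_nonneg _) (by positivity)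
      calc ‖b y (z - w)‖ ≤ Cp * ‖y‖ * (Cp * ‖z - w‖) := h1
        _ ≤ Real.toNNReal (Cp ^ 2 * ‖y‖) * ‖z - w‖ := by
            rw [Real.coe_toNNReal _ (by positivity)]
            nlinarith [norm_nonneg (z - w), norm_nonneg y]
    exact hlip.continuous
  -- dual orthogonality
  have hbortho : ∀ n k, n ≠ k → ∀ y z, y ∈ (Vn n)ᗮ → z ∈ (Vn k)ᗮ → b y z = 0 := by
    intro n k hnk y z hy hz
    obtain ⟨u, hu⟩ := hA'surj n y hy
    obtain ⟨v, hv⟩ := hA'surj k z hz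
    rw [hbdef]
    simp only
    have heq : (fun m => (inner ℂ ((Ts ^ m) y) ((Ts ^ m) z) : ℂ))
        = fun m => (inner ℂ
            (((ContinuousLinearMap.adjoint (ContinuousLinearMap.adjoint (U0 k))) ^ m)
              (((ContinuousLinearMap.adjoint (A' k)).comp (A' n))
                (((ContinuousLinearMap.adjoint (U0 n)) ^ m) u))) v : ℂ) := by
      funext m
      rw [← hu, ← hv, hTspowA', hTspowA']
      rw [← ContinuousLinearMap.adjoint_inner_left (A' k)]
      rw [inner_pow_right_move]
      rfl
    rw [heq]
    refine cross_lim (ContinuousLinearMap.adjoint (U0 n)) (ContinuousLinearMap.adjoint (U0 k))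
      (hadjU_unit n) (hadjU_unit k) ?_ _ u v
    intro Z hZeq
    have h1 := congrArg ContinuousLinearMap.adjoint hZeq
    rw [ContinuousLinearMap.adjoint_comp, ContinuousLinearMap.adjoint_comp,
      ContinuousLinearMap.adjoint_adjoint, ContinuousLinearMap.adjoint_adjoint] at h1
    have h2 := hsing k n (Ne.symm hnk) (ContinuousLinearMap.adjoint Z) h1.symm
    calc Z = ContinuousLinearMap.adjoint (ContinuousLinearMap.adjoint Z) :=
          (ContinuousLinearMap.adjoint_adjoint Z).symm
      _ = ContinuousLinearMap.adjoint 0 := by rw [h2]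
      _ = 0 := by
          ext w
          apply ext_inner_right ℂ
          intro s
          rw [ContinuousLinearMap.adjoint_inner_left]
          simp
  -- adjoint projections
  have hQsV : ∀ n y, ContinuousLinearMap.adjoint (Q n) y ∈ (Vn n)ᗮ := by
    intro n y
    rw [Submodule.mem_orthogonal]
    intro v hv
    rw [ContinuousLinearMap.adjoint_inner_right, hQker n v hv, inner_zero_left]
  have hQsdiff : ∀ n y, y - ContinuousLinearMap.adjoint (Q n) y ∈ (Hn n)ᗮ := by
    intro n y
    rw [Submodule.mem_orthogonal]
    intro h hh
    rw [inner_sub_right, ContinuousLinearMap.adjoint_inner_right, hQid n h hh, sub_self]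
  -- b vanishes between (Vn n)ᗮ and (Hn n)ᗮ
  have hb_van : ∀ n y, y ∈ (Vn n)ᗮ → ∀ z, z ∈ (Hn n)ᗮ → b y z = 0 := by
    intro n y hy z hz
    have hbaddr : ∀ z w, b y (z + w) = b y z + b y w := by
      intro z w
      have h1 := hbsubr y (z + w) w
      simp only [add_sub_cancel_right] at h1
      linear_combination -h1
    set Sy : Submodule ℂ H :=
      { carrier := {z | b y z = 0}
        add_mem' := by
          intro u v hu hv
          simp only [Set.mem_setOf_eq] at hu hv ⊢
          rw [hbaddr, hu, hv, add_zero]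
        zero_mem' := hbzero y
        smul_mem' := by
          intro c v hv
          simp only [Set.mem_setOf_eq] at hv ⊢
          have h1 : b y (c • v) = c * b y v := by
            rw [hbdef]
            simp only
            have h2 : (fun m => (inner ℂ ((Ts ^ m) y) ((Ts ^ m) (c • v)) : ℂ))
                = fun m => c * (inner ℂ ((Ts ^ m) y) ((Ts ^ m) v) : ℂ) := by
              funext m
              rw [map_smul, inner_smul_right]
            rw [h2, LIM_const_mul (hbBdd y v)]
          rw [h1, hv, mul_zero] } with hSydef
    have hSyclosed : IsClosed (Sy : Set H) := by
      have : (Sy : Set H) = (fun z => b y z) ⁻¹' {0} := rfl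
      rw [this]
      exact IsClosed.preimage (hbLip y) isClosed_singleton
    set Wn : Submodule ℂ H := (⨆ k ∈ {k : ℕ | k ≠ n}, (Vn k)ᗮ).topologicalClosure with hWndef
    have hWn_le_Sy : Wn ≤ Sy := by
      rw [hWndef]
      refine Submodule.topologicalClosure_minimal _ ?_ hSyclosed
      refine iSup_le fun k => iSup_le fun hk => ?_
      intro w hw
      exact hbortho n k (Ne.symm hk) y w hy hw
    have hWorth : Wnᗮ ≤ Hn n := by
      intro w hw
      refine hInter n w fun k hk => ?_
      have h3 : (Vn k)ᗮ ≤ Wn :=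
        le_trans (le_iSup₂ (f := fun (i : ℕ) (_ : i ∈ {k' : ℕ | k' ≠ n}) => (Vn i)ᗮ) k hk)
          (Submodule.le_topologicalClosure _)
      have h4 : Wnᗮ ≤ ((Vn k)ᗮ)ᗮ := Submodule.orthogonal_le h3
      have h5 : ((Vn k)ᗮ)ᗮ = Vn k := by
        haveI : CompleteSpace (Vn k) := (hVnclosed k).completeSpace_coe
        exact Submodule.orthogonal_orthogonal _
      rw [← h5]
      exact h4 hw
    have hHperp : (Hn n)ᗮ ≤ Wn := by
      have h6 : (Hn n)ᗮ ≤ Wnᗮᗮ := Submodule.orthogonal_le hWorth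
      haveI : CompleteSpace Wn := (Submodule.isClosed_topologicalClosure _).completeSpace_coe
      rwa [Submodule.orthogonal_orthogonal] at h6
    exact hWn_le_Sy (hHperp hz)
  -- finite sums for b
  have hbsumr : ∀ y (F : Finset ℕ) (w : ℕ → H), b y (∑ n ∈ F, w n) = ∑ n ∈ F, b y (w n) := by
    intro y F w
    refine Finset.induction_on F (by simpa using hbzero y) ?_
    intro s F' hns ih
    rw [Finset.sum_insert hns, Finset.sum_insert hns, ← ih]
    have h1 := hbsubr y (w s + ∑ n ∈ F', w n) (∑ n ∈ F', w n)
    simp only [add_sub_cancel_right] at h1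
    linear_combination -h1
  have hbsuml : ∀ y (F : Finset ℕ) (w : ℕ → H), b (∑ n ∈ F, w n) y = ∑ n ∈ F, b (w n) y := by
    intro y F w
    rw [hbconj, hbsumr, map_sum]
    exact Finset.sum_congr rfl fun n _ => (hbconj y (w n)).symm
  -- dual Bessel inequality
  have hbesselD : ∀ y (F : Finset ℕ),
      ∑ n ∈ F, (b (ContinuousLinearMap.adjoint (Q n) y) (ContinuousLinearMap.adjoint (Q n) y)).re
        ≤ (b y y).re := by
    intro y F
    set w : ℕ → H := fun n => ContinuousLinearMap.adjoint (Q n) y with hwdef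
    set s := ∑ n ∈ F, w n with hsdef
    have hkey1 : ∀ n ∈ F, b y (w n) = b (w n) (w n) := by
      intro n _
      have h1 : b (y - w n) (w n) = 0 := by
        rw [hbconj, hb_van n (w n) (hQsV n y) (y - w n) (hQsdiff n y), map_zero]
      have h2 := hbsubl y (w n) (w n)
      rw [h1] at h2
      linear_combination -h2
    have hkey2 : ∀ n ∈ F, ∀ k ∈ F, n ≠ k → b (w n) (w k) = 0 := by
      intro n _ k _ hnk
      exact hbortho n k hnk _ _ (hQsV n y) (hQsV k y)
    have hS : b y s = ∑ n ∈ F, b (w n) (w n) := by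
      rw [hsdef, hbsumr]
      exact Finset.sum_congr rfl hkey1
    have hss : b s s = ∑ n ∈ F, b (w n) (w n) := by
      rw [hsdef, hbsuml]
      refine Finset.sum_congr rfl fun n hn => ?_
      rw [hbsumr]
      rw [Finset.sum_eq_single_of_mem n hn]
      intro k hk hkn
      exact hkey2 n hn k hk (Ne.symm hkn)
    have hsx : b s y = (starRingEnd ℂ) (b y s) := (hbconj y s)
    have hexp : b (y - s) (y - s) = b y y - b y s - b s y + b s s := by
      rw [hbsubl, hbsubr, hbsubr]
      ring
    have hSim : (b y s).im = 0 := by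
      rw [hS, Complex.im_sum]
      exact Finset.sum_eq_zero fun n _ => hbim (w n)
    have hconjS : (starRingEnd ℂ) (b y s) = b y s := by
      rw [Complex.conj_eq_iff_im]
      exact hSim
    have hfinal : b (y - s) (y - s) = b y y - b y s := by
      rw [hexp, hsx, hconjS, hS, hss]
      ring
    have hnonneg : 0 ≤ (b (y - s) (y - s)).re := by
      rw [hbdef]
      refine LIM_re_ge (hbBdd _ _) fun m => ?_
      have h1 : ((inner ℂ ((Ts ^ m) (y - s)) ((Ts ^ m) (y - s)) : ℂ)).re
          = ‖(Ts ^ m) (y - s)‖ ^ 2 := by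
        have := @inner_self_eq_norm_sq ℂ _ _ _ _ ((Ts ^ m) (y - s))
        simpa using this
      rw [h1]
      positivity
    have h2 : (b y y).re - (b y s).re ≥ 0 := by
      have := hnonneg
      rw [hfinal] at this
      simpa [Complex.sub_re] using this
    have h3 : (b y s).re = ∑ n ∈ F, (b (w n) (w n)).re := by
      rw [hS, Complex.re_sum]
    linarith
  -- the dual square-function estimate
  have hQsEst : ∀ y (F : Finset ℕ),
      ∑ n ∈ F, ‖ContinuousLinearMap.adjoint (Q n) y‖ ^ 2
        ≤ (CX ^ 2 * Cp) ^ 2 * Cp ^ 2 * ‖y‖ ^ 2 := by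
    intro y F
    have hterm : ∀ n, ‖ContinuousLinearMap.adjoint (Q n) y‖ ^ 2
        ≤ (CX ^ 2 * Cp) ^ 2 *
          (b (ContinuousLinearMap.adjoint (Q n) y) (ContinuousLinearMap.adjoint (Q n) y)).re := by
      intro n
      set q := ContinuousLinearMap.adjoint (Q n) y with hqdef
      have hlow : (‖q‖ / (CX ^ 2 * Cp)) ^ 2 ≤ (b q q).re := by
        rw [hbdef]
        refine LIM_re_ge (hbBdd q q) fun m => ?_
        have h1 : ((inner ℂ ((Ts ^ m) q) ((Ts ^ m) q) : ℂ)).re = ‖(Ts ^ m) q‖ ^ 2 := by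
          have := @inner_self_eq_norm_sq ℂ _ _ _ _ ((Ts ^ m) q)
          simpa using this
        rw [h1]
        have h2 := hdual_low n q (hQsV n y) m
        have h3 : 0 < CX ^ 2 * Cp := by positivity
        rw [div_pow]
        rw [div_le_iff₀ (by positivity)]
        nlinarith [norm_nonneg ((Ts ^ m) q), norm_nonneg q]
      have h4 : 0 < (CX ^ 2 * Cp) ^ 2 := by positivity
      have h5 := mul_le_mul_of_nonneg_left hlow h4.le
      calc ‖q‖ ^ 2 = (CX ^ 2 * Cp) ^ 2 * (‖q‖ / (CX ^ 2 * Cp)) ^ 2 := by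
            field_simp
        _ ≤ (CX ^ 2 * Cp) ^ 2 * (b q q).re := h5
    calc ∑ n ∈ F, ‖ContinuousLinearMap.adjoint (Q n) y‖ ^ 2
        ≤ ∑ n ∈ F, (CX ^ 2 * Cp) ^ 2 *
            (b (ContinuousLinearMap.adjoint (Q n) y) (ContinuousLinearMap.adjoint (Q n) y)).re :=
          Finset.sum_le_sum fun n _ => hterm n
      _ = (CX ^ 2 * Cp) ^ 2 * ∑ n ∈ F,
            (b (ContinuousLinearMap.adjoint (Q n) y) (ContinuousLinearMap.adjoint (Q n) y)).re := by
          rw [Finset.mul_sum]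
      _ ≤ (CX ^ 2 * Cp) ^ 2 * (b y y).re := by
          apply mul_le_mul_of_nonneg_left (hbesselD y F) (by positivity)
      _ ≤ (CX ^ 2 * Cp) ^ 2 * (Cp ^ 2 * ‖y‖ ^ 2) :=
          mul_le_mul_of_nonneg_left (hbre_up y) (by positivity)
      _ = (CX ^ 2 * Cp) ^ 2 * Cp ^ 2 * ‖y‖ ^ 2 := by ring
  -- the upper ℓ² estimate for sums of vectors from the Hn's
  set KK : ℝ := CX ^ 2 * Cp * Cp with hKKdef
  have hKKpos : 0 < KK := by rw [hKKdef]; positivity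
  have hupper : ∀ (F : Finset ℕ) (w : ℕ → H), (∀ n ∈ F, w n ∈ Hn n) →
      ‖∑ n ∈ F, w n‖ ≤ KK * Real.sqrt (∑ n ∈ F, ‖w n‖ ^ 2) := by
    intro F w hw
    set s := ∑ n ∈ F, w n with hsdef
    rcases eq_or_ne s 0 with hs0 | hs0
    · rw [hs0, norm_zero]
      positivity
    · have h1 : (‖s‖ : ℝ) ^ 2 = RCLike.re (inner ℂ s s : ℂ) := (inner_self_eq_norm_sq _).symm
      have h2 : (inner ℂ s s : ℂ) = ∑ n ∈ F, (inner ℂ (ContinuousLinearMap.adjoint (Q n) s) (w n) : ℂ) := by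
        rw [hsdef]
        rw [inner_sum F w]
        refine Finset.sum_congr rfl fun n hn => ?_
        rw [ContinuousLinearMap.adjoint_inner_left, hQid n (w n) (hw n hn)]
      have h3 : RCLike.re (inner ℂ s s : ℂ)
          ≤ ∑ n ∈ F, ‖ContinuousLinearMap.adjoint (Q n) s‖ * ‖w n‖ := by
        rw [h2]
        calc RCLike.re (∑ n ∈ F, (inner ℂ (ContinuousLinearMap.adjoint (Q n) s) (w n) : ℂ))
            ≤ ‖∑ n ∈ F, (inner ℂ (ContinuousLinearMap.adjoint (Q n) s) (w n) : ℂ)‖ :=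
              RCLike.re_le_norm _
          _ ≤ ∑ n ∈ F, ‖(inner ℂ (ContinuousLinearMap.adjoint (Q n) s) (w n) : ℂ)‖ :=
              norm_sum_le _ _
          _ ≤ ∑ n ∈ F, ‖ContinuousLinearMap.adjoint (Q n) s‖ * ‖w n‖ :=
              Finset.sum_le_sum fun n _ => norm_inner_le_norm _ _
      have hCS : (∑ n ∈ F, ‖ContinuousLinearMap.adjoint (Q n) s‖ * ‖w n‖) ^ 2
          ≤ (∑ n ∈ F, ‖ContinuousLinearMap.adjoint (Q n) s‖ ^ 2) * (∑ n ∈ F, ‖w n‖ ^ 2) :=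
        Finset.sum_mul_sq_le_sq_mul_sq F _ _
      have hsum1 : ∑ n ∈ F, ‖ContinuousLinearMap.adjoint (Q n) s‖ ^ 2 ≤ KK ^ 2 * ‖s‖ ^ 2 := by
        have := hQsEst s F
        rw [hKKdef]
        calc ∑ n ∈ F, ‖ContinuousLinearMap.adjoint (Q n) s‖ ^ 2
            ≤ (CX ^ 2 * Cp) ^ 2 * Cp ^ 2 * ‖s‖ ^ 2 := this
          _ = (CX ^ 2 * Cp * Cp) ^ 2 * ‖s‖ ^ 2 := by ring
      have hw2 : (0:ℝ) ≤ ∑ n ∈ F, ‖w n‖ ^ 2 := Finset.sum_nonneg fun n _ => sq_nonneg _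
      have hcs2 : (∑ n ∈ F, ‖ContinuousLinearMap.adjoint (Q n) s‖ * ‖w n‖)
          ≤ KK * ‖s‖ * Real.sqrt (∑ n ∈ F, ‖w n‖ ^ 2) := by
        have hnn : (0:ℝ) ≤ ∑ n ∈ F, ‖ContinuousLinearMap.adjoint (Q n) s‖ * ‖w n‖ :=
          Finset.sum_nonneg fun n _ => mul_nonneg (norm_nonneg _) (norm_nonneg _)
        have hrhsnn : (0:ℝ) ≤ KK * ‖s‖ * Real.sqrt (∑ n ∈ F, ‖w n‖ ^ 2) := by positivity
        have hsq : (∑ n ∈ F, ‖ContinuousLinearMap.adjoint (Q n) s‖ * ‖w n‖) ^ 2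
            ≤ (KK * ‖s‖ * Real.sqrt (∑ n ∈ F, ‖w n‖ ^ 2)) ^ 2 := by
          calc (∑ n ∈ F, ‖ContinuousLinearMap.adjoint (Q n) s‖ * ‖w n‖) ^ 2
              ≤ (∑ n ∈ F, ‖ContinuousLinearMap.adjoint (Q n) s‖ ^ 2) * (∑ n ∈ F, ‖w n‖ ^ 2) := hCS
            _ ≤ KK ^ 2 * ‖s‖ ^ 2 * (∑ n ∈ F, ‖w n‖ ^ 2) :=
                mul_le_mul_of_nonneg_right hsum1 hw2
            _ = (KK * ‖s‖) ^ 2 * (∑ n ∈ F, ‖w n‖ ^ 2) := by ring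
            _ = (KK * ‖s‖ * Real.sqrt (∑ n ∈ F, ‖w n‖ ^ 2)) ^ 2 := by
                rw [mul_pow (KK * ‖s‖) (Real.sqrt _), Real.sq_sqrt hw2]
        nlinarith
      have hfin : ‖s‖ ^ 2 ≤ KK * ‖s‖ * Real.sqrt (∑ n ∈ F, ‖w n‖ ^ 2) :=
        le_trans (le_trans (le_of_eq h1) h3) hcs2
      have hspos : 0 < ‖s‖ := norm_pos_iff.2 hs0
      nlinarith [hfin, hspos, Real.sqrt_nonneg (∑ n ∈ F, ‖w n‖ ^ 2), hKKpos]
  -- lp assembly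
  have h2toReal : (2 : ℝ≥0∞).toReal = 2 := by norm_num
  have hrpow2 : ∀ t : ℝ, 0 ≤ t → t ^ ((2 : ℝ≥0∞).toReal) = t ^ (2 : ℕ) := by
    intro t _
    rw [h2toReal]
    rw [show ((2 : ℝ) : ℝ) = ((2 : ℕ) : ℝ) by norm_num, Real.rpow_natCast]
  have hXmem : ∀ x : H, Memℓp (fun n => Gn n x) 2 := by
    intro x
    apply memℓp_gen
    have hs : Summable (fun n => ‖Gn n x‖ ^ (2 : ℕ)) := by
      apply summable_of_sum_range_le (c := Cp ^ 2 * ‖x‖ ^ 2) (fun n => by positivity)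
      intro N
      exact hsumG x (Finset.range N)
    have he : (fun n => ‖Gn n x‖ ^ ((2 : ℝ≥0∞).toReal)) = fun n => ‖Gn n x‖ ^ (2 : ℕ) := by
      funext n
      exact hrpow2 _ (norm_nonneg _)
    rw [he]
    exact hs
  set Xfun : H → lp K0 2 := fun x => ⟨fun n => Gn n x, hXmem x⟩ with hXfundef
  have hXfun_apply : ∀ (x : H) (n : ℕ), (Xfun x : ∀ i, K0 i) n = Gn n x := fun x n => rfl
  have hXnorm : ∀ x, ‖Xfun x‖ ≤ Cp * ‖x‖ := by
    intro x
    have hpos : 0 < (2 : ℝ≥0∞).toReal := by rw [h2toReal]; norm_num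
    rw [lp.norm_eq_tsum_rpow hpos]
    have hs : Summable (fun n => ‖(Xfun x : ∀ i, K0 i) n‖ ^ ((2 : ℝ≥0∞).toReal)) :=
      (lp.memℓp (Xfun x)).summable hpos
    have htsum : (∑' n, ‖(Xfun x : ∀ i, K0 i) n‖ ^ ((2 : ℝ≥0∞).toReal)) ≤ Cp ^ 2 * ‖x‖ ^ 2 := by
      apply Summable.tsum_le_of_sum_range_le hs
      intro N
      have he : ∀ n, ‖(Xfun x : ∀ i, K0 i) n‖ ^ ((2 : ℝ≥0∞).toReal) = ‖Gn n x‖ ^ (2 : ℕ) := by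
        intro n
        rw [hXfun_apply]
        exact hrpow2 _ (norm_nonneg _)
      calc ∑ n ∈ Finset.range N, ‖(Xfun x : ∀ i, K0 i) n‖ ^ ((2 : ℝ≥0∞).toReal)
          = ∑ n ∈ Finset.range N, ‖Gn n x‖ ^ (2 : ℕ) := Finset.sum_congr rfl fun n _ => he n
        _ ≤ Cp ^ 2 * ‖x‖ ^ 2 := hsumG x (Finset.range N)
    have htnonneg : 0 ≤ ∑' n, ‖(Xfun x : ∀ i, K0 i) n‖ ^ ((2 : ℝ≥0∞).toReal) := by
      apply tsum_nonneg
      intro n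
      positivity
    calc (∑' n, ‖(Xfun x : ∀ i, K0 i) n‖ ^ ((2 : ℝ≥0∞).toReal)) ^ (1 / (2 : ℝ≥0∞).toReal)
        ≤ (Cp ^ 2 * ‖x‖ ^ 2) ^ (1 / (2 : ℝ≥0∞).toReal) := by
          apply Real.rpow_le_rpow htnonneg htsum
          rw [h2toReal]; norm_num
      _ = Cp * ‖x‖ := by
          rw [h2toReal]
          rw [show (1 / (2:ℝ)) = (1/2 : ℝ) by norm_num]
          rw [← Real.sqrt_eq_rpow]
          rw [show Cp ^ 2 * ‖x‖ ^ 2 = (Cp * ‖x‖) ^ 2 by ring]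
          exact Real.sqrt_sq (by positivity)
  have hXadd : ∀ x y, Xfun (x + y) = Xfun x + Xfun y := by
    intro x y
    apply lp.ext
    funext n
    rw [lp.coeFn_add]
    simp only [Pi.add_apply, hXfun_apply, map_add]
  have hXsmul : ∀ (c : ℂ) x, Xfun (c • x) = c • Xfun x := by
    intro c x
    apply lp.ext
    funext n
    rw [lp.coeFn_smul]
    simp only [Pi.smul_apply, hXfun_apply, map_smul]
  set Xlin : H →ₗ[ℂ] lp K0 2 :=
    { toFun := Xfun
      map_add' := hXadd
      map_smul' := hXsmul } with hXlindef
  set XL : H →L[ℂ] lp K0 2 := Xlin.mkContinuous Cp hXnorm with hXLdef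
  have hXLapp : ∀ (x : H) (n : ℕ), (XL x : ∀ i, K0 i) n = Gn n x := fun x n => rfl
  have hker : LinearMap.ker (XL : H →ₗ[ℂ] lp K0 2) = ⊥ := by
    rw [LinearMap.ker_eq_bot']
    intro x hx
    rw [ContinuousLinearMap.coe_coe] at hx
    apply hQzero x
    intro k
    have h1 : (XL x : ∀ i, K0 i) k = 0 := by
      rw [hx]
      have := lp.coeFn_zero K0 2
      rw [this]
      rfl
    rw [hXLapp] at h1
    have h2 : An k (Gn k x) = An k 0 := by rw [h1]
    rwa [hAGn, map_zero] at h2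
  have hrange : LinearMap.range (XL : H →ₗ[ℂ] lp K0 2) = ⊤ := by
    rw [LinearMap.range_eq_top]
    intro aa
    set w : ℕ → H := fun n => An n ((aa : ∀ i, K0 i) n) with hwdef
    have hwmem : ∀ n, w n ∈ Hn n := fun n => hAnmem n _
    have hwnorm : ∀ n, ‖w n‖ ≤ CX * ‖(aa : ∀ i, K0 i) n‖ := fun n => hAnnorm n _
    have hpos : 0 < (2 : ℝ≥0∞).toReal := by rw [h2toReal]; norm_num
    have ha2 : Summable (fun n => ‖(aa : ∀ i, K0 i) n‖ ^ (2 : ℕ)) := by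
      have := (lp.memℓp aa).summable hpos
      have he : (fun n => ‖(aa : ∀ i, K0 i) n‖ ^ ((2 : ℝ≥0∞).toReal))
          = fun n => ‖(aa : ∀ i, K0 i) n‖ ^ (2 : ℕ) := by
        funext n
        exact hrpow2 _ (norm_nonneg _)
      rwa [he] at this
    have hwsum : Summable (fun n => ‖w n‖ ^ (2 : ℕ)) := by
      refine Summable.of_nonneg_of_le (fun n => by positivity) (fun n => ?_)
        (ha2.mul_left (CX ^ 2))
      have h1 := hwnorm n
      nlinarith [norm_nonneg (w n), norm_nonneg ((aa : ∀ i, K0 i) n), hCXpos]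
    have hwS : Summable w := by
      rw [summable_iff_vanishing]
      intro e he
      obtain ⟨ε, hε, hball⟩ := Metric.mem_nhds_iff.1 he
      set δ : ℝ := (ε / (2 * KK)) ^ 2 with hδdef
      have hδpos : 0 < δ := by rw [hδdef]; positivity
      obtain ⟨s, hs⟩ := summable_iff_vanishing.1 hwsum (Metric.ball 0 δ)
        (Metric.ball_mem_nhds 0 hδpos)
      refine ⟨s, fun t ht => ?_⟩
      have h1 := hs t ht
      rw [Metric.mem_ball, Real.dist_eq, sub_zero] at h1
      have h2 : ∑ n ∈ t, ‖w n‖ ^ (2:ℕ) < δ := by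
        have := abs_lt.1 h1
        linarith [this.2]
      have h3 : ‖∑ n ∈ t, w n‖ ≤ KK * Real.sqrt (∑ n ∈ t, ‖w n‖ ^ 2) :=
        hupper t w (fun n _ => hwmem n)
      have h4 : Real.sqrt (∑ n ∈ t, ‖w n‖ ^ 2) ≤ Real.sqrt δ := by
        apply Real.sqrt_le_sqrt h2.le
      have h5 : Real.sqrt δ = ε / (2 * KK) := by
        rw [hδdef]
        exact Real.sqrt_sq (by positivity)
      have h6 : ‖∑ n ∈ t, w n‖ < ε := by
        calc ‖∑ n ∈ t, w n‖ ≤ KK * Real.sqrt (∑ n ∈ t, ‖w n‖ ^ 2) := h3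
          _ ≤ KK * (ε / (2 * KK)) := by
              rw [← h5]
              exact mul_le_mul_of_nonneg_left h4 hKKpos.le
          _ = ε / 2 := by field_simp
          _ < ε := by linarith
      apply hball
      rw [Metric.mem_ball, dist_eq_norm, sub_zero]
      exact h6
    set x := ∑' n, w n with hxdef
    have hQkx : ∀ k, Q k x = w k := by
      intro k
      rw [hxdef]
      rw [(Q k).map_tsum hwS]
      rw [tsum_eq_single k]
      · exact hQid k (w k) (hwmem k)
      · intro n hn
        exact hQker k (w n) (hHV k n hn (hwmem n))
    refine ⟨x, ?_⟩
    apply lp.ext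
    funext n
    rw [ContinuousLinearMap.coe_coe, hXLapp]
    have h1 : Gn n x = Gn n (Q n x) := (hGQ n x).symm
    rw [h1, hQkx, hwdef]
    simp only
    rw [hGAn]
  haveI : CompleteSpace (lp K0 2) := by infer_instance
  set Xequiv : H ≃L[ℂ] lp K0 2 := ContinuousLinearEquiv.ofBijective XL hker hrange with hXeq
  refine ⟨Xequiv, fun x => ?_⟩
  have hXeapp : ∀ y : H, Xequiv y = XL y := by
    intro y
    rw [hXeq]
    rfl
  rw [hXeapp, hXeapp]
  apply lp.ext
  funext n
  have h1 : (XL (T x) : ∀ i, K0 i) n = Gn n (T x) := hXLapp (T x) n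
  have h2 : (Uz (XL x) : ∀ i, K0 i) n = U0 n ((XL x : ∀ i, K0 i) n) := hUz (XL x) n
  rw [h1, h2, hXLapp, hGnT]
end
end
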